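/- arXiv:2111.07544 — 3 statements merged into one kernel-verified Lean document; each statement's English description precedes it below -/
import Mathlib

section
/- Let N be a positive integer and let L(N) = max{i : c_i(N) = 1} and R(N) = min{i : c_i(N) = 1} be the largest and smallest positions of a nonzero digit in the canonical representation of N. Then for every n ≥ 1: L(N) = 2n and R(N) = -2n if and only if L_{2n} + 1 ≤ N ≤ L_{2n+1}; and for every n ≥ 0: L(N) = 2n+1 and R(N) = -(2n+2) if and only if L_{2n+1} + 1 ≤ N ≤ L_{2n+2}. -/
noncomputable section

attribute [local instance] Classical.propDecidable

/-- The golden mean φ = (1+√5)/2. -/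
def goldenPhi : ℝ := (1 + Real.sqrt 5) / 2

/-- `c` is a phi-representation of `N`: a finitely supported digit function
`c : ℤ → ℕ` with digits ≤ 1 such that `N = ∑ i, c i * φ ^ i`. -/
def IsPhiRep (N : ℕ) (c : ℤ →₀ ℕ) : Prop :=
  (∀ i, c i ≤ 1) ∧ (c.sum fun i a => (a : ℝ) * goldenPhi ^ i) = N

/-- Bergman representation: no two consecutive digits equal 1. -/
def IsBergman (N : ℕ) (c : ℤ →₀ ℕ) : Prop :=
  IsPhiRep N c ∧ ∀ i : ℤ, c (i + 1) * c i = 0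

/-- Admissible representation: no two consecutive digits equal 1,
except possibly `c 1 = c 0 = 1`. -/
def IsAdmissible (N : ℕ) (c : ℤ →₀ ℕ) : Prop :=
  IsPhiRep N c ∧ ∀ i : ℤ, i ≠ 0 → c (i + 1) * c i = 0

/-- The Bergman representation of `N` (unique when `N ≥ 1`). -/
noncomputable def bergmanRep (N : ℕ) : ℤ →₀ ℕ :=
  if h : ∃ c, IsBergman N c then h.choose else 0

/-- The canonical representation of `N`: the admissible representation with
`c 1 = c 0 = 1` if such exists, and the Bergman representation otherwise. -/
noncomputable def canonicalRep (N : ℕ) : ℤ →₀ ℕ :=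
  if h : ∃ c, IsAdmissible N c ∧ c 1 = 1 ∧ c 0 = 1 then h.choose else bergmanRep N

/-- The Lucas numbers: L 0 = 2, L 1 = 1, L (n+2) = L (n+1) + L n. -/
def lucas : ℕ → ℕ
  | 0 => 2
  | 1 => 1
  | n + 2 => lucas (n + 1) + lucas n

namespace Stmt8Aux
open Finset

local notation "φ" => goldenPhi

def ψ : ℝ := (1 - Real.sqrt 5) / 2

lemma sqrt5_nonneg : (0:ℝ) ≤ Real.sqrt 5 := Real.sqrt_nonneg 5
lemma sqrt5_sq : Real.sqrt 5 * Real.sqrt 5 = 5 := Real.mul_self_sqrt (by norm_num)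
lemma sqrt5_gt : (2:ℝ) < Real.sqrt 5 := by nlinarith [sqrt5_sq, sqrt5_nonneg]
lemma sqrt5_lt : Real.sqrt 5 < 3 := by nlinarith [sqrt5_sq, sqrt5_nonneg]

lemma one_lt_phi : 1 < φ := by unfold goldenPhi; nlinarith [sqrt5_gt]
lemma phi_pos : 0 < φ := lt_trans zero_lt_one one_lt_phi
lemma phi_lt_two : φ < 2 := by unfold goldenPhi; nlinarith [sqrt5_lt]
lemma phi_ne : φ ≠ 0 := ne_of_gt (lt_trans zero_lt_one one_lt_phi)
lemma phi_sq : φ * φ = φ + 1 := by unfold goldenPhi; nlinarith [sqrt5_sq]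
lemma psi_phi : φ * ψ = -1 := by unfold goldenPhi ψ; nlinarith [sqrt5_sq]
lemma psi_sq : ψ * ψ = ψ + 1 := by unfold ψ; nlinarith [sqrt5_sq]
lemma psi_eq : ψ = -φ⁻¹ := by
  have h := psi_phi
  have hp := phi_pos
  field_simp
  nlinarith [h]

lemma phi_zpow_pos (i : ℤ) : 0 < φ ^ i := zpow_pos (lt_trans zero_lt_one one_lt_phi) i

lemma phi_zpow_add_two (i : ℤ) : φ ^ (i + 2) = φ ^ (i + 1) + φ ^ i := by
  have h1 : φ ^ (i + 2) = φ ^ i * (φ * φ) := by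
    rw [zpow_add₀ phi_ne, show ((2:ℤ)) = (2:ℕ) from rfl, zpow_natCast, pow_two]
  have h2 : φ ^ (i + 1) = φ ^ i * φ := by rw [zpow_add_one₀ phi_ne]
  rw [h1, h2, phi_sq]; ring

lemma phi_inv : φ⁻¹ = φ - 1 := by
  have h := phi_sq
  have hp := phi_ne
  field_simp
  nlinarith [h]

lemma phi_mono {a b : ℤ} (h : a ≤ b) : φ ^ a ≤ φ ^ b :=
  zpow_le_zpow_right₀ (le_of_lt one_lt_phi) h

lemma phi_strict {a b : ℤ} (h : a < b) : φ ^ a < φ ^ b :=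
  zpow_lt_zpow_right₀ one_lt_phi h

lemma phi_lt_iff {a b : ℤ} : φ ^ a < φ ^ b ↔ a < b :=
  zpow_lt_zpow_iff_right₀ one_lt_phi

lemma psi_zpow (i : ℤ) : ψ ^ i = (-1) ^ i * φ ^ (-i) := by
  rw [psi_eq, show -φ⁻¹ = (-1) * φ⁻¹ by ring, mul_zpow, inv_zpow, ← zpow_neg]

lemma psi_zpow_even {i : ℤ} (h : Even i) : ψ ^ i = φ ^ (-i) := by
  rw [psi_zpow, h.neg_one_zpow, one_mul]

lemma psi_zpow_odd {i : ℤ} (h : Odd i) : ψ ^ i = -φ ^ (-i) := by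
  rw [psi_zpow, h.neg_one_zpow]; ring

/-- Key geometric bound for no-two-consecutive sums of powers of φ. -/
lemma sum_le (m : ℕ) : ∀ (S : Finset ℤ) (l r : ℤ), (∀ i ∈ S, r ≤ i ∧ i ≤ l) →
    (∀ i : ℤ, i ∈ S → i + 1 ∈ S → False) → r ≤ l + 2 →
    l - r ≤ (m : ℤ) → (∑ i ∈ S, φ ^ i) ≤ φ ^ (l + 1) - φ ^ (r - 1) := by
  induction m with
  | zero =>
    intro S l r hbd hadj hrl hm
    rcases le_or_gt r l with hcase | hcase
    · have hsub : S ⊆ {l} := by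
        intro i hi
        have := hbd i hi
        simp only [Finset.mem_singleton]
        omega
      have h1 : (∑ i ∈ S, φ ^ i) ≤ ∑ i ∈ ({l} : Finset ℤ), φ ^ i :=
        Finset.sum_le_sum_of_subset_of_nonneg hsub
          (fun i _ _ => le_of_lt (phi_zpow_pos i))
      rw [Finset.sum_singleton] at h1
      have h2 : φ ^ (l + 1) = φ ^ l + φ ^ (l - 1) := by
        have := phi_zpow_add_two (l - 1)
        have e1 : l - 1 + 2 = l + 1 := by ring
        have e2 : l - 1 + 1 = l := by ring
        rw [e1, e2] at this; exact this
      have h3 : φ ^ (r - 1) ≤ φ ^ (l - 1) := phi_mono (by omega)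
      linarith
    · have hS : S = ∅ := by
        rw [Finset.eq_empty_iff_forall_notMem]
        intro i hi; have := hbd i hi; omega
      rw [hS, Finset.sum_empty]
      have : φ ^ (r - 1) ≤ φ ^ (l + 1) := phi_mono (by omega)
      linarith
  | succ m ih =>
    intro S l r hbd hadj hrl hm
    by_cases hl : l ∈ S
    · have hl1 : l - 1 ∉ S := by
        intro h
        exact hadj (l - 1) h (by rwa [sub_add_cancel])
      have hbd' : ∀ i ∈ S.erase l, r ≤ i ∧ i ≤ l - 2 := by
        intro i hi
        rcases Finset.mem_erase.mp hi with ⟨hne, hiS⟩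
        have h1 := hbd i hiS
        have : i ≠ l - 1 := fun h => hl1 (h ▸ hiS)
        omega
      have hadj' : ∀ i : ℤ, i ∈ S.erase l → i + 1 ∈ S.erase l → False := by
        intro i hi hi1
        exact hadj i (Finset.mem_erase.mp hi).2 (Finset.mem_erase.mp hi1).2
      have hr_le : r ≤ l := (hbd l hl).1
      have hrec := ih (S.erase l) (l - 2) r hbd' hadj' (by omega) (by omega)
      have hsplit : (∑ i ∈ S, φ ^ i) = φ ^ l + ∑ i ∈ S.erase l, φ ^ i :=
        (Finset.add_sum_erase S _ hl).symm
      have h2 : φ ^ (l + 1) = φ ^ l + φ ^ (l - 1) := by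
        have := phi_zpow_add_two (l - 1)
        have e1 : l - 1 + 2 = l + 1 := by ring
        have e2 : l - 1 + 1 = l := by ring
        rw [e1, e2] at this; exact this
      have e3 : l - 2 + 1 = l - 1 := by ring
      rw [e3] at hrec
      linarith
    · rcases le_or_gt r (l + 1) with hrl' | hrl'
      · have hbd' : ∀ i ∈ S, r ≤ i ∧ i ≤ l - 1 := by
          intro i hi
          have := hbd i hi
          have : i ≠ l := fun h => hl (h ▸ hi)
          omega
        have hrec := ih S (l - 1) r hbd' hadj (by omega) (by omega)
        have e3 : l - 1 + 1 = l := by ring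
        rw [e3] at hrec
        have : φ ^ l ≤ φ ^ (l + 1) := phi_mono (by omega)
        linarith
      · have hS : S = ∅ := by
          rw [Finset.eq_empty_iff_forall_notMem]
          intro i hi
          have := hbd i hi
          have : i ≠ l := fun h => hl (h ▸ hi)
          omega
        rw [hS, Finset.sum_empty]
        have : φ ^ (r - 1) ≤ φ ^ (l + 1) := phi_mono (by omega)
        linarith

lemma sum_le' (S : Finset ℤ) (l r : ℤ) (hbd : ∀ i ∈ S, r ≤ i ∧ i ≤ l)
    (hadj : ∀ i : ℤ, i ∈ S → i + 1 ∈ S → False) (hrl : r ≤ l + 2) :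
    (∑ i ∈ S, φ ^ i) ≤ φ ^ (l + 1) - φ ^ (r - 1) := by
  refine sum_le (l - r).toNat S l r hbd hadj hrl ?_
  exact Int.self_le_toNat _

lemma sum_neg_le (S : Finset ℤ) (l r : ℤ) (hbd : ∀ i ∈ S, r ≤ i ∧ i ≤ l)
    (hadj : ∀ i : ℤ, i ∈ S → i + 1 ∈ S → False) (hrl : r ≤ l + 2) :
    (∑ i ∈ S, φ ^ (-i)) ≤ φ ^ (-r + 1) - φ ^ (-l - 1) := by
  have himg : (∑ i ∈ S, φ ^ (-i)) = ∑ j ∈ S.image (fun i => -i), φ ^ j := by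
    rw [Finset.sum_image (by intro a _ b _ h; simp only at h; omega)]
  rw [himg]
  have := sum_le' (S.image (fun i => -i)) (-r) (-l) ?_ ?_ (by omega)
  · have e1 : -l - 1 = -l - 1 := rfl
    calc (∑ j ∈ S.image (fun i => -i), φ ^ j) ≤ φ ^ (-r + 1) - φ ^ (-l - 1) := this
      _ = φ ^ (-r + 1) - φ ^ (-l - 1) := rfl
  · intro j hj
    rcases Finset.mem_image.mp hj with ⟨i, hiS, rfl⟩
    have := hbd i hiS; omega
  · intro j hj hj1
    rcases Finset.mem_image.mp hj with ⟨i, hiS, hi⟩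
    rcases Finset.mem_image.mp hj1 with ⟨i', hiS', hi'⟩
    have : i' + 1 = i := by omega
    exact hadj i' hiS' (this ▸ hiS)

lemma phi_irr : Irrational φ := by
  have h5 : Irrational (Real.sqrt 5) := (by norm_num : Nat.Prime 5).irrational_sqrt
  have h1 : Irrational (1 + Real.sqrt 5) := by
    have := h5.intCast_add 1; simpa using this
  have h2 : Irrational ((1 + Real.sqrt 5) / 2) := by
    have := h1.div_intCast (m := 2) (by norm_num); simpa using this
  exact h2

lemma pair_zpow (i : ℤ) : ∃ a b : ℤ, φ ^ i = a + b * φ ∧ ψ ^ i = a + b * ψ := by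
  induction i using Int.induction_on with
  | zero => exact ⟨1, 0, by norm_num, by norm_num⟩
  | succ k ih =>
    obtain ⟨a, b, ha, hb⟩ := ih
    refine ⟨b, a + b, ?_, ?_⟩
    · have h1 : φ ^ ((k : ℤ) + 1) = φ ^ (k : ℤ) * φ := zpow_add_one₀ phi_ne _
      rw [h1, ha]
      push_cast
      linear_combination (b : ℝ) * phi_sq
    · have h1 : ψ ^ ((k : ℤ) + 1) = ψ ^ (k : ℤ) * ψ := zpow_add_one₀ (by
        rw [psi_eq]; simp [phi_ne]) _
      rw [h1, hb]
      push_cast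
      linear_combination (b : ℝ) * psi_sq
  | pred k ih =>
    obtain ⟨a, b, ha, hb⟩ := ih
    refine ⟨b - a, a, ?_, ?_⟩
    · have hψne : ψ ≠ 0 := by rw [psi_eq]; simp [phi_ne]
      have h1 : φ ^ (-(k : ℤ) - 1) * φ = φ ^ (-(k : ℤ)) := by
        rw [← zpow_add_one₀ phi_ne]; ring_nf
      apply mul_right_cancel₀ phi_ne
      rw [h1, ha]
      push_cast
      linear_combination (-(a : ℝ)) * phi_sq
    · have hψne : ψ ≠ 0 := by rw [psi_eq]; simp [phi_ne]
      have h1 : ψ ^ (-(k : ℤ) - 1) * ψ = ψ ^ (-(k : ℤ)) := by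
        rw [← zpow_add_one₀ hψne]; ring_nf
      apply mul_right_cancel₀ hψne
      rw [h1, hb]
      push_cast
      linear_combination (-(a : ℝ)) * psi_sq

lemma conj_pair (S : Finset ℤ) : ∃ a b : ℤ,
    (∑ i ∈ S, φ ^ i) = a + b * φ ∧ (∑ i ∈ S, ψ ^ i) = a + b * ψ := by
  classical
  induction S using Finset.induction_on with
  | empty => exact ⟨0, 0, by simp, by simp⟩
  | insert x s hx ih =>
    obtain ⟨a, b, ha, hb⟩ := ih
    obtain ⟨a', b', ha', hb'⟩ := pair_zpow x
    refine ⟨a' + a, b' + b, ?_, ?_⟩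
    · rw [Finset.sum_insert hx, ha, ha']; push_cast; ring
    · rw [Finset.sum_insert hx, hb, hb']; push_cast; ring

lemma conj_eq (S : Finset ℤ) (N : ℕ) (h : (∑ i ∈ S, φ ^ i) = (N : ℝ)) :
    (∑ i ∈ S, ψ ^ i) = (N : ℝ) := by
  obtain ⟨a, b, ha, hb⟩ := conj_pair S
  by_cases hbz : b = 0
  · rw [hbz] at ha hb
    rw [hb]; rw [ha] at h; push_cast at h ⊢; linarith
  · exfalso
    have hirr : Irrational ((b : ℝ) * φ) := phi_irr.intCast_mul hbz
    have : ((b : ℝ) * φ) = (((N : ℤ) - a : ℤ) : ℝ) := by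
      rw [ha] at h; push_cast; linarith
    rw [this] at hirr
    exact (Int.not_irrational _) hirr

lemma psi_ne : ψ ≠ 0 := by rw [psi_eq]; simp [phi_ne]

lemma lucas_real_nat : ∀ k : ℕ, ((lucas k : ℕ) : ℝ) = φ ^ k + ψ ^ k := by
  intro k
  induction k using Nat.twoStepInduction with
  | zero => simp [lucas]; norm_num
  | one =>
    simp only [lucas]
    push_cast
    unfold goldenPhi ψ
    norm_num
  | more k ih1 ih2 =>
    have hrec : lucas (k + 2) = lucas (k + 1) + lucas k := rfl
    rw [hrec]
    push_cast
    rw [ih1, ih2]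
    have h1 : φ ^ (k + 2) = φ ^ (k + 1) + φ ^ k := by
      rw [pow_succ, pow_succ]
      linear_combination (φ ^ k) * phi_sq
    have h2 : ψ ^ (k + 2) = ψ ^ (k + 1) + ψ ^ k := by
      rw [pow_succ, pow_succ]
      linear_combination (ψ ^ k) * psi_sq
    rw [h1, h2]
    ring

lemma lucas_real (k : ℕ) : ((lucas k : ℕ) : ℝ) = φ ^ (k : ℤ) + ψ ^ (k : ℤ) := by
  rw [zpow_natCast, zpow_natCast, lucas_real_nat]

lemma lucas_even_real (n : ℕ) :
    ((lucas (2 * n) : ℕ) : ℝ) = φ ^ (2 * (n : ℤ)) + φ ^ (-(2 * (n : ℤ))) := by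
  rw [lucas_real (2 * n)]
  have he : Even ((2 * n : ℕ) : ℤ) := ⟨n, by push_cast; ring⟩
  rw [psi_zpow_even he]
  have e1 : ((2 * n : ℕ) : ℤ) = 2 * (n : ℤ) := by push_cast; ring
  rw [e1]

lemma lucas_odd_real (n : ℕ) :
    ((lucas (2 * n + 1) : ℕ) : ℝ) = φ ^ (2 * (n : ℤ) + 1) - φ ^ (-(2 * (n : ℤ)) - 1) := by
  rw [lucas_real (2 * n + 1)]
  have ho : Odd ((2 * n + 1 : ℕ) : ℤ) := ⟨n, by push_cast; ring⟩
  rw [psi_zpow_odd ho]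
  have e1 : ((2 * n + 1 : ℕ) : ℤ) = 2 * (n : ℤ) + 1 := by push_cast; ring
  rw [e1]
  ring_nf

lemma lucas_pos : ∀ k : ℕ, 0 < lucas k := by
  intro k
  induction k using Nat.twoStepInduction with
  | zero => norm_num [lucas]
  | one => norm_num [lucas]
  | more k ih1 ih2 => have : lucas (k+2) = lucas (k+1) + lucas k := rfl; omega

lemma sum_odd_geom (n : ℕ) :
    (∑ k ∈ Finset.range n, φ ^ (2 * (k : ℤ) + 1)) = φ ^ (2 * (n : ℤ)) - 1 := by
  induction n with
  | zero => simp
  | succ n ih =>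
    rw [Finset.sum_range_succ, ih]
    have h := phi_zpow_add_two (2 * (n : ℤ))
    have e1 : (2 * ((n:ℤ) + 1)) = 2 * (n:ℤ) + 2 := by ring
    push_cast
    rw [e1, h]
    ring

/-- The finset `{-2n} ∪ {0} ∪ {2k+1 : k < n}`. -/
def lucasSet (n : ℕ) : Finset ℤ :=
  insert (-(2 * (n : ℤ))) (insert 0 ((Finset.range n).image (fun k : ℕ => 2 * (k : ℤ) + 1)))

lemma mem_lucasSet {n : ℕ} {i : ℤ} :
    i ∈ lucasSet n ↔ i = -(2 * (n : ℤ)) ∨ i = 0 ∨ ∃ k : ℕ, k < n ∧ i = 2 * (k : ℤ) + 1 := by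
  unfold lucasSet
  rw [Finset.mem_insert, Finset.mem_insert, Finset.mem_image]
  constructor
  · rintro (h | h | ⟨k, hk, hki⟩)
    · exact Or.inl h
    · exact Or.inr (Or.inl h)
    · exact Or.inr (Or.inr ⟨k, Finset.mem_range.mp hk, hki.symm⟩)
  · rintro (h | h | ⟨k, hk, hki⟩)
    · exact Or.inl h
    · exact Or.inr (Or.inl h)
    · exact Or.inr (Or.inr ⟨k, Finset.mem_range.mpr hk, hki.symm⟩)

lemma sum_image_odd (n : ℕ) :
    (∑ i ∈ (Finset.range n).image (fun k : ℕ => 2 * (k : ℤ) + 1), φ ^ i)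
      = ∑ k ∈ Finset.range n, φ ^ (2 * (k : ℤ) + 1) :=
  Finset.sum_image (by intro a _ b _ h; simp only at h; omega)

lemma lucasSet_sum {n : ℕ} (hn : 1 ≤ n) :
    (∑ i ∈ lucasSet n, φ ^ i) = ((lucas (2 * n) : ℕ) : ℝ) := by
  unfold lucasSet
  rw [Finset.sum_insert, Finset.sum_insert, sum_image_odd]
  · simp only [zpow_zero]
    rw [sum_odd_geom n, lucas_even_real n]
    ring
  · rw [Finset.mem_image]
    rintro ⟨k, _, hk⟩; omega
  · rw [Finset.mem_insert, Finset.mem_image]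
    rintro (h | ⟨k, _, hk⟩) <;> omega

lemma lucas_rep (n : ℕ) (hn : 1 ≤ n) :
    ∃ d : ℤ →₀ ℕ, IsAdmissible (lucas (2 * n)) d ∧ d 1 = 1 ∧ d 0 = 1 := by
  classical
  refine ⟨Finsupp.indicator (lucasSet n) (fun _ _ => 1), ?_, ?_, ?_⟩
  · refine ⟨⟨?_, ?_⟩, ?_⟩
    · intro i
      rw [Finsupp.indicator_apply]
      split <;> simp
    · have hsupp : (Finsupp.indicator (lucasSet n) (fun _ _ => 1)).support ⊆ lucasSet n := by
        intro i hi
        have := Finsupp.support_indicator_subset (lucasSet n) (fun _ _ => 1)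
        exact this hi
      rw [Finsupp.sum_of_support_subset _ hsupp _ (fun i _ => by simp)]
      rw [← lucasSet_sum hn]
      apply Finset.sum_congr rfl
      intro i hi
      rw [Finsupp.indicator_apply]
      split
      · norm_num
      · tauto
    · intro i hi0
      rw [Finsupp.indicator_apply, Finsupp.indicator_apply]
      split
      · split
        · exfalso
          rename_i h1 h2
          rw [mem_lucasSet] at h1 h2
          rcases h2 with h | h | ⟨k, hk, rfl⟩
          · rcases h1 with h' | h' | ⟨k', hk', h'⟩ <;> omega
          · exact hi0 h
          · rcases h1 with h' | h' | ⟨k', hk', h'⟩ <;> omega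
        · simp
      · simp
  · rw [Finsupp.indicator_apply]
    split
    · rfl
    · exfalso
      rename_i h
      exact h (mem_lucasSet.mpr (Or.inr (Or.inr ⟨0, hn, by norm_num⟩)))
  · rw [Finsupp.indicator_apply]
    split
    · rfl
    · exfalso
      rename_i h
      exact h (mem_lucasSet.mpr (Or.inr (Or.inl rfl)))

lemma upper_B (S : Finset ℤ) (l r : ℤ) (hbd : ∀ i ∈ S, r ≤ i ∧ i ≤ l)
    (hadj : ∀ i : ℤ, i ∈ S → i + 1 ∈ S → False) (hrl : r ≤ l) :
    (∑ i ∈ S, φ ^ i) ≤ φ ^ (l + 1) - φ ^ (r - 1) :=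
  sum_le' S l r hbd hadj (by omega)

lemma upper_A (S : Finset ℤ) (l r : ℤ) (hbd : ∀ i ∈ S, r ≤ i ∧ i ≤ l)
    (hadj : ∀ i : ℤ, i ≠ 0 → i ∈ S → i + 1 ∈ S → False)
    (h0 : 0 ∈ S) (h1 : 1 ∈ S) (hr0 : r ≤ 0) :
    (∑ i ∈ S, φ ^ i) ≤ φ ^ (l + 1) + φ ^ (-1 : ℤ) - φ ^ (r - 1) := by
  have hl1 : 1 ≤ l := (hbd 1 h1).2
  have h2no : (2 : ℤ) ∉ S := fun h => hadj 1 (by norm_num) h1 h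
  have hm1no : (-1 : ℤ) ∉ S := fun h => hadj (-1) (by norm_num) h (by norm_num; exact h0)
  -- split into low part (≤ -2), high part (≥ 3) and middle
  have hsplit1 : (∑ i ∈ S, φ ^ i)
      = (∑ i ∈ S.filter (fun i => i ≤ -2), φ ^ i)
        + ∑ i ∈ S.filter (fun i => ¬ i ≤ -2), φ ^ i :=
    (Finset.sum_filter_add_sum_filter_not S _ _).symm
  have hsplit2 : (∑ i ∈ S.filter (fun i => ¬ i ≤ -2), φ ^ i)
      = (∑ i ∈ (S.filter (fun i => ¬ i ≤ -2)).filter (fun i => 3 ≤ i), φ ^ i)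
        + ∑ i ∈ (S.filter (fun i => ¬ i ≤ -2)).filter (fun i => ¬ 3 ≤ i), φ ^ i :=
    (Finset.sum_filter_add_sum_filter_not _ _ _).symm
  have hlow : (∑ i ∈ S.filter (fun i => i ≤ -2), φ ^ i) ≤ φ ^ (-1 : ℤ) - φ ^ (r - 1) := by
    have := sum_le' (S.filter (fun i => i ≤ -2)) (-2) r ?_ ?_ (by omega)
    · have e : (-2:ℤ) + 1 = -1 := by norm_num
      rw [e] at this; exact this
    · intro i hi
      rcases Finset.mem_filter.mp hi with ⟨hiS, hile⟩
      exact ⟨(hbd i hiS).1, hile⟩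
    · intro i hi hi1
      rcases Finset.mem_filter.mp hi with ⟨hiS, hile⟩
      exact hadj i (by omega) hiS (Finset.mem_filter.mp hi1).1
  have hhigh : (∑ i ∈ (S.filter (fun i => ¬ i ≤ -2)).filter (fun i => 3 ≤ i), φ ^ i)
      ≤ φ ^ (l + 1) - φ ^ (2 : ℤ) := by
    have := sum_le' ((S.filter (fun i => ¬ i ≤ -2)).filter (fun i => 3 ≤ i)) l 3 ?_ ?_ (by omega)
    · have e : (3:ℤ) - 1 = 2 := by norm_num
      rw [e] at this; exact this
    · intro i hi
      rcases Finset.mem_filter.mp hi with ⟨hi', h3⟩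
      exact ⟨h3, (hbd i (Finset.mem_filter.mp hi').1).2⟩
    · intro i hi hi1
      rcases Finset.mem_filter.mp hi with ⟨hi', h3⟩
      exact hadj i (by omega) (Finset.mem_filter.mp hi').1
        (Finset.mem_filter.mp (Finset.mem_filter.mp hi1).1).1
  have hmid : (∑ i ∈ (S.filter (fun i => ¬ i ≤ -2)).filter (fun i => ¬ 3 ≤ i), φ ^ i)
      ≤ φ ^ (2 : ℤ) := by
    have hsub : (S.filter (fun i => ¬ i ≤ -2)).filter (fun i => ¬ 3 ≤ i) ⊆ ({0, 1} : Finset ℤ) := by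
      intro i hi
      rcases Finset.mem_filter.mp hi with ⟨hi', h3⟩
      rcases Finset.mem_filter.mp hi' with ⟨hiS, hge⟩
      have : i ≠ 2 := fun h => h2no (h ▸ hiS)
      have : i ≠ -1 := fun h => hm1no (h ▸ hiS)
      simp only [Finset.mem_insert, Finset.mem_singleton]
      omega
    have h1 : (∑ i ∈ (S.filter (fun i => ¬ i ≤ -2)).filter (fun i => ¬ 3 ≤ i), φ ^ i)
        ≤ ∑ i ∈ ({0, 1} : Finset ℤ), φ ^ i :=
      Finset.sum_le_sum_of_subset_of_nonneg hsub (fun i _ _ => le_of_lt (phi_zpow_pos i))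
    have h2 : (∑ i ∈ ({0, 1} : Finset ℤ), φ ^ i) = 1 + φ := by
      rw [Finset.sum_pair (by norm_num)]
      norm_num
    have h3 : φ ^ (2 : ℤ) = 1 + φ := by
      have : φ ^ (2 : ℤ) = φ * φ := by
        rw [show (2:ℤ) = 1 + 1 by norm_num, zpow_add₀ phi_ne, zpow_one]
      rw [this, phi_sq]; ring
    rw [h3]
    rw [h2] at h1
    exact h1
  linarith

lemma conj_facts (S : Finset ℤ) (l r : ℤ) (N : ℕ) (hN2 : 2 ≤ N)
    (hsum : (∑ i ∈ S, φ ^ i) = (N : ℝ))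
    (hbd : ∀ i ∈ S, r ≤ i ∧ i ≤ l) (hrS : r ∈ S)
    (hadj : ∀ i : ℤ, i ≠ 0 → i ∈ S → i + 1 ∈ S → False) :
    r ≤ -2 ∧ Even r ∧ φ ^ (-r - 1) ≤ (N : ℝ) ∧ (N : ℝ) ≤ φ ^ (-r + 1) := by
  classical
  have hN2R : (2 : ℝ) ≤ (N : ℝ) := by exact_mod_cast hN2
  have hconj : (∑ i ∈ S, ψ ^ i) = (N : ℝ) := conj_eq S N hsum
  set P := S.filter (fun i => 0 ≤ i) with hP
  set Q := S.filter (fun i => ¬ 0 ≤ i) with hQ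
  have hPQ : (∑ i ∈ S, ψ ^ i) = (∑ i ∈ P, ψ ^ i) + ∑ i ∈ Q, ψ ^ i :=
    (Finset.sum_filter_add_sum_filter_not S _ _).symm
  -- bounds on the nonnegative-index part
  have hPsplit : (∑ i ∈ P, ψ ^ i)
      = (∑ i ∈ P.filter Even, ψ ^ i) + ∑ i ∈ P.filter (fun i => ¬ Even i), ψ ^ i :=
    (Finset.sum_filter_add_sum_filter_not P _ _).symm
  have hPe_nonneg : (0 : ℝ) ≤ ∑ i ∈ P.filter Even, ψ ^ i := by
    apply Finset.sum_nonneg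
    intro i hi
    rw [psi_zpow_even (Finset.mem_filter.mp hi).2]
    exact le_of_lt (phi_zpow_pos _)
  have hPo_eq : (∑ i ∈ P.filter (fun i => ¬ Even i), ψ ^ i)
      = -∑ i ∈ P.filter (fun i => ¬ Even i), φ ^ (-i) := by
    rw [← Finset.sum_neg_distrib]
    apply Finset.sum_congr rfl
    intro i hi
    rw [psi_zpow_odd (Int.not_even_iff_odd.mp (Finset.mem_filter.mp hi).2)]
  have hPo_bound : (∑ i ∈ P.filter (fun i => ¬ Even i), φ ^ (-i)) ≤ 1 := by
    have := sum_neg_le (P.filter (fun i => ¬ Even i)) (max l 1) 1 ?_ ?_ (by omega)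
    · have h1 : φ ^ (-(1:ℤ) + 1) = 1 := by norm_num
      have h2 : (0:ℝ) < φ ^ (-(max l 1) - 1) := phi_zpow_pos _
      rw [h1] at this
      linarith
    · intro i hi
      rcases Finset.mem_filter.mp hi with ⟨hiP, hodd⟩
      rcases Finset.mem_filter.mp hiP with ⟨hiS, hge⟩
      obtain ⟨k, hk⟩ := Int.not_even_iff_odd.mp hodd
      have := (hbd i hiS).2
      constructor <;> [omega; exact le_max_of_le_left this]
    · intro i hi hi1
      rcases Finset.mem_filter.mp hi with ⟨_, hodd⟩
      rcases Finset.mem_filter.mp hi1 with ⟨_, hodd1⟩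
      obtain ⟨k, hk⟩ := Int.not_even_iff_odd.mp hodd
      obtain ⟨k', hk'⟩ := Int.not_even_iff_odd.mp hodd1
      omega
  have hPe_bound : (∑ i ∈ P.filter Even, ψ ^ i) ≤ φ := by
    have heq : (∑ i ∈ P.filter Even, ψ ^ i) = ∑ i ∈ P.filter Even, φ ^ (-i) := by
      apply Finset.sum_congr rfl
      intro i hi
      exact psi_zpow_even (Finset.mem_filter.mp hi).2
    rw [heq]
    have := sum_neg_le (P.filter Even) (max l 0) 0 ?_ ?_ (by omega)
    · have h2 : (0:ℝ) < φ ^ (-(max l 0) - 1) := phi_zpow_pos _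
      have h1 : φ ^ (-(0:ℤ) + 1) = φ := by norm_num
      rw [h1] at this
      linarith
    · intro i hi
      rcases Finset.mem_filter.mp hi with ⟨hiP, _⟩
      rcases Finset.mem_filter.mp hiP with ⟨hiS, hge⟩
      exact ⟨hge, le_max_of_le_left (hbd i hiS).2⟩
    · intro i hi hi1
      rcases Finset.mem_filter.mp hi with ⟨_, he⟩
      rcases Finset.mem_filter.mp hi1 with ⟨_, he1⟩
      obtain ⟨k, hk⟩ := he
      obtain ⟨k', hk'⟩ := he1
      omega
  have hPo_nonneg : (0:ℝ) ≤ ∑ i ∈ P.filter (fun i => ¬ Even i), φ ^ (-i) :=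
    Finset.sum_nonneg (fun i _ => le_of_lt (phi_zpow_pos _))
  have hA_le : (∑ i ∈ P, ψ ^ i) ≤ φ := by
    rw [hPsplit, hPo_eq]
    linarith
  have hA_ge : (-1 : ℝ) ≤ ∑ i ∈ P, ψ ^ i := by
    rw [hPsplit, hPo_eq]
    linarith
  -- r must be negative
  have hr_neg : r ≤ -1 := by
    by_contra h
    push_neg at h
    have hQempty : Q = ∅ := by
      rw [Finset.eq_empty_iff_forall_notMem]
      intro i hi
      rcases Finset.mem_filter.mp hi with ⟨hiS, hneg⟩
      have := (hbd i hiS).1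
      omega
    rw [hPQ, hQempty, Finset.sum_empty, add_zero] at hconj
    have := phi_lt_two
    linarith
  have hrQ : r ∈ Q := Finset.mem_filter.mpr ⟨hrS, by omega⟩
  have hr1no : r + 1 ∉ S := fun h => hadj r (by omega) hrS h
  have hQsplit : (∑ i ∈ Q, ψ ^ i) = ψ ^ r + ∑ i ∈ Q.erase r, ψ ^ i :=
    (Finset.add_sum_erase Q _ hrQ).symm
  have hQ'bd : ∀ i ∈ Q.erase r, r + 2 ≤ i ∧ i ≤ -1 := by
    intro i hi
    rcases Finset.mem_erase.mp hi with ⟨hne, hiQ⟩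
    rcases Finset.mem_filter.mp hiQ with ⟨hiS, hneg⟩
    have h1 := (hbd i hiS).1
    have h2 : i ≠ r + 1 := fun h => hr1no (h ▸ hiS)
    omega
  -- r = -1 impossible
  have hr_le2 : r ≤ -2 := by
    rcases lt_or_ge r (-1) with h | h
    · omega
    · exfalso
      have hrm1 : r = -1 := by omega
      have hQ'empty : Q.erase r = ∅ := by
        rw [Finset.eq_empty_iff_forall_notMem]
        intro i hi
        have := hQ'bd i hi
        omega
      have hpsir : ψ ^ r = -φ := by
        rw [psi_zpow_odd (by rw [hrm1]; exact ⟨-1, by norm_num⟩)]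
        rw [hrm1]
        norm_num
      rw [hPQ, hQsplit, hQ'empty, Finset.sum_empty, add_zero, hpsir] at hconj
      linarith
  -- the even filtered sums on the negative side
  have hQ'o_eq : (∑ i ∈ (Q.erase r).filter (fun i => ¬ Even i), ψ ^ i)
      = -∑ i ∈ (Q.erase r).filter (fun i => ¬ Even i), φ ^ (-i) := by
    rw [← Finset.sum_neg_distrib]
    apply Finset.sum_congr rfl
    intro i hi
    rw [psi_zpow_odd (Int.not_even_iff_odd.mp (Finset.mem_filter.mp hi).2)]
  have hQ'e_nonneg : (0:ℝ) ≤ ∑ i ∈ (Q.erase r).filter Even, ψ ^ i := by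
    apply Finset.sum_nonneg
    intro i hi
    rw [psi_zpow_even (Finset.mem_filter.mp hi).2]
    exact le_of_lt (phi_zpow_pos _)
  have hQ'split : (∑ i ∈ Q.erase r, ψ ^ i)
      = (∑ i ∈ (Q.erase r).filter Even, ψ ^ i)
        + ∑ i ∈ (Q.erase r).filter (fun i => ¬ Even i), ψ ^ i :=
    (Finset.sum_filter_add_sum_filter_not _ _ _).symm
  -- r must be even
  have hr_even : Even r := by
    by_contra hodd
    have hro : Odd r := Int.not_even_iff_odd.mp hodd
    have hpsir : ψ ^ r = -φ ^ (-r) := psi_zpow_odd hro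
    have hQ'e_bound : (∑ i ∈ (Q.erase r).filter Even, ψ ^ i) ≤ φ ^ (-r - 1) - φ := by
      have heq : (∑ i ∈ (Q.erase r).filter Even, ψ ^ i)
          = ∑ i ∈ (Q.erase r).filter Even, φ ^ (-i) := by
        apply Finset.sum_congr rfl
        intro i hi
        exact psi_zpow_even (Finset.mem_filter.mp hi).2
      rw [heq]
      have := sum_neg_le ((Q.erase r).filter Even) (-2) (r + 2) ?_ ?_ (by omega)
      · have e1 : -(r + 2) + 1 = -r - 1 := by ring
        have e2 : -(-2 : ℤ) - 1 = 1 := by ring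
        rw [e1, e2, zpow_one] at this
        exact this
      · intro i hi
        rcases Finset.mem_filter.mp hi with ⟨hi', he⟩
        have := hQ'bd i hi'
        obtain ⟨k, hk⟩ := he
        omega
      · intro i hi hi1
        obtain ⟨k, hk⟩ := (Finset.mem_filter.mp hi).2
        obtain ⟨k', hk'⟩ := (Finset.mem_filter.mp hi1).2
        omega
    have hQ'o_nonpos : (∑ i ∈ (Q.erase r).filter (fun i => ¬ Even i), ψ ^ i) ≤ 0 := by
      rw [hQ'o_eq]
      have : (0:ℝ) ≤ ∑ i ∈ (Q.erase r).filter (fun i => ¬ Even i), φ ^ (-i) :=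
        Finset.sum_nonneg (fun i _ => le_of_lt (phi_zpow_pos _))
      linarith
    have hlt : φ ^ (-r - 1) < φ ^ (-r) := phi_strict (by omega)
    rw [hPQ, hQsplit, hQ'split, hpsir] at hconj
    linarith
  refine ⟨hr_le2, hr_even, ?_, ?_⟩
  -- lower bound : φ^(-r-1) ≤ N
  · have hpsir : ψ ^ r = φ ^ (-r) := psi_zpow_even hr_even
    have hQ'o_bound : (∑ i ∈ (Q.erase r).filter (fun i => ¬ Even i), φ ^ (-i))
        ≤ φ ^ (-r - 2) - 1 := by
      have := sum_neg_le ((Q.erase r).filter (fun i => ¬ Even i)) (-1) (r + 3) ?_ ?_ (by omega)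
      · have e1 : -(r + 3) + 1 = -r - 2 := by ring
        have e2 : -(-1 : ℤ) - 1 = 0 := by ring
        rw [e1, e2, zpow_zero] at this
        exact this
      · intro i hi
        rcases Finset.mem_filter.mp hi with ⟨hi', hodd⟩
        have := hQ'bd i hi'
        obtain ⟨k, hk⟩ := Int.not_even_iff_odd.mp hodd
        obtain ⟨k', hk'⟩ := hr_even
        omega
      · intro i hi hi1
        obtain ⟨k, hk⟩ := Int.not_even_iff_odd.mp (Finset.mem_filter.mp hi).2
        obtain ⟨k', hk'⟩ := Int.not_even_iff_odd.mp (Finset.mem_filter.mp hi1).2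
        omega
    have hid : φ ^ (-r) = φ ^ (-r - 1) + φ ^ (-r - 2) := by
      have := phi_zpow_add_two (-r - 2)
      have e1 : -r - 2 + 2 = -r := by ring
      have e2 : -r - 2 + 1 = -r - 1 := by ring
      rw [e1, e2] at this
      exact this
    rw [hPQ, hQsplit, hQ'split, hpsir, hQ'o_eq] at hconj
    linarith
  -- upper bound : N ≤ φ^(-r+1)
  · have hQe_bound : (∑ i ∈ Q.filter Even, ψ ^ i) ≤ φ ^ (-r + 1) - φ := by
      have heq : (∑ i ∈ Q.filter Even, ψ ^ i) = ∑ i ∈ Q.filter Even, φ ^ (-i) := by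
        apply Finset.sum_congr rfl
        intro i hi
        exact psi_zpow_even (Finset.mem_filter.mp hi).2
      rw [heq]
      have := sum_neg_le (Q.filter Even) (-2) r ?_ ?_ (by omega)
      · have e2 : -(-2 : ℤ) - 1 = 1 := by ring
        rw [e2, zpow_one] at this
        exact this
      · intro i hi
        rcases Finset.mem_filter.mp hi with ⟨hiQ, he⟩
        rcases Finset.mem_filter.mp hiQ with ⟨hiS, hneg⟩
        obtain ⟨k, hk⟩ := he
        have := (hbd i hiS).1
        omega
      · intro i hi hi1
        obtain ⟨k, hk⟩ := (Finset.mem_filter.mp hi).2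
        obtain ⟨k', hk'⟩ := (Finset.mem_filter.mp hi1).2
        omega
    have hQo_nonpos : (∑ i ∈ Q.filter (fun i => ¬ Even i), ψ ^ i) ≤ 0 := by
      have heq : (∑ i ∈ Q.filter (fun i => ¬ Even i), ψ ^ i)
          = -∑ i ∈ Q.filter (fun i => ¬ Even i), φ ^ (-i) := by
        rw [← Finset.sum_neg_distrib]
        apply Finset.sum_congr rfl
        intro i hi
        rw [psi_zpow_odd (Int.not_even_iff_odd.mp (Finset.mem_filter.mp hi).2)]
      rw [heq]
      have : (0:ℝ) ≤ ∑ i ∈ Q.filter (fun i => ¬ Even i), φ ^ (-i) :=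
        Finset.sum_nonneg (fun i _ => le_of_lt (phi_zpow_pos _))
      linarith
    have hQsplit2 : (∑ i ∈ Q, ψ ^ i)
        = (∑ i ∈ Q.filter Even, ψ ^ i) + ∑ i ∈ Q.filter (fun i => ¬ Even i), ψ ^ i :=
      (Finset.sum_filter_add_sum_filter_not Q _ _).symm
    rw [hPQ, hQsplit2] at hconj
    linarith

lemma sum_ge_single (S : Finset ℤ) {i : ℤ} (h : i ∈ S) : φ ^ i ≤ ∑ j ∈ S, φ ^ j :=
  Finset.single_le_sum (fun j _ => le_of_lt (phi_zpow_pos j)) h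

lemma sum_ge_pair (S : Finset ℤ) {a b : ℤ} (ha : a ∈ S) (hb : b ∈ S) (hne : a ≠ b) :
    φ ^ a + φ ^ b ≤ ∑ j ∈ S, φ ^ j := by
  have hsub : ({a, b} : Finset ℤ) ⊆ S := by
    intro x hx
    rcases Finset.mem_insert.mp hx with rfl | hx
    · exact ha
    · rw [Finset.mem_singleton] at hx; exact hx ▸ hb
  have := Finset.sum_le_sum_of_subset_of_nonneg hsub
    (fun i _ _ => le_of_lt (phi_zpow_pos i))
  rwa [Finset.sum_pair hne] at this

lemma sum_ge_triple (S : Finset ℤ) {a b c : ℤ} (ha : a ∈ S) (hb : b ∈ S) (hc : c ∈ S)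
    (hab : a ≠ b) (hac : a ≠ c) (hbc : b ≠ c) :
    φ ^ a + φ ^ b + φ ^ c ≤ ∑ j ∈ S, φ ^ j := by
  have hsub : ({a, b, c} : Finset ℤ) ⊆ S := by
    intro x hx
    rcases Finset.mem_insert.mp hx with rfl | hx
    · exact ha
    · rcases Finset.mem_insert.mp hx with rfl | hx
      · exact hb
      · rw [Finset.mem_singleton] at hx; exact hx ▸ hc
  have := Finset.sum_le_sum_of_subset_of_nonneg hsub
    (fun i _ _ => le_of_lt (phi_zpow_pos i))
  rw [Finset.sum_insert (by simp [hab, hac]), Finset.sum_pair hbc] at this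
  linarith

lemma phi_inv_lt_one : φ ^ (-1 : ℤ) < 1 := by
  have := phi_strict (show (-1:ℤ) < 0 by norm_num)
  rwa [zpow_zero] at this

/-- Forward direction, even case. -/
lemma forward_even (S : Finset ℤ) (N : ℕ) (n : ℕ) (hn : 1 ≤ n)
    (hsum : (∑ i ∈ S, φ ^ i) = (N : ℝ))
    (hbd : ∀ i ∈ S, -(2 * (n : ℤ)) ≤ i ∧ i ≤ 2 * (n : ℤ))
    (hSl : (2 * (n : ℤ)) ∈ S) (hSr : (-(2 * (n : ℤ))) ∈ S)
    (hadj : ∀ i : ℤ, i ≠ 0 → i ∈ S → i + 1 ∈ S → False)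
    (hcase : (0 ∈ S ∧ 1 ∈ S) ∨
      ((∀ i : ℤ, i ∈ S → i + 1 ∈ S → False) ∧
        ¬ ∃ d : ℤ →₀ ℕ, IsAdmissible N d ∧ d 1 = 1 ∧ d 0 = 1)) :
    lucas (2 * n) + 1 ≤ N ∧ N ≤ lucas (2 * n + 1) := by
  have hle := lucas_even_real n
  have hlo := lucas_odd_real n
  constructor
  · rcases hcase with ⟨h0, h1⟩ | ⟨hfull, hne⟩
    · have htri := sum_ge_triple S hSl h0 hSr (by omega) (by omega) (by omega)
      rw [hsum] at htri
      rw [zpow_zero] at htri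
      have : ((lucas (2 * n) : ℕ) : ℝ) + 1 ≤ (N : ℝ) := by rw [hle]; linarith
      exact_mod_cast this
    · have hpair := sum_ge_pair S hSl hSr (by omega)
      rw [hsum] at hpair
      have hcast : ((lucas (2 * n) : ℕ) : ℝ) ≤ (N : ℝ) := by rw [hle]; linarith
      have hleN : lucas (2 * n) ≤ N := by exact_mod_cast hcast
      rcases eq_or_lt_of_le hleN with heq | hlt
      · exfalso
        apply hne
        rw [← heq]
        exact lucas_rep n hn
      · omega
  · rcases hcase with ⟨h0, h1⟩ | ⟨hfull, hne⟩
    · have hup := upper_A S (2 * (n : ℤ)) (-(2 * (n : ℤ))) hbd hadj h0 h1 (by omega)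
      rw [hsum] at hup
      have : (N : ℝ) < ((lucas (2 * n + 1) : ℕ) : ℝ) + 1 := by
        rw [hlo]
        have h2 := phi_inv_lt_one
        linarith
      have : N < lucas (2 * n + 1) + 1 := by exact_mod_cast this
      omega
    · have hup := upper_B S (2 * (n : ℤ)) (-(2 * (n : ℤ))) hbd hfull (by omega)
      rw [hsum] at hup
      have : (N : ℝ) ≤ ((lucas (2 * n + 1) : ℕ) : ℝ) := by rw [hlo]; linarith
      exact_mod_cast this

/-- Casting helper for `lucas (2n+2)`. -/
lemma lucas_even_real' (n : ℕ) :
    ((lucas (2 * n + 2) : ℕ) : ℝ) = φ ^ (2 * (n : ℤ) + 2) + φ ^ (-(2 * (n : ℤ)) - 2) := by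
  have h := lucas_even_real (n + 1)
  rw [show 2 * (n + 1) = 2 * n + 2 from by ring] at h
  rw [h]
  rw [show 2 * ((n + 1 : ℕ) : ℤ) = 2 * (n : ℤ) + 2 from by push_cast; ring]
  rw [show -(2 * (n : ℤ) + 2) = -(2 * (n : ℤ)) - 2 from by ring]

/-- Forward direction, odd case. -/
lemma forward_odd (S : Finset ℤ) (N : ℕ) (n : ℕ)
    (hsum : (∑ i ∈ S, φ ^ i) = (N : ℝ))
    (hbd : ∀ i ∈ S, -(2 * (n : ℤ)) - 2 ≤ i ∧ i ≤ 2 * (n : ℤ) + 1)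
    (hSl : (2 * (n : ℤ) + 1) ∈ S) (hSr : (-(2 * (n : ℤ)) - 2) ∈ S)
    (hadj : ∀ i : ℤ, i ≠ 0 → i ∈ S → i + 1 ∈ S → False)
    (hcase : (0 ∈ S ∧ 1 ∈ S) ∨ (∀ i : ℤ, i ∈ S → i + 1 ∈ S → False)) :
    lucas (2 * n + 1) + 1 ≤ N ∧ N ≤ lucas (2 * n + 2) := by
  have hlo := lucas_odd_real n
  have hle := lucas_even_real' n
  constructor
  · -- lower bound: N ≥ φ^(2n+1) + φ^(-2n-2) > lucas (2n+1)
    have hpair := sum_ge_pair S hSl hSr (by omega)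
    rw [hsum] at hpair
    have hstrict : ((lucas (2 * n + 1) : ℕ) : ℝ) < (N : ℝ) := by
      rw [hlo]
      have h1 : (0:ℝ) < φ ^ (-(2 * (n : ℤ)) - 2) := phi_zpow_pos _
      have h2 : (0:ℝ) < φ ^ (-(2 * (n : ℤ)) - 1) := phi_zpow_pos _
      linarith
    have : lucas (2 * n + 1) < N := by exact_mod_cast hstrict
    omega
  · rcases hcase with ⟨h0, h1⟩ | hfull
    · have hup := upper_A S (2 * (n : ℤ) + 1) (-(2 * (n : ℤ)) - 2) hbd hadj h0 h1 (by omega)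
      rw [hsum] at hup
      have : (N : ℝ) < ((lucas (2 * n + 2) : ℕ) : ℝ) + 1 := by
        rw [hle]
        have h2 := phi_inv_lt_one
        have h3 : (0:ℝ) < φ ^ (-(2 * (n : ℤ)) - 2 - 1) := phi_zpow_pos _
        have h4 : (0:ℝ) < φ ^ (-(2 * (n : ℤ)) - 2) := phi_zpow_pos _
        have e1 : 2 * (n : ℤ) + 1 + 1 = 2 * (n : ℤ) + 2 := by ring
        rw [e1] at hup
        linarith
      have : N < lucas (2 * n + 2) + 1 := by exact_mod_cast this
      omega
    · have hup := upper_B S (2 * (n : ℤ) + 1) (-(2 * (n : ℤ)) - 2) hbd hfull (by omega)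
      rw [hsum] at hup
      have : (N : ℝ) < ((lucas (2 * n + 2) : ℕ) : ℝ) := by
        rw [hle]
        have h3 : (0:ℝ) < φ ^ (-(2 * (n : ℤ)) - 2 - 1) := phi_zpow_pos _
        have h4 : (0:ℝ) < φ ^ (-(2 * (n : ℤ)) - 2) := phi_zpow_pos _
        have e1 : 2 * (n : ℤ) + 1 + 1 = 2 * (n : ℤ) + 2 := by ring
        rw [e1] at hup
        linarith
      have : N < lucas (2 * n + 2) := by exact_mod_cast this
      omega

/-- Backward direction, even case. -/
lemma backward_even (S : Finset ℤ) (N : ℕ) (n : ℕ) (hn : 1 ≤ n) (l r : ℤ)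
    (hsum : (∑ i ∈ S, φ ^ i) = (N : ℝ))
    (hSl : l ∈ S) (hSr : r ∈ S)
    (hbd : ∀ i ∈ S, r ≤ i ∧ i ≤ l)
    (hadj : ∀ i : ℤ, i ≠ 0 → i ∈ S → i + 1 ∈ S → False)
    (hcase : (0 ∈ S ∧ 1 ∈ S) ∨ (∀ i : ℤ, i ∈ S → i + 1 ∈ S → False))
    (hlo : lucas (2 * n) + 1 ≤ N) (hhi : N ≤ lucas (2 * n + 1)) :
    l = 2 * (n : ℤ) ∧ r = -(2 * (n : ℤ)) := by
  have hN2 : 2 ≤ N := by have := lucas_pos (2 * n); omega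
  obtain ⟨hr2, hreven, hclo, hchi⟩ := conj_facts S l r N hN2 hsum hbd hSr hadj
  have hhiR : (N : ℝ) ≤ φ ^ (2 * (n : ℤ) + 1) - φ ^ (-(2 * (n : ℤ)) - 1) := by
    rw [← lucas_odd_real n]
    exact_mod_cast hhi
  have hloR : φ ^ (2 * (n : ℤ)) + φ ^ (-(2 * (n : ℤ))) + 1 ≤ (N : ℝ) := by
    have h := lucas_even_real n
    have : ((lucas (2 * n) : ℕ) : ℝ) + 1 ≤ (N : ℝ) := by exact_mod_cast hlo
    linarith
  obtain ⟨k, hk⟩ := hreven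
  -- pin down r
  have hru : -r ≤ 2 * (n : ℤ) := by
    have h1 : φ ^ (-r - 1) < φ ^ (2 * (n : ℤ) + 1) := by
      have hp : (0:ℝ) < φ ^ (-(2 * (n : ℤ)) - 1) := phi_zpow_pos _
      linarith
    have := phi_lt_iff.mp h1
    omega
  have hrl : 2 * (n : ℤ) ≤ -r := by
    have h1 : φ ^ (2 * (n : ℤ)) < φ ^ (-r + 1) := by
      have hp : (0:ℝ) < φ ^ (-(2 * (n : ℤ))) := phi_zpow_pos _
      linarith
    have := phi_lt_iff.mp h1
    omega
  have hrval : r = -(2 * (n : ℤ)) := by omega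
  -- pin down l
  have hlu : l ≤ 2 * (n : ℤ) := by
    have h0 : φ ^ l ≤ (N : ℝ) := by rw [← hsum]; exact sum_ge_single S hSl
    have h1 : φ ^ l < φ ^ (2 * (n : ℤ) + 1) := by
      have hp : (0:ℝ) < φ ^ (-(2 * (n : ℤ)) - 1) := phi_zpow_pos _
      linarith
    have := phi_lt_iff.mp h1
    omega
  have hll : 2 * (n : ℤ) ≤ l := by
    by_contra h
    push_neg at h
    have hmono : φ ^ (l + 1) ≤ φ ^ (2 * (n : ℤ)) := phi_mono (by omega)
    have hp1 : (0:ℝ) < φ ^ (r - 1) := phi_zpow_pos _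
    have hp2 : (0:ℝ) < φ ^ (-(2 * (n : ℤ))) := phi_zpow_pos _
    rcases hcase with ⟨h0, h1⟩ | hfull
    · have hup := upper_A S l r hbd hadj h0 h1 (by omega)
      rw [hsum] at hup
      have hinv := phi_inv_lt_one
      linarith
    · have hup := upper_B S l r hbd hfull (by
        have := (hbd l hSl).1; exact this)
      rw [hsum] at hup
      linarith
  exact ⟨by omega, hrval⟩

/-- Backward direction, odd case. -/
lemma backward_odd (S : Finset ℤ) (N : ℕ) (n : ℕ) (l r : ℤ)
    (hsum : (∑ i ∈ S, φ ^ i) = (N : ℝ))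
    (hSl : l ∈ S) (hSr : r ∈ S)
    (hbd : ∀ i ∈ S, r ≤ i ∧ i ≤ l)
    (hadj : ∀ i : ℤ, i ≠ 0 → i ∈ S → i + 1 ∈ S → False)
    (hcase : (0 ∈ S ∧ 1 ∈ S) ∨
      ((∀ i : ℤ, i ∈ S → i + 1 ∈ S → False) ∧
        ¬ ∃ d : ℤ →₀ ℕ, IsAdmissible N d ∧ d 1 = 1 ∧ d 0 = 1))
    (hlmax : ∀ i ∈ S, i ≤ l) (hrmin : ∀ i ∈ S, r ≤ i)
    (hlo : lucas (2 * n + 1) + 1 ≤ N) (hhi : N ≤ lucas (2 * n + 2)) :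
    l = 2 * (n : ℤ) + 1 ∧ r = -(2 * (n : ℤ)) - 2 := by
  have hN2 : 2 ≤ N := by have := lucas_pos (2 * n + 1); omega
  obtain ⟨hr2, hreven, hclo, hchi⟩ := conj_facts S l r N hN2 hsum hbd hSr hadj
  have hhiR : (N : ℝ) ≤ φ ^ (2 * (n : ℤ) + 2) + φ ^ (-(2 * (n : ℤ)) - 2) := by
    rw [← lucas_even_real' n]
    exact_mod_cast hhi
  have hloR : φ ^ (2 * (n : ℤ) + 1) - φ ^ (-(2 * (n : ℤ)) - 1) + 1 ≤ (N : ℝ) := by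
    have h := lucas_odd_real n
    have : ((lucas (2 * n + 1) : ℕ) : ℝ) + 1 ≤ (N : ℝ) := by exact_mod_cast hlo
    linarith
  have hsmall : φ ^ (-(2 * (n : ℤ)) - 1) < 1 := by
    have := phi_strict (show -(2 * (n : ℤ)) - 1 < 0 by omega)
    rwa [zpow_zero] at this
  have hNgt : φ ^ (2 * (n : ℤ) + 1) < (N : ℝ) := by linarith
  have hbig : φ ^ (2 * (n : ℤ) + 2) + φ ^ (-(2 * (n : ℤ)) - 2) < φ ^ (2 * (n : ℤ) + 3) := by
    have h1 := phi_zpow_add_two (2 * (n : ℤ) + 1)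
    have e1 : 2 * (n : ℤ) + 1 + 2 = 2 * (n : ℤ) + 3 := by ring
    have e2 : 2 * (n : ℤ) + 1 + 1 = 2 * (n : ℤ) + 2 := by ring
    rw [e1, e2] at h1
    have h2 : φ ^ (-(2 * (n : ℤ)) - 2) < φ ^ (2 * (n : ℤ) + 1) := phi_strict (by omega)
    linarith
  obtain ⟨k, hk⟩ := hreven
  -- pin down r
  have hru : -r ≤ 2 * (n : ℤ) + 2 := by
    have h1 : φ ^ (-r - 1) < φ ^ (2 * (n : ℤ) + 3) := by linarith
    have := phi_lt_iff.mp h1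
    omega
  have hrl : 2 * (n : ℤ) + 2 ≤ -r := by
    have h1 : φ ^ (2 * (n : ℤ) + 1) < φ ^ (-r + 1) := by linarith
    have := phi_lt_iff.mp h1
    omega
  have hrval : r = -(2 * (n : ℤ)) - 2 := by omega
  -- pin down l
  have hlu : l ≤ 2 * (n : ℤ) + 2 := by
    have h0 : φ ^ l ≤ (N : ℝ) := by rw [← hsum]; exact sum_ge_single S hSl
    have h1 : φ ^ l < φ ^ (2 * (n : ℤ) + 3) := by linarith
    have := phi_lt_iff.mp h1
    omega
  have hlne : l ≠ 2 * (n : ℤ) + 2 := by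
    intro hleq
    -- then (l, r) has the even shape for n+1, contradicting N ≤ lucas (2n+2)
    have hbd' : ∀ i ∈ S, -(2 * ((n + 1 : ℕ) : ℤ)) ≤ i ∧ i ≤ 2 * ((n + 1 : ℕ) : ℤ) := by
      intro i hi
      have := hbd i hi
      push_cast
      omega
    have hSl' : (2 * ((n + 1 : ℕ) : ℤ)) ∈ S := by
      have e : (2 * ((n + 1 : ℕ) : ℤ)) = l := by push_cast; omega
      rwa [e]
    have hSr' : (-(2 * ((n + 1 : ℕ) : ℤ))) ∈ S := by
      have e : (-(2 * ((n + 1 : ℕ) : ℤ))) = r := by push_cast; omega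
      rwa [e]
    have hfe := forward_even S N (n + 1) (by omega) hsum hbd' hSl' hSr' hadj hcase
    rw [show 2 * (n + 1) = 2 * n + 2 from by ring] at hfe
    omega
  have hll : 2 * (n : ℤ) + 1 ≤ l := by
    by_contra h
    push_neg at h
    have hmono : φ ^ (l + 1) ≤ φ ^ (2 * (n : ℤ) + 1) := phi_mono (by omega)
    have hp1 : (0:ℝ) < φ ^ (r - 1) := phi_zpow_pos _
    rcases hcase with ⟨h0, h1⟩ | ⟨hfull, _⟩
    · -- N ≤ φ^(l+1) + φ⁻¹ - φ^(r-1), contradiction using exact identities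
      rcases Nat.eq_zero_or_pos n with hn0 | hn1
      · have hl1 : 1 ≤ l := (hbd 1 h1).2
        subst hn0
        simp at h
        omega
      · have hup := upper_A S l r hbd hadj h0 h1 (by omega)
        rw [hsum] at hup
        rw [hrval] at hup
        rw [show -(2 * (n : ℤ)) - 2 - 1 = -(2 * (n : ℤ)) - 3 from by ring] at hup
        have hid1 : (1:ℝ) = φ ^ (-1 : ℤ) + φ ^ (-2 : ℤ) := by
          have h := phi_zpow_add_two (-2)
          have e1 : (-2 : ℤ) + 2 = 0 := by ring
          have e2 : (-2 : ℤ) + 1 = -1 := by ring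
          rw [e1, e2, zpow_zero] at h
          exact h
        have hid2 : φ ^ (-(2 * (n : ℤ)) - 1)
            = φ ^ (-(2 * (n : ℤ)) - 2) + φ ^ (-(2 * (n : ℤ)) - 3) := by
          have := phi_zpow_add_two (-(2 * (n : ℤ)) - 3)
          have e1 : -(2 * (n : ℤ)) - 3 + 2 = -(2 * (n : ℤ)) - 1 := by ring
          have e2 : -(2 * (n : ℤ)) - 3 + 1 = -(2 * (n : ℤ)) - 2 := by ring
          rw [e1, e2] at this
          exact this
        have hmono2 : φ ^ (-(2 * (n : ℤ)) - 2) < φ ^ (-2 : ℤ) :=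
          phi_strict (by omega)
        linarith
    · have hup := upper_B S l r hbd hfull ((hbd l hSl).1)
      rw [hsum] at hup
      linarith
  exact ⟨by omega, hrval⟩

end Stmt8Aux

open Stmt8Aux

theorem stmt8 (N : ℕ) (hN : 0 < N) (l r : ℤ)
    (hl : IsGreatest {i : ℤ | canonicalRep N i = 1} l)
    (hr : IsLeast {i : ℤ | canonicalRep N i = 1} r) :
    (∀ n : ℕ, 1 ≤ n →
      ((l = (2 * n : ℤ) ∧ r = -(2 * n : ℤ)) ↔
        (lucas (2 * n) + 1 ≤ N ∧ N ≤ lucas (2 * n + 1)))) ∧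
    (∀ n : ℕ,
      ((l = (2 * n + 1 : ℤ) ∧ r = -(2 * n + 2 : ℤ)) ↔
        (lucas (2 * n + 1) + 1 ≤ N ∧ N ≤ lucas (2 * n + 2)))) := by
  classical
  have hl1 : canonicalRep N l = 1 := hl.1
  have hr1 : canonicalRep N r = 1 := hr.1
  have hlmax' : ∀ i : ℤ, canonicalRep N i = 1 → i ≤ l := fun i hi => hl.2 hi
  have hrmin' : ∀ i : ℤ, canonicalRep N i = 1 → r ≤ i := fun i hi => hr.2 hi
  have key : IsAdmissible N (canonicalRep N) ∧
      ((canonicalRep N 1 = 1 ∧ canonicalRep N 0 = 1) ∨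
       ((∀ i : ℤ, canonicalRep N (i + 1) * canonicalRep N i = 0) ∧
        ¬ ∃ d : ℤ →₀ ℕ, IsAdmissible N d ∧ d 1 = 1 ∧ d 0 = 1)) := by
    by_cases h : ∃ d : ℤ →₀ ℕ, IsAdmissible N d ∧ d 1 = 1 ∧ d 0 = 1
    · have hceq : canonicalRep N = h.choose := by rw [canonicalRep, dif_pos h]
      rw [hceq]
      obtain ⟨h1, h2, h3⟩ := h.choose_spec
      exact ⟨h1, Or.inl ⟨h2, h3⟩⟩
    · have hcan : canonicalRep N = bergmanRep N := by rw [canonicalRep, dif_neg h]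
      by_cases h2 : ∃ c : ℤ →₀ ℕ, IsBergman N c
      · have hbeq : bergmanRep N = h2.choose := by rw [bergmanRep, dif_pos h2]
        rw [hcan, hbeq]
        obtain ⟨hp, hadj⟩ := h2.choose_spec
        exact ⟨⟨hp, fun i _ => hadj i⟩, Or.inr ⟨hadj, h⟩⟩
      · exfalso
        have h0 : bergmanRep N = 0 := by rw [bergmanRep, dif_neg h2]
        rw [hcan, h0] at hl1
        simp at hl1
  obtain ⟨⟨⟨hle, hsumN⟩, hadjC⟩, hdich⟩ := key
  set S := (canonicalRep N).support with hSdef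
  have hmem : ∀ i : ℤ, i ∈ S ↔ canonicalRep N i = 1 := by
    intro i
    rw [hSdef, Finsupp.mem_support_iff]
    have := hle i
    omega
  have hsum' : (∑ i ∈ S, goldenPhi ^ i) = (N : ℝ) := by
    rw [← hsumN, Finsupp.sum]
    apply Finset.sum_congr rfl
    intro i hi
    rw [(hmem i).mp hi]
    norm_num
  have hSl : l ∈ S := (hmem l).mpr hl1
  have hSr : r ∈ S := (hmem r).mpr hr1
  have hbdS : ∀ i ∈ S, r ≤ i ∧ i ≤ l := fun i hi =>
    ⟨hrmin' i ((hmem i).mp hi), hlmax' i ((hmem i).mp hi)⟩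
  have hadjS : ∀ i : ℤ, i ≠ 0 → i ∈ S → i + 1 ∈ S → False := by
    intro i h0 hi hi1
    have := hadjC i h0
    rw [(hmem _).mp hi, (hmem _).mp hi1] at this
    simp at this
  have hcase : (0 ∈ S ∧ 1 ∈ S) ∨
      ((∀ i : ℤ, i ∈ S → i + 1 ∈ S → False) ∧
        ¬ ∃ d : ℤ →₀ ℕ, IsAdmissible N d ∧ d 1 = 1 ∧ d 0 = 1) := by
    rcases hdich with ⟨h1, h0⟩ | ⟨hfull, hne⟩
    · exact Or.inl ⟨(hmem 0).mpr h0, (hmem 1).mpr h1⟩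
    · refine Or.inr ⟨fun i hi hi1 => ?_, hne⟩
      have := hfull i
      rw [(hmem _).mp hi, (hmem _).mp hi1] at this
      simp at this
  have hcaseW : (0 ∈ S ∧ 1 ∈ S) ∨ (∀ i : ℤ, i ∈ S → i + 1 ∈ S → False) := by
    rcases hcase with hA | ⟨hf, _⟩
    · exact Or.inl hA
    · exact Or.inr hf
  constructor
  · intro n hn
    constructor
    · rintro ⟨hln, hrn⟩
      have hbd2 : ∀ i ∈ S, -(2 * (n : ℤ)) ≤ i ∧ i ≤ 2 * (n : ℤ) := by
        intro i hi
        have := hbdS i hi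
        omega
      have hSl2 : (2 * (n : ℤ)) ∈ S := by
        rw [show (2 * (n : ℤ)) = l from by omega]; exact hSl
      have hSr2 : (-(2 * (n : ℤ))) ∈ S := by
        rw [show (-(2 * (n : ℤ))) = r from by omega]; exact hSr
      exact forward_even S N n hn hsum' hbd2 hSl2 hSr2 hadjS hcase
    · rintro ⟨h1, h2⟩
      have := backward_even S N n hn l r hsum' hSl hSr hbdS hadjS hcaseW h1 h2
      exact ⟨this.1, by omega⟩
  · intro n
    constructor
    · rintro ⟨hln, hrn⟩
      have hbd2 : ∀ i ∈ S, -(2 * (n : ℤ)) - 2 ≤ i ∧ i ≤ 2 * (n : ℤ) + 1 := by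
        intro i hi
        have := hbdS i hi
        omega
      have hSl2 : (2 * (n : ℤ) + 1) ∈ S := by
        rw [show (2 * (n : ℤ) + 1) = l from by omega]; exact hSl
      have hSr2 : (-(2 * (n : ℤ)) - 2) ∈ S := by
        rw [show (-(2 * (n : ℤ)) - 2) = r from by omega]; exact hSr
      exact forward_odd S N n hsum' hbd2 hSl2 hSr2 hadjS hcaseW
    · rintro ⟨h1, h2⟩
      have := backward_odd S N n l r hsum' hSl hSr hbdS hadjS hcase
        (fun i hi => (hbdS i hi).2) (fun i hi => (hbdS i hi).1) h1 h2
      exact ⟨this.1, by omega⟩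
end
end

section
/- [Recursive structure, Part I, canonical] For every n ≥ 1 and every k with 1 ≤ k ≤ L_{2n-1}, the canonical digits of L_{2n} + k are: c_i(L_{2n} + k) = c_i(k) for all i with |i| ≤ 2n - 1; c_{2n}(L_{2n} + k) = 1 and c_{-2n}(L_{2n} + k) = 1; and c_i(L_{2n} + k) = 0 for all i with |i| > 2n. -/
noncomputable section

attribute [local instance] Classical.propDecidable

local notation "φ" => goldenPhi
def bpPsi : ℝ := (1 - Real.sqrt 5) / 2
local notation "ψ" => bpPsi
lemma bp_s5_sq : Real.sqrt 5 * Real.sqrt 5 = 5 := Real.mul_self_sqrt (by norm_num)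
lemma bp_one_lt_phi : 1 < φ := by unfold goldenPhi; nlinarith [bp_s5_sq, Real.sqrt_nonneg 5]
lemma bp_phi_pos : 0 < φ := lt_trans one_pos bp_one_lt_phi
lemma bp_phi_ne : φ ≠ 0 := ne_of_gt bp_phi_pos
lemma bp_phi_sq : φ ^ 2 = φ + 1 := by
  unfold goldenPhi; field_simp; nlinarith [bp_s5_sq]
lemma bp_psi_neg : ψ < 0 := by unfold bpPsi; nlinarith [bp_s5_sq, Real.sqrt_nonneg 5]
lemma bp_psi_ne : ψ ≠ 0 := ne_of_lt bp_psi_neg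
lemma bp_phi_mul_psi : φ * ψ = -1 := by
  unfold goldenPhi bpPsi; nlinarith [bp_s5_sq]
lemma bp_phi_inv : φ⁻¹ = φ - 1 :=
  inv_eq_of_mul_eq_one_right (by nlinarith [bp_phi_sq])
lemma bp_psi_eq : ψ = -(φ - 1) := by
  have h := bp_phi_mul_psi
  have h2 : φ * (φ - 1) = 1 := by nlinarith [bp_phi_sq]
  have := mul_left_cancel₀ bp_phi_ne (show φ * ψ = φ * (-(φ-1)) by rw [h]; ring_nf; nlinarith [h2])
  exact this
lemma bp_psi_inv : ψ = -φ⁻¹ := by rw [bp_phi_inv]; exact bp_psi_eq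
lemma bp_abs_psi : |ψ| = φ⁻¹ := by
  rw [abs_of_neg bp_psi_neg, bp_psi_inv]; ring

lemma bp_zpow_pos (i : ℤ) : 0 < φ ^ i := zpow_pos bp_phi_pos i

lemma bp_zpow_lt {a b : ℤ} (h : a < b) : φ ^ a < φ ^ b :=
  zpow_lt_zpow_right₀ bp_one_lt_phi h

lemma bp_zpow_le {a b : ℤ} (h : a ≤ b) : φ ^ a ≤ φ ^ b :=
  zpow_le_zpow_right₀ bp_one_lt_phi.le h

lemma bp_zpow_lt_iff {a b : ℤ} : φ ^ a < φ ^ b ↔ a < b :=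
  zpow_lt_zpow_iff_right₀ bp_one_lt_phi

lemma bp_zpow_rec (a : ℤ) : φ ^ (a + 1) = φ ^ a + φ ^ (a - 1) := by
  have h1 : φ ^ (a + 1) = φ ^ (a - 1) * φ ^ (2:ℤ) := by
    rw [← zpow_add₀ bp_phi_ne]; ring_nf
  have h2 : φ ^ (2:ℤ) = φ + 1 := by
    rw [show (2:ℤ) = ((2:ℕ):ℤ) by norm_num, zpow_natCast]; exact bp_phi_sq
  have h3 : φ ^ a = φ ^ (a - 1) * φ := by
    rw [← zpow_add_one₀ bp_phi_ne]; ring_nf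
  rw [h1, h2, h3]; ring

lemma bp_psi_zpow (i : ℤ) : ψ ^ i = (-1) ^ i * φ ^ (-i) := by
  rw [bp_psi_inv, show -φ⁻¹ = (-1) * φ⁻¹ by ring, mul_zpow, inv_zpow']

lemma bp_psi_zpow_even {i : ℤ} (h : Even i) : ψ ^ i = φ ^ (-i) := by
  rw [bp_psi_zpow, h.neg_one_zpow, one_mul]

lemma bp_psi_zpow_odd {i : ℤ} (h : Odd i) : ψ ^ i = -φ ^ (-i) := by
  rw [bp_psi_zpow, h.neg_one_zpow]; ring

lemma bp_abs_psi_zpow (i : ℤ) : |ψ ^ i| = φ ^ (-i) := by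
  rcases Int.even_or_odd i with h | h
  · rw [bp_psi_zpow_even h, abs_of_pos (bp_zpow_pos _)]
  · rw [bp_psi_zpow_odd h, abs_neg, abs_of_pos (bp_zpow_pos _)]

/-- sum of φ-powers over a finset -/
def bpS (S : Finset ℤ) : ℝ := ∑ i ∈ S, φ ^ i
def bpT (S : Finset ℤ) : ℝ := ∑ i ∈ S, ψ ^ i

lemma bpS_nonneg (S : Finset ℤ) : 0 ≤ bpS S :=
  Finset.sum_nonneg fun i _ => (bp_zpow_pos i).le

lemma bpS_pos {S : Finset ℤ} (h : S.Nonempty) : 0 < bpS S :=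
  Finset.sum_pos (fun i _ => bp_zpow_pos i) h

lemma bpS_le {S : Finset ℤ} {a : ℤ} (h : a ∈ S) : φ ^ a ≤ bpS S :=
  Finset.single_le_sum (fun i _ => (bp_zpow_pos i).le) h

lemma bpS_erase {S : Finset ℤ} {a : ℤ} (h : a ∈ S) :
    bpS (S.erase a) = bpS S - φ ^ a := by
  unfold bpS
  rw [← Finset.add_sum_erase S _ h]; ring

/-- Upper bound: sum over a "no consecutive" set with elements ≤ M is < φ^(M+1). -/
lemma bp_LB (S : Finset ℤ) : ∀ M : ℤ, (∀ i ∈ S, i + 1 ∉ S) → (∀ i ∈ S, i ≤ M) →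
    bpS S < φ ^ (M + 1) := by
  induction S using Finset.strongInduction with
  | _ S ih =>
    intro M hc hub
    rcases S.eq_empty_or_nonempty with rfl | hne
    · simpa [bpS] using bp_zpow_pos (M+1)
    · set t := S.max' hne with ht
      have htS : t ∈ S := S.max'_mem hne
      have h1 : bpS S = φ ^ t + bpS (S.erase t) := by
        rw [bpS_erase htS]; ring
      have h2 : bpS (S.erase t) < φ ^ (t - 1) := by
        have := ih (S.erase t) (Finset.erase_ssubset htS) (t - 2)
          (fun i hi => fun hmem => hc i (Finset.mem_of_mem_erase hi)
            (Finset.mem_of_mem_erase hmem))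
          (fun i hi => by
            have h3 : i ≤ t := S.le_max' i (Finset.mem_of_mem_erase hi)
            have h4 : i ≠ t := Finset.ne_of_mem_erase hi
            have h5 : i ≠ t - 1 := by
              intro h; apply hc i (Finset.mem_of_mem_erase hi); rw [h]
              simpa [sub_add_cancel] using htS
            omega)
        simpa [show t - 2 + 1 = t - 1 by ring] using this
      have h3 : φ ^ t + φ ^ (t - 1) = φ ^ (t + 1) := (bp_zpow_rec t).symm
      have h4 : φ ^ (t + 1) ≤ φ ^ (M + 1) := bp_zpow_le (by have := hub t htS; omega)
      linarith

/-- Mirrored: sum of φ^(-i) over a no-consecutive set with elements ≥ a is < φ^(-a+1). -/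
lemma bp_LB' (S : Finset ℤ) : ∀ a : ℤ, (∀ i ∈ S, i + 1 ∉ S) → (∀ i ∈ S, a ≤ i) →
    (∑ i ∈ S, φ ^ (-i)) < φ ^ (-a + 1) := by
  induction S using Finset.strongInduction with
  | _ S ih =>
    intro a hc hlb
    rcases S.eq_empty_or_nonempty with rfl | hne
    · simpa using bp_zpow_pos (-a+1)
    · set t := S.min' hne with ht
      have htS : t ∈ S := S.min'_mem hne
      have h1 : (∑ i ∈ S, φ ^ (-i)) = φ ^ (-t) + ∑ i ∈ S.erase t, φ ^ (-i) := by
        rw [← Finset.add_sum_erase S _ htS]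
      have h2 : (∑ i ∈ S.erase t, φ ^ (-i)) < φ ^ (-t - 1) := by
        have := ih (S.erase t) (Finset.erase_ssubset htS) (t + 2)
          (fun i hi => fun hmem => hc i (Finset.mem_of_mem_erase hi)
            (Finset.mem_of_mem_erase hmem))
          (fun i hi => by
            have h3 : t ≤ i := S.min'_le i (Finset.mem_of_mem_erase hi)
            have h4 : i ≠ t := Finset.ne_of_mem_erase hi
            have h5 : i ≠ t + 1 := by
              intro h; apply hc t htS; rw [← h]; exact Finset.mem_of_mem_erase hi
            omega)
        have he : -(t + 2) + 1 = -t - 1 := by ring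
        rwa [he] at this
      have h3 : φ ^ (-t) + φ ^ (-t - 1) = φ ^ (-t + 1) := by
        have := bp_zpow_rec (-t)
        linarith
      have h4 : φ ^ (-t + 1) ≤ φ ^ (-a + 1) := bp_zpow_le (by have := hlb t htS; omega)
      linarith


lemma bp_L7_bounds {S : Finset ℤ} {m : ℤ} (hm : m ∈ S) (hmin : ∀ i ∈ S, m ≤ i)
    (hm1 : m + 1 ∉ S) :
    (Even m → φ ^ (-m - 1) < bpT S ∧ bpT S < φ ^ (-m + 1)) ∧
    (Odd m → bpT S < 0) := by
  classical
  set S' := S.erase m with hS'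
  have hS'lb : ∀ i ∈ S', m + 2 ≤ i := by
    intro i hi
    have h1 : m ≤ i := hmin i (Finset.mem_of_mem_erase hi)
    have h2 : i ≠ m := Finset.ne_of_mem_erase hi
    have h3 : i ≠ m + 1 := fun h => hm1 (h ▸ Finset.mem_of_mem_erase hi)
    omega
  have hsplit : bpT S = ψ ^ m + bpT S' := by
    unfold bpT
    rw [← Finset.add_sum_erase S _ hm]
  set E := S'.filter (fun i => Even i) with hEdef
  set O := S'.filter (fun i => ¬ Even i) with hOdef
  have hEO : bpT S' = (∑ i ∈ E, ψ ^ i) + (∑ i ∈ O, ψ ^ i) := by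
    unfold bpT
    rw [hEdef, hOdef, Finset.sum_filter_add_sum_filter_not]
  have hEmem : ∀ i ∈ E, Even i ∧ m + 2 ≤ i := fun i hi =>
    ⟨(Finset.mem_filter.mp hi).2, hS'lb i (Finset.mem_filter.mp hi).1⟩
  have hOmem : ∀ i ∈ O, ¬ Even i ∧ m + 2 ≤ i := fun i hi =>
    ⟨(Finset.mem_filter.mp hi).2, hS'lb i (Finset.mem_filter.mp hi).1⟩
  have hEval : (∑ i ∈ E, ψ ^ i) = ∑ i ∈ E, φ ^ (-i) :=
    Finset.sum_congr rfl fun i hi => bp_psi_zpow_even (hEmem i hi).1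
  have hOval : (∑ i ∈ O, ψ ^ i) = -∑ i ∈ O, φ ^ (-i) := by
    rw [← Finset.sum_neg_distrib]
    exact Finset.sum_congr rfl fun i hi =>
      bp_psi_zpow_odd (Int.not_even_iff_odd.mp (hOmem i hi).1)
  have hEnn : 0 ≤ ∑ i ∈ E, φ ^ (-i) := Finset.sum_nonneg fun i _ => (bp_zpow_pos _).le
  have hOnn : 0 ≤ ∑ i ∈ O, φ ^ (-i) := Finset.sum_nonneg fun i _ => (bp_zpow_pos _).le
  have hEnc : ∀ i ∈ E, i + 1 ∉ E := by
    intro i hi hmem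
    have h1 := (hEmem i hi).1
    have h2 := (hEmem _ hmem).1
    rcases h1 with ⟨a, ha⟩; rcases h2 with ⟨b, hb⟩; omega
  have hOnc : ∀ i ∈ O, i + 1 ∉ O := by
    intro i hi hmem
    have h1 := (hOmem i hi).1
    have h2 := (hOmem _ hmem).1
    rcases Int.even_or_odd i with h | h
    · exact h1 h
    · exact h2 (by rcases h with ⟨a, ha⟩; exact ⟨a+1, by omega⟩)
  constructor
  · -- m even
    intro hme
    have hpsim : ψ ^ m = φ ^ (-m) := bp_psi_zpow_even hme
    -- E elements ≥ m+2 : bound < φ^(-m-1)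
    have hEb : (∑ i ∈ E, φ ^ (-i)) < φ ^ (-m - 1) := by
      have := bp_LB' E (m + 2) hEnc (fun i hi => (hEmem i hi).2)
      have he : -(m + 2) + 1 = -m - 1 := by ring
      rwa [he] at this
    -- O elements are odd and ≥ m+2, hence ≥ m+3 since m even
    have hOb : (∑ i ∈ O, φ ^ (-i)) < φ ^ (-m - 2) := by
      have hlb : ∀ i ∈ O, m + 3 ≤ i := by
        intro i hi
        have h1 := (hOmem i hi).1
        have h2 := (hOmem i hi).2
        rcases hme with ⟨a, ha⟩
        rcases Int.even_or_odd i with h | ⟨b, hb⟩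
        · exact absurd h h1
        · omega
      have := bp_LB' O (m + 3) hOnc hlb
      have he : -(m + 3) + 1 = -m - 2 := by ring
      rwa [he] at this
    have hrec1 : φ ^ (-m) = φ ^ (-m - 1) + φ ^ (-m - 2) := by
      have := bp_zpow_rec (-m - 1)
      have h1 : -m - 1 + 1 = -m := by ring
      have h2 : -m - 1 - 1 = -m - 2 := by ring
      rw [h1, h2] at this; linarith
    have hrec2 : φ ^ (-m + 1) = φ ^ (-m) + φ ^ (-m - 1) := by
      have := bp_zpow_rec (-m)
      have h2 : -m - 1 = -m - 1 := rfl
      linarith [this]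
    constructor
    · rw [hsplit, hEO, hEval, hOval, hpsim]; linarith
    · rw [hsplit, hEO, hEval, hOval, hpsim]; linarith
  · -- m odd
    intro hmo
    have hpsim : ψ ^ m = -φ ^ (-m) := bp_psi_zpow_odd hmo
    -- E elements even ≥ m+2, m odd so ≥ m+3
    have hEb : (∑ i ∈ E, φ ^ (-i)) < φ ^ (-m - 2) := by
      have hlb : ∀ i ∈ E, m + 3 ≤ i := by
        intro i hi
        have h1 := (hEmem i hi).1
        have h2 := (hEmem i hi).2
        rcases hmo with ⟨a, ha⟩
        rcases h1 with ⟨b, hb⟩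
        omega
      have := bp_LB' E (m + 3) hEnc hlb
      have he : -(m + 3) + 1 = -m - 2 := by ring
      rwa [he] at this
    have hlt : φ ^ (-m - 2) < φ ^ (-m) := bp_zpow_lt (by omega)
    rw [hsplit, hEO, hEval, hOval, hpsim]
    linarith

lemma bp_pq (i : ℤ) : ∃ p q : ℚ, φ ^ i = (p : ℝ) + q * Real.sqrt 5 ∧
    ψ ^ i = (p : ℝ) - q * Real.sqrt 5 := by
  induction i using Int.induction_on with
  | zero => exact ⟨1, 0, by norm_num, by norm_num⟩
  | succ n ih =>
    obtain ⟨p, q, h1, h2⟩ := ih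
    refine ⟨(p + 5*q)/2, (p + q)/2, ?_, ?_⟩
    · rw [zpow_add_one₀ bp_phi_ne, h1]
      unfold goldenPhi
      push_cast
      linear_combination ((q:ℝ)/2) * bp_s5_sq
    · rw [zpow_add_one₀ bp_psi_ne, h2]
      unfold bpPsi
      push_cast
      linear_combination ((q:ℝ)/2) * bp_s5_sq
  | pred n ih =>
    obtain ⟨p, q, h1, h2⟩ := ih
    refine ⟨(-p + 5*q)/2, (p - q)/2, ?_, ?_⟩
    · rw [show (-(n:ℤ) - 1) = (-(n:ℤ)) + (-1) by ring, zpow_add₀ bp_phi_ne, h1,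
        zpow_neg_one, bp_phi_inv]
      unfold goldenPhi
      push_cast
      linear_combination ((q:ℝ)/2) * bp_s5_sq
    · rw [show (-(n:ℤ) - 1) = (-(n:ℤ)) + (-1) by ring, zpow_add₀ bp_psi_ne, h2,
        zpow_neg_one]
      have hpsiinv : ψ⁻¹ = ψ - 1 := by
        apply inv_eq_of_mul_eq_one_right
        have : ψ ^ 2 = ψ + 1 := by unfold bpPsi; field_simp; nlinarith [bp_s5_sq]
        nlinarith [this]
      rw [hpsiinv]
      unfold bpPsi
      push_cast
      linear_combination ((q:ℝ)/2) * bp_s5_sq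

lemma bp_sum_pq (S : Finset ℤ) : ∃ p q : ℚ, bpS S = (p : ℝ) + q * Real.sqrt 5 ∧
    bpT S = (p : ℝ) - q * Real.sqrt 5 := by
  classical
  induction S using Finset.cons_induction with
  | empty => exact ⟨0, 0, by simp [bpS], by simp [bpT]⟩
  | cons a S ha ih =>
    obtain ⟨p, q, h1, h2⟩ := ih
    obtain ⟨p', q', h1', h2'⟩ := bp_pq a
    refine ⟨p + p', q + q', ?_, ?_⟩
    · unfold bpS at *
      rw [Finset.sum_cons, h1, h1']
      push_cast; ring
    · unfold bpT at *
      rw [Finset.sum_cons, h2, h2']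
      push_cast; ring

lemma bp_sqrt5_irr : Irrational (Real.sqrt 5) := by
  have : Nat.Prime 5 := by norm_num
  simpa using this.irrational_sqrt

lemma bp_pq_inj {p q p' q' : ℚ} (h : (p : ℝ) + q * Real.sqrt 5 = (p' : ℝ) + q' * Real.sqrt 5) :
    p = p' ∧ q = q' := by
  by_cases hq : q = q'
  · subst hq
    have hr : (p : ℝ) = (p' : ℝ) := by linarith
    exact ⟨by exact_mod_cast hr, rfl⟩
  · exfalso
    have hqq : ((q - q' : ℚ) : ℝ) ≠ 0 := by
      exact_mod_cast sub_ne_zero.mpr hq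
    have hmul : ((q - q' : ℚ) : ℝ) * Real.sqrt 5 = ((p' - p : ℚ) : ℝ) := by
      push_cast; linarith
    have h5 : Real.sqrt 5 = (((p' - p) / (q - q') : ℚ) : ℝ) := by
      rw [Rat.cast_div, eq_div_iff (by exact_mod_cast sub_ne_zero.mpr hq : ((q - q' : ℚ):ℝ) ≠ 0)]
      linarith [hmul]
    exact bp_sqrt5_irr ⟨_, h5.symm⟩

/-- conjugation: if the φ-sum is the rational r plus φ^(2w)-conjugate pieces -/
lemma bp_conj_rat {S : Finset ℤ} {r : ℚ} (h : bpS S = (r : ℝ)) : bpT S = (r : ℝ) := by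
  obtain ⟨p, q, h1, h2⟩ := bp_sum_pq S
  have := bp_pq_inj (p' := r) (q' := 0) (by rw [← h1, h]; push_cast; ring)
  rw [h2, this.1, this.2]; push_cast; ring

lemma bp_conj_int_add {S : Finset ℤ} {k : ℕ} {j : ℤ}
    (h : bpS S = (k : ℝ) + φ ^ j) : bpT S = (k : ℝ) + ψ ^ j := by
  obtain ⟨p, q, h1, h2⟩ := bp_sum_pq S
  obtain ⟨p', q', h1', h2'⟩ := bp_pq j
  have heq : (p : ℝ) + q * Real.sqrt 5 = ((k + p' : ℚ) : ℝ) + (q' : ℚ) * Real.sqrt 5 := by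
    rw [← h1, h, h1']; push_cast; ring
  have := bp_pq_inj heq
  rw [h2, this.1, this.2, h2']
  push_cast; ring

lemma bp_lucas_rec (m : ℕ) : lucas (m + 2) = lucas (m + 1) + lucas m := rfl

lemma bp_lucas_pos (m : ℕ) : 1 ≤ lucas m := by
  induction m using Nat.strong_induction_on with
  | _ m ih =>
    match m with
    | 0 => norm_num [lucas]
    | 1 => norm_num [lucas]
    | (m+2) =>
      have h1 := ih (m+1) (by omega)
      have h2 := ih m (by omega)
      rw [bp_lucas_rec]; omega

lemma bp_lucas_ge (m : ℕ) : m ≤ lucas m := by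
  induction m using Nat.strong_induction_on with
  | _ m ih =>
    match m with
    | 0 => norm_num [lucas]
    | 1 => norm_num [lucas]
    | (m+2) =>
      have h1 := ih (m+1) (by omega)
      have h2 := bp_lucas_pos m
      rw [bp_lucas_rec]; omega

lemma bp_lucas_real (m : ℕ) : (lucas m : ℝ) = φ ^ m + ψ ^ m := by
  induction m using Nat.strong_induction_on with
  | _ m ih =>
    match m with
    | 0 => norm_num [lucas]
    | 1 =>
      norm_num [lucas]
      unfold goldenPhi bpPsi; ring
    | (m+2) =>
      have h1 := ih (m+1) (by omega)
      have h2 := ih m (by omega)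
      rw [bp_lucas_rec]
      push_cast
      rw [h1, h2]
      have hphi : φ ^ (m+2) = φ ^ (m+1) + φ ^ m := by
        have : φ ^ (m+2) = φ ^ m * φ ^ 2 := by ring
        rw [this, bp_phi_sq]; ring
      have hpsi : ψ ^ (m+2) = ψ ^ (m+1) + ψ ^ m := by
        have h2' : ψ ^ 2 = ψ + 1 := by unfold bpPsi; field_simp; nlinarith [bp_s5_sq]
        have : ψ ^ (m+2) = ψ ^ m * ψ ^ 2 := by ring
        rw [this, h2']; ring
      rw [hphi, hpsi]; ring

lemma bp_lucas_even (t : ℕ) : (lucas (2 * t) : ℝ) = φ ^ (2 * (t:ℤ)) + φ ^ (-(2 * (t:ℤ))) := by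
  rw [bp_lucas_real]
  have h1 : φ ^ (2*t) = φ ^ (2 * (t:ℤ)) := by
    rw [← zpow_natCast]; norm_num
  have h2 : ψ ^ (2*t) = φ ^ (-(2 * (t:ℤ))) := by
    rw [← zpow_natCast, bp_psi_zpow_even ⟨t, by push_cast; ring⟩]
    norm_num
  rw [h1, h2]

lemma bp_lucas_odd (t : ℕ) : (lucas (2 * t + 1) : ℝ) =
    φ ^ (2 * (t:ℤ) + 1) - φ ^ (-(2 * (t:ℤ) + 1)) := by
  rw [bp_lucas_real]
  have h1 : φ ^ (2*t+1) = φ ^ (2 * (t:ℤ) + 1) := by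
    rw [← zpow_natCast]; norm_num
  have h2 : ψ ^ (2*t+1) = -φ ^ (-(2 * (t:ℤ) + 1)) := by
    rw [← zpow_natCast, bp_psi_zpow_odd ⟨(t:ℤ), by push_cast; ring⟩]
    norm_num
  rw [h1, h2]; ring

def bpNC (S : Finset ℤ) : Prop := ∀ i ∈ S, i + 1 ∉ S
def bpNCE (S : Finset ℤ) : Prop := ∀ i ∈ S, i + 1 ∈ S → i = 0

lemma bpNC_mono {S T : Finset ℤ} (h : T ⊆ S) (hS : bpNC S) : bpNC T :=
  fun i hi hmem => hS i (h hi) (h hmem)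

lemma bpNCE_mono {S T : Finset ℤ} (h : T ⊆ S) (hS : bpNCE S) : bpNCE T :=
  fun i hi hmem => hS i (h hi) (h hmem)

lemma bpNC_of_NCE_not0 {S : Finset ℤ} (hS : bpNCE S) (h0 : (0:ℤ) ∉ S ∨ (1:ℤ) ∉ S) : bpNC S := by
  intro i hi hmem
  have := hS i hi hmem
  subst this
  rcases h0 with h | h
  · exact h hi
  · exact h (by exact_mod_cast hmem)

/-- Uniqueness of no-consecutive representations. -/
lemma bp_unique : ∀ (N : ℕ) (S T : Finset ℤ), S.card ≤ N → bpNC S → bpNC T →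
    bpS S = bpS T → S = T := by
  intro N
  induction N with
  | zero =>
    intro S T hcard _ _ hsum
    have hS : S = ∅ := Finset.card_eq_zero.mp (by omega)
    subst hS
    rcases T.eq_empty_or_nonempty with rfl | hne
    · rfl
    · exfalso
      have h1 := bpS_pos hne
      have h0 : bpS (∅:Finset ℤ) = 0 := by simp [bpS]
      linarith [hsum ▸ h0]
  | succ N ih =>
    intro S T hcard hS hT hsum
    rcases S.eq_empty_or_nonempty with rfl | hSne
    · rcases T.eq_empty_or_nonempty with rfl | hne
      · rfl
      · exfalso
        have h1 := bpS_pos hne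
        have h0 : bpS (∅:Finset ℤ) = 0 := by simp [bpS]
        linarith [hsum ▸ h0]
    · have hTne : T.Nonempty := by
        by_contra h
        rw [Finset.not_nonempty_iff_eq_empty] at h
        subst h
        have h1 := bpS_pos hSne
        have h0 : bpS (∅:Finset ℤ) = 0 := by simp [bpS]
        rw [hsum, h0] at h1
        linarith
      set a := S.max' hSne with ha
      set b := T.max' hTne with hb
      have hab : a = b := by
        have h1 : φ ^ a ≤ bpS S := bpS_le (S.max'_mem hSne)
        have h2 : φ ^ b ≤ bpS T := bpS_le (T.max'_mem hTne)
        have h3 : bpS S < φ ^ (a + 1) := bp_LB S a hS (fun i hi => S.le_max' i hi)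
        have h4 : bpS T < φ ^ (b + 1) := bp_LB T b hT (fun i hi => T.le_max' i hi)
        have h5 : φ ^ a < φ ^ (b+1) := by rw [hsum] at h1; linarith
        have h6 : φ ^ b < φ ^ (a+1) := by rw [← hsum] at h2; linarith
        have := bp_zpow_lt_iff.mp h5
        have := bp_zpow_lt_iff.mp h6
        omega
      have heq : S.erase a = T.erase b := by
        apply ih
        · have : 1 ≤ S.card := Finset.card_pos.mpr hSne
          rw [Finset.card_erase_of_mem (S.max'_mem hSne)]
          omega
        · exact bpNC_mono (Finset.erase_subset _ _) hS
        · exact bpNC_mono (Finset.erase_subset _ _) hT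
        · rw [bpS_erase (S.max'_mem hSne), bpS_erase (T.max'_mem hTne), hsum, ← ha, ← hb, hab]
      have h1 : S = insert a (S.erase a) := (Finset.insert_erase (S.max'_mem hSne)).symm
      have h2 : T = insert b (T.erase b) := (Finset.insert_erase (T.max'_mem hTne)).symm
      rw [h1, h2, heq, hab]

lemma bp_unique' {S T : Finset ℤ} (hS : bpNC S) (hT : bpNC T) (h : bpS S = bpS T) : S = T :=
  bp_unique S.card S T le_rfl hS hT h

/-- Uniqueness of admissible reps with digits at 0 and 1. -/
lemma bp_unique11 {S T : Finset ℤ} (hS : bpNCE S) (hT : bpNCE T)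
    (h0S : (0:ℤ) ∈ S) (h1S : (1:ℤ) ∈ S) (h0T : (0:ℤ) ∈ T) (h1T : (1:ℤ) ∈ T)
    (h : bpS S = bpS T) : S = T := by
  have key : ∀ (U : Finset ℤ), bpNCE U → (0:ℤ) ∈ U → (1:ℤ) ∈ U →
      bpNC ((U.erase 0).erase 1) ∧ bpS ((U.erase 0).erase 1) = bpS U - φ ^ (1:ℤ) - φ ^ (0:ℤ) := by
    intro U hU h0 h1
    constructor
    · intro i hi hmem
      have hiU : i ∈ U := Finset.mem_of_mem_erase (Finset.mem_of_mem_erase hi)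
      have hmemU : i + 1 ∈ U := Finset.mem_of_mem_erase (Finset.mem_of_mem_erase hmem)
      have := hU i hiU hmemU
      subst this
      exact absurd rfl (Finset.ne_of_mem_erase (Finset.mem_of_mem_erase hi))
    · rw [bpS_erase (by
        refine Finset.mem_erase.mpr ⟨by norm_num, h1⟩), bpS_erase h0]
      ring
  obtain ⟨hncS, hsumS⟩ := key S hS h0S h1S
  obtain ⟨hncT, hsumT⟩ := key T hT h0T h1T
  have heq : (S.erase 0).erase 1 = (T.erase 0).erase 1 :=
    bp_unique' hncS hncT (by rw [hsumS, hsumT, h])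
  ext i
  by_cases hi0 : i = 0
  · subst hi0; simp [h0S, h0T]
  by_cases hi1 : i = 1
  · subst hi1; simp [h1S, h1T]
  constructor
  · intro hi
    have : i ∈ (S.erase 0).erase 1 := Finset.mem_erase.mpr ⟨hi1, Finset.mem_erase.mpr ⟨hi0, hi⟩⟩
    rw [heq] at this
    exact Finset.mem_of_mem_erase (Finset.mem_of_mem_erase this)
  · intro hi
    have : i ∈ (T.erase 0).erase 1 := Finset.mem_erase.mpr ⟨hi1, Finset.mem_erase.mpr ⟨hi0, hi⟩⟩
    rw [← heq] at this
    exact Finset.mem_of_mem_erase (Finset.mem_of_mem_erase this)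

lemma bp_lucas_odd_lt (t : ℕ) : (lucas (2*t+1) : ℝ) < φ ^ (2*(t:ℤ)+1) := by
  rw [bp_lucas_odd]
  have := bp_zpow_pos (-(2*(t:ℤ)+1))
  linarith

lemma bp_conj_nat {S : Finset ℤ} {k : ℕ} (h : bpS S = (k : ℝ)) : bpT S = (k : ℝ) := by
  have : bpS S = ((k : ℚ) : ℝ) := by rw [h]; push_cast; ring
  have := bp_conj_rat this
  rw [this]; push_cast; ring

/-- support bound for admissible-type representations of k ≤ lucas (2n-1) -/
lemma bp_SB {S : Finset ℤ} {k n : ℕ} (hn : 1 ≤ n) (hk1 : 1 ≤ k) (hk2 : k ≤ lucas (2*n-1))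
    (hE : bpNCE S) (hsum : bpS S = (k : ℝ)) :
    ∀ i ∈ S, -(2*(n:ℤ) - 2) ≤ i ∧ i ≤ 2*(n:ℤ) - 2 := by
  have hklt : (k : ℝ) < φ ^ (2*(n:ℤ) - 1) := by
    obtain ⟨t, ht⟩ : ∃ t, n = t + 1 := ⟨n - 1, by omega⟩
    subst ht
    have h1 : 2*(t+1) - 1 = 2*t+1 := by omega
    have h2 : (lucas (2*t+1) : ℝ) < φ ^ (2*(t:ℤ)+1) := bp_lucas_odd_lt t
    have h3 : (k:ℝ) ≤ (lucas (2*t+1) : ℝ) := by exact_mod_cast (h1 ▸ hk2)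
    have h4 : (2*(t:ℤ)+1) = 2*((t:ℤ)+1) - 1 := by ring
    rw [h4] at h2
    push_cast
    push_cast at h2 h3
    linarith
  intro i hi
  have hup : i ≤ 2*(n:ℤ) - 2 := by
    have h1 : φ ^ i ≤ bpS S := bpS_le hi
    rw [hsum] at h1
    have h2 : φ ^ i < φ ^ (2*(n:ℤ) - 1) := lt_of_le_of_lt h1 hklt
    have := bp_zpow_lt_iff.mp h2
    omega
  refine ⟨?_, hup⟩
  have hne : S.Nonempty := ⟨i, hi⟩
  set m := S.min' hne with hmdef
  have hmS : m ∈ S := S.min'_mem hne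
  have hmle : m ≤ i := S.min'_le i hi
  by_cases hm0 : 0 ≤ m
  · omega
  · push_neg at hm0
    have hm1 : m + 1 ∉ S := by
      intro hmem
      have := hE m hmS hmem
      omega
    have hw : bpT S = (k : ℝ) := bp_conj_nat hsum
    have hL7 := bp_L7_bounds hmS (fun j hj => S.min'_le j hj) hm1
    rcases Int.even_or_odd m with he | ho
    · have h1 := (hL7.1 he).1
      rw [hw] at h1
      have h2 : φ ^ (-m - 1) < φ ^ (2*(n:ℤ) - 1) := lt_trans h1 hklt
      have h3 := bp_zpow_lt_iff.mp h2
      rcases he with ⟨a, ha⟩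
      omega
    · exfalso
      have h1 := hL7.2 ho
      rw [hw] at h1
      have : (1:ℝ) ≤ (k:ℝ) := by exact_mod_cast hk1
      linarith

lemma bp_klt {k n : ℕ} (hn : 1 ≤ n) (hk2 : k ≤ lucas (2*n-1)) :
    (k : ℝ) < φ ^ (2*(n:ℤ) - 1) := by
  obtain ⟨t, ht⟩ : ∃ t, n = t + 1 := ⟨n - 1, by omega⟩
  subst ht
  have h1 : 2*(t+1) - 1 = 2*t+1 := by omega
  have h2 : (lucas (2*t+1) : ℝ) < φ ^ (2*(t:ℤ)+1) := bp_lucas_odd_lt t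
  have h3 : (k:ℝ) ≤ (lucas (2*t+1) : ℝ) := by exact_mod_cast (h1 ▸ hk2)
  have h4 : (2*(t:ℤ)+1) = 2*((t:ℤ)+1) - 1 := by ring
  rw [h4] at h2
  push_cast
  push_cast at h2 h3
  linarith

lemma bp_psi_neg2n (n : ℕ) : ψ ^ (-(2*(n:ℤ))) = φ ^ (2*(n:ℤ)) := by
  rw [bp_psi_zpow_even ⟨-(n:ℤ), by ring⟩]
  norm_num

/-- forced structure: any admissible representation of lucas(2n)+k splits. -/
lemma bp_FS {T : Finset ℤ} {k n : ℕ} (hn : 1 ≤ n) (hk1 : 1 ≤ k) (hk2 : k ≤ lucas (2*n-1))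
    (hE : bpNCE T) (hsum : bpS T = ((lucas (2*n) + k : ℕ) : ℝ)) :
    (2*(n:ℤ)) ∈ T ∧ (-(2*(n:ℤ))) ∈ T ∧
    bpNCE ((T.erase (2*(n:ℤ))).erase (-(2*(n:ℤ)))) ∧
    bpS ((T.erase (2*(n:ℤ))).erase (-(2*(n:ℤ)))) = (k:ℝ) ∧
    (∀ i ∈ (T.erase (2*(n:ℤ))).erase (-(2*(n:ℤ))), -(2*(n:ℤ)-2) ≤ i ∧ i ≤ 2*(n:ℤ)-2) := by
  have hNr : bpS T = (lucas (2*n) : ℝ) + (k:ℝ) := by rw [hsum]; push_cast; ring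
  have hLe := bp_lucas_even n
  have hklt := bp_klt hn hk2
  have hk1r : (1:ℝ) ≤ (k:ℝ) := by exact_mod_cast hk1
  have hrec2n : φ ^ (2*(n:ℤ)+1) = φ ^ (2*(n:ℤ)) + φ ^ (2*(n:ℤ)-1) := bp_zpow_rec (2*(n:ℤ))
  -- N < φ^(2n+1)
  have hNlt : bpS T < φ ^ (2*(n:ℤ)+1) := by
    have hlucrec : lucas (2*n+1) = lucas (2*n) + lucas (2*n-1) := by
      have h1 : 2*n-1+2 = 2*n+1 := by omega
      have h2 : 2*n-1+1 = 2*n := by omega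
      have := bp_lucas_rec (2*n-1)
      rw [h1, h2] at this
      omega
    have h2 : (lucas (2*n+1) : ℝ) < φ ^ (2*(n:ℤ)+1) := by
      have := bp_lucas_odd_lt n
      exact this
    have h3 : bpS T ≤ (lucas (2*n+1) : ℝ) := by
      rw [hNr, hlucrec]
      push_cast
      have : (k:ℝ) ≤ (lucas (2*n-1) : ℝ) := by exact_mod_cast hk2
      linarith
    linarith
  have hTne : T.Nonempty := by
    rcases T.eq_empty_or_nonempty with rfl | h
    · exfalso
      have h0 : bpS (∅:Finset ℤ) = 0 := by simp [bpS]
      rw [h0] at hNr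
      have : (0:ℝ) < (lucas (2*n) : ℝ) := by exact_mod_cast bp_lucas_pos (2*n)
      linarith
    · exact h
  set M := T.max' hTne with hMdef
  have hMT : M ∈ T := T.max'_mem hTne
  have hMle : M ≤ 2*(n:ℤ) := by
    have h1 : φ ^ M ≤ bpS T := bpS_le hMT
    have := bp_zpow_lt_iff.mp (lt_of_le_of_lt h1 hNlt)
    omega
  -- no-consecutive away from 0
  have hT0nc : bpNC (T.erase 0) :=
    bpNC_of_NCE_not0 (bpNCE_mono (Finset.erase_subset _ _) hE)
      (Or.inl (Finset.notMem_erase _ _))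
  have hsplit0 : bpS T ≤ bpS (T.erase 0) + 1 := by
    by_cases h0 : (0:ℤ) ∈ T
    · have h00 : φ ^ (0:ℤ) = 1 := zpow_zero φ
      rw [bpS_erase h0, h00]
      linarith
    · rw [Finset.erase_eq_of_notMem h0]
      linarith
  have hupper : bpS T < φ ^ (M+1) + 1 := by
    have := bp_LB (T.erase 0) M hT0nc
      (fun i hi => T.le_max' i (Finset.mem_of_mem_erase hi))
    linarith
  have hMge : 2*(n:ℤ) ≤ M := by
    have h1 : φ ^ (2*(n:ℤ)) + 1 < bpS T := by
      rw [hNr, hLe]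
      have := bp_zpow_pos (-(2*(n:ℤ)))
      linarith
    have h2 : φ ^ (2*(n:ℤ)) < φ ^ (M+1) := by linarith
    have := bp_zpow_lt_iff.mp h2
    omega
  have hMeq : M = 2*(n:ℤ) := le_antisymm hMle hMge
  have h2nT : (2*(n:ℤ)) ∈ T := hMeq ▸ hMT
  have h2n1T : (2*(n:ℤ)-1) ∉ T := by
    intro hmem
    have := hE _ hmem (by rw [show 2*(n:ℤ)-1+1 = 2*(n:ℤ) by ring]; exact h2nT)
    omega
  set T' := T.erase (2*(n:ℤ)) with hT'def
  have hT'sum : bpS T' = (k:ℝ) + φ ^ (-(2*(n:ℤ))) := by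
    rw [bpS_erase h2nT, hNr, hLe]; ring
  have hT'ne : T'.Nonempty := by
    rcases T'.eq_empty_or_nonempty with h | h
    · exfalso
      have h0 : bpS T' = 0 := by rw [h]; simp [bpS]
      rw [h0] at hT'sum
      have := bp_zpow_pos (-(2*(n:ℤ)))
      linarith
    · exact h
  have hT'conj : bpT T' = (k:ℝ) + φ ^ (2*(n:ℤ)) := by
    have := bp_conj_int_add (S := T') (k := k) (j := -(2*(n:ℤ))) hT'sum
    rw [this, bp_psi_neg2n]
  set m := T'.min' hT'ne with hmdef
  have hmT' : m ∈ T' := T'.min'_mem hT'ne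
  have hT'E : bpNCE T' := bpNCE_mono (Finset.erase_subset _ _) hE
  have hT'ub : ∀ i ∈ T', i ≤ 2*(n:ℤ) - 1 := by
    intro i hi
    have h1 : i ≤ M := T.le_max' i (Finset.mem_of_mem_erase hi)
    have h2 : i ≠ 2*(n:ℤ) := Finset.ne_of_mem_erase hi
    omega
  have hmle : m ≤ -(2*(n:ℤ)) := by
    by_contra hcon
    push_neg at hcon
    have habs : bpT T' ≤ ∑ i ∈ T', φ ^ (-i) := by
      unfold bpT
      apply Finset.sum_le_sum
      intro i _
      calc ψ ^ i ≤ |ψ ^ i| := le_abs_self _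
        _ = φ ^ (-i) := bp_abs_psi_zpow i
    have hT'0nc : bpNC (T'.erase 0) :=
      bpNC_of_NCE_not0 (bpNCE_mono (Finset.erase_subset _ _) hT'E)
        (Or.inl (Finset.notMem_erase _ _))
    have hLB := bp_LB' (T'.erase 0) m hT'0nc
      (fun i hi => T'.min'_le i (Finset.mem_of_mem_erase hi))
    have hsplit : (∑ i ∈ T', φ ^ (-i)) ≤ (∑ i ∈ T'.erase 0, φ ^ (-i)) + 1 := by
      by_cases h0 : (0:ℤ) ∈ T'
      · rw [← Finset.add_sum_erase T' _ h0]
        norm_num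
        linarith
      · rw [Finset.erase_eq_of_notMem h0]
        linarith
    have hb : φ ^ (-m+1) ≤ φ ^ (2*(n:ℤ)) := bp_zpow_le (by omega)
    have := bp_zpow_pos (2*(n:ℤ))
    rw [hT'conj] at habs
    linarith
  have hm0 : m ≠ 0 := by omega
  have hm1 : m + 1 ∉ T' := by
    intro hmem
    exact hm0 (hT'E m hmT' hmem)
  have hL7 := bp_L7_bounds hmT' (fun j hj => T'.min'_le j hj) hm1
  have hmeq : m = -(2*(n:ℤ)) := by
    rcases Int.even_or_odd m with he | ho
    · have h1 := (hL7.1 he).1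
      rw [hT'conj] at h1
      have h2 : (k:ℝ) + φ ^ (2*(n:ℤ)) < φ ^ (2*(n:ℤ)+1) := by
        have h3 : φ ^ (2*(n:ℤ)-1) > (k:ℝ) := hklt
        linarith
      have h4 : φ ^ (-m-1) < φ ^ (2*(n:ℤ)+1) := lt_trans h1 h2
      have h5 := bp_zpow_lt_iff.mp h4
      rcases he with ⟨a, ha⟩
      omega
    · exfalso
      have h1 := hL7.2 ho
      rw [hT'conj] at h1
      have := bp_zpow_pos (2*(n:ℤ))
      linarith
  have hm2nT : (-(2*(n:ℤ))) ∈ T := Finset.mem_of_mem_erase (hmeq ▸ hmT')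
  have hm2nT' : (-(2*(n:ℤ))) ∈ T' := hmeq ▸ hmT'
  have hnegm1 : (-(2*(n:ℤ))+1) ∉ T := by
    intro hmem
    have h2 := hE (-(2*(n:ℤ))) hm2nT hmem
    omega
  refine ⟨h2nT, hm2nT, ?_, ?_, ?_⟩
  · exact bpNCE_mono (Finset.erase_subset _ _) hT'E
  · rw [bpS_erase hm2nT', hT'sum]; ring
  · intro i hi
    have hiT' : i ∈ T' := Finset.mem_of_mem_erase hi
    have h1 : i ≠ -(2*(n:ℤ)) := Finset.ne_of_mem_erase hi
    have h2 : m ≤ i := T'.min'_le i hiT'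
    have h3 : i ≠ -(2*(n:ℤ))+1 := by
      intro h
      exact hnegm1 (h ▸ Finset.mem_of_mem_erase hiT')
    have h4 : i ≤ 2*(n:ℤ)-1 := hT'ub i hiT'
    have h5 : i ≠ 2*(n:ℤ)-1 := by
      intro h
      exact h2n1T (h ▸ Finset.mem_of_mem_erase hiT')
    omega

lemma bpNCE_of_NC {S : Finset ℤ} (h : bpNC S) : bpNCE S :=
  fun i hi hm => absurd hm (h i hi)

lemma bp_chain (s : ℕ) : ∀ t : ℕ, s ≤ t →
    (∑ u ∈ Finset.Ico s t, φ ^ (-(2*(u:ℤ)+1))) = φ ^ (-(2*(s:ℤ))) - φ ^ (-(2*(t:ℤ))) := by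
  intro t
  induction t with
  | zero =>
    intro h
    have : s = 0 := by omega
    subst this
    simp
  | succ t ih =>
    intro h
    by_cases hst : s = t + 1
    · subst hst; simp
    · have hs_le : s ≤ t := by omega
      rw [Finset.sum_Ico_succ_top hs_le, ih hs_le]
      have hrec : φ ^ (-(2*(t:ℤ))) = φ ^ (-(2*(t:ℤ))-1) + φ ^ (-(2*(t:ℤ))-2) := by
        have h0 := bp_zpow_rec (-(2*(t:ℤ))-1)
        have h1 : -(2*(t:ℤ))-1+1 = -(2*(t:ℤ)) := by ring
        have h2 : -(2*(t:ℤ))-1-1 = -(2*(t:ℤ))-2 := by ring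
        rw [h1, h2] at h0
        linarith
      have e1 : φ ^ (-(2*(t:ℤ)+1)) = φ ^ (-(2*(t:ℤ))-1) := by
        congr 1; ring
      have e2 : φ ^ (-(2*(((t:ℕ)+1:ℕ)):ℤ)) = φ ^ (-(2*(t:ℤ))-2) := by
        congr 1; push_cast; ring
      rw [e1]
      have e3 : (((t:ℕ)+1:ℕ):ℤ) = (t:ℤ)+1 := by push_cast; ring
      rw [show (-(2*((((t:ℕ)+1:ℕ)):ℤ))) = -(2*(t:ℤ))-2 by push_cast; ring] at e2
      have goal2 : φ ^ (-(2*((((t:ℕ)+1:ℕ)):ℤ))) = φ ^ (-(2*(t:ℤ))-2) := by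
        congr 1
        push_cast
        ring
      rw [goal2]
      linarith

lemma bp_min_facts {R : Finset ℤ} {j : ℕ} (hj : 1 ≤ j) (hnc : bpNC R)
    (hsum : bpS R = (j:ℝ)) (hne : R.Nonempty) :
    R.min' hne ≤ 0 ∧ Even (R.min' hne) ∧
      (R.min' hne ≤ -1 → φ ^ (-(R.min' hne)-1) < (j:ℝ)) := by
  set m := R.min' hne with hmdef
  have hmR : m ∈ R := R.min'_mem hne
  have hw : bpT R = (j:ℝ) := bp_conj_nat hsum
  have hj1 : (1:ℝ) ≤ (j:ℝ) := by exact_mod_cast hj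
  have hm0 : m ≤ 0 := by
    by_contra hcon
    push_neg at hcon
    have habs : bpT R ≤ ∑ i ∈ R, φ ^ (-i) := by
      unfold bpT
      apply Finset.sum_le_sum
      intro i _
      calc ψ ^ i ≤ |ψ ^ i| := le_abs_self _
        _ = φ ^ (-i) := bp_abs_psi_zpow i
    have hLB := bp_LB' R m hnc (fun i hi => R.min'_le i hi)
    have : φ ^ (-m+1) ≤ φ ^ (0:ℤ) := bp_zpow_le (by omega)
    rw [zpow_zero] at this
    rw [hw] at habs
    linarith
  have hm1 : m + 1 ∉ R := fun hmem => hnc m hmR hmem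
  have hL7 := bp_L7_bounds hmR (fun i hi => R.min'_le i hi) hm1
  have heven : Even m := by
    rcases Int.even_or_odd m with he | ho
    · exact he
    · exfalso
      have := hL7.2 ho
      rw [hw] at this
      linarith
  refine ⟨hm0, heven, ?_⟩
  intro hm
  have := (hL7.1 heven).1
  rwa [hw] at this

lemma bp_loc {k : ℕ} (hk : 2 ≤ k) : ∃ m : ℕ, 1 ≤ m ∧ lucas m < k ∧ k ≤ lucas (m+1) := by
  classical
  have hex : ∃ j : ℕ, k ≤ lucas (j+2) := ⟨k, le_trans (by omega) (bp_lucas_ge (k+2))⟩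
  set j₀ := Nat.find hex with hj₀def
  have hj₀ : k ≤ lucas (j₀+2) := Nat.find_spec hex
  match hj0e : j₀ with
  | 0 =>
    refine ⟨1, le_rfl, ?_, ?_⟩
    · show lucas 1 < k
      norm_num [lucas]; omega
    · exact (by omega : 1+1 = 0+2) ▸ hj₀
  | (j+1) =>
    refine ⟨j+2, by omega, ?_, ?_⟩
    · have := Nat.find_min hex (m := j) (by omega)
      push_neg at this
      exact this
    · exact (by omega : j+2+1 = j+1+2) ▸ hj₀

lemma bp_build_even {R : Finset ℤ} {j t : ℕ} (ht : 1 ≤ t)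
    (hnc : bpNC R) (hsum : bpS R = (j:ℝ))
    (hb : ∀ i ∈ R, -(2*(t:ℤ)-2) ≤ i ∧ i ≤ 2*(t:ℤ)-2) :
    ∃ S : Finset ℤ, bpNC S ∧ bpS S = (j:ℝ) + (lucas (2*t) : ℝ) := by
  have ht' : (1:ℤ) ≤ (t:ℤ) := by exact_mod_cast ht
  have hnotR : -(2*(t:ℤ)) ∉ R := fun h => by have := (hb _ h).1; omega
  have hnotR2 : (2*(t:ℤ)) ∉ insert (-(2*(t:ℤ))) R := by
    intro h
    rcases Finset.mem_insert.mp h with h | h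
    · omega
    · have := (hb _ h).2; omega
  refine ⟨insert (2*(t:ℤ)) (insert (-(2*(t:ℤ))) R), ?_, ?_⟩
  · intro i hi hmem
    rcases Finset.mem_insert.mp hi with rfl | hi
    · rcases Finset.mem_insert.mp hmem with h | hmem
      · omega
      · rcases Finset.mem_insert.mp hmem with h | h
        · omega
        · have := (hb _ h).2; omega
    rcases Finset.mem_insert.mp hi with rfl | hi
    · rcases Finset.mem_insert.mp hmem with h | hmem
      · omega
      · rcases Finset.mem_insert.mp hmem with h | h
        · omega
        · have := (hb _ h).1; omega
    · rcases Finset.mem_insert.mp hmem with h | hmem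
      · have := (hb _ hi).2; omega
      · rcases Finset.mem_insert.mp hmem with h | h
        · have := (hb _ hi).1; omega
        · exact hnc i hi h
  · unfold bpS
    rw [Finset.sum_insert hnotR2, Finset.sum_insert hnotR]
    unfold bpS at hsum
    rw [hsum, bp_lucas_even t]
    ring

lemma bp_build_odd {R : Finset ℤ} {j nn : ℕ} (hj : 1 ≤ j)
    (hnc : bpNC R) (hsum : bpS R = (j:ℝ)) (hjb : j + 1 ≤ lucas (2*nn)) :
    ∃ S : Finset ℤ, bpNC S ∧ bpS S = (j:ℝ) + (lucas (2*nn+1) : ℝ) := by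
  have hne : R.Nonempty := by
    rcases R.eq_empty_or_nonempty with rfl | h
    · exfalso
      have h0 : bpS (∅:Finset ℤ) = 0 := by simp [bpS]
      rw [h0] at hsum
      have : (1:ℝ) ≤ (j:ℝ) := by exact_mod_cast hj
      linarith
    · exact h
  obtain ⟨hm0, heven, hmlb⟩ := bp_min_facts hj hnc hsum hne
  set m := R.min' hne with hmdef
  have hmR : m ∈ R := R.min'_mem hne
  obtain ⟨a, ha⟩ := heven
  set s : ℕ := (-a).toNat with hsdef
  have hsa : (s:ℤ) = -a := Int.toNat_of_nonneg (by omega)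
  have hms : m = -(2*(s:ℤ)) := by omega
  have hjr : (1:ℝ) ≤ (j:ℝ) := by exact_mod_cast hj
  have hlucr := bp_lucas_even nn
  have hjlucr : (j:ℝ) + 1 ≤ (lucas (2*nn) : ℝ) := by exact_mod_cast hjb
  have hneg2nn : φ ^ (-(2*(nn:ℤ))) ≤ 1 := by
    have := bp_zpow_le (show -(2*(nn:ℤ)) ≤ 0 by omega)
    rwa [zpow_zero] at this
  have hjle : (j:ℝ) ≤ φ ^ (2*(nn:ℤ)) := by
    rw [hlucr] at hjlucr
    linarith
  have hs_le : s ≤ nn := by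
    by_cases hs0 : s = 0
    · omega
    · have hm2 : m ≤ -1 := by omega
      have h1 := hmlb hm2
      have h2 : -m-1 = 2*(s:ℤ)-1 := by omega
      rw [h2] at h1
      have h3 : φ ^ (2*(s:ℤ)-1) < φ ^ (2*(nn:ℤ)) := lt_of_lt_of_le h1 hjle
      have := bp_zpow_lt_iff.mp h3
      omega
  set R' := R.erase m with hR'def
  have hm1 : m + 1 ∉ R := fun hmem => hnc m hmR hmem
  have hCL : ∀ i ∈ R', -(2*(s:ℤ))+2 ≤ i ∧ i ≤ 2*(nn:ℤ)-1 := by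
    intro i hi
    have hiR : i ∈ R := Finset.mem_of_mem_erase hi
    have h1 : m ≤ i := R.min'_le i hiR
    have h2 : i ≠ m := Finset.ne_of_mem_erase hi
    have h3 : i ≠ m+1 := fun h => hm1 (h ▸ hiR)
    have hlow : -(2*(s:ℤ))+2 ≤ i := by omega
    refine ⟨hlow, ?_⟩
    have hphii : φ ^ i ≤ (j:ℝ) := by
      have := bpS_le hiR
      rwa [hsum] at this
    by_cases hnn : nn = 0
    · exfalso
      subst hnn
      have hs0 : s = 0 := by omega
      rw [hs0] at hlow
      have : φ ^ (0:ℤ) < φ ^ i := bp_zpow_lt (by omega)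
      rw [zpow_zero] at this
      have hj1 : (j:ℝ) ≤ 1 := by
        have : (lucas 0 : ℝ) = 2 := by norm_num [lucas]
        rw [show 2*0 = 0 by ring] at hjlucr
        rw [this] at hjlucr
        linarith
      linarith
    · have hnn1 : 1 ≤ nn := by omega
      have hstrict : φ ^ (-(2*(nn:ℤ))) < 1 := by
        have := bp_zpow_lt (show -(2*(nn:ℤ)) < 0 by omega)
        rwa [zpow_zero] at this
      have hjlt : (j:ℝ) < φ ^ (2*(nn:ℤ)) := by
        rw [hlucr] at hjlucr
        linarith
      have : φ ^ i < φ ^ (2*(nn:ℤ)) := lt_of_le_of_lt hphii hjlt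
      have := bp_zpow_lt_iff.mp this
      omega
  set C := (Finset.Ico s nn).image (fun u : ℕ => -(2*(u:ℤ)+1)) with hCdef
  have hCmem : ∀ i ∈ C, (∃ b : ℤ, i = 2*b+1) ∧ -(2*(nn:ℤ))+1 ≤ i ∧ i ≤ -(2*(s:ℤ))-1 := by
    intro i hi
    obtain ⟨u, hu, hui⟩ := Finset.mem_image.mp hi
    obtain ⟨hu1, hu2⟩ := Finset.mem_Ico.mp hu
    have hu1' : (s:ℤ) ≤ (u:ℤ) := by exact_mod_cast hu1
    have hu2' : (u:ℤ) < (nn:ℤ) := by exact_mod_cast hu2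
    exact ⟨⟨-(u:ℤ)-1, by omega⟩, by omega, by omega⟩
  have hCsum : (∑ i ∈ C, φ ^ i) = φ ^ (-(2*(s:ℤ))) - φ ^ (-(2*(nn:ℤ))) := by
    rw [hCdef, Finset.sum_image (by intro x _ y _ h; have h' : -(2*(x:ℤ)+1) = -(2*(y:ℤ)+1) := h; omega)]
    exact bp_chain s nn hs_le
  have hdisj : Disjoint R' C := by
    rw [Finset.disjoint_left]
    intro i hi hiC
    have h1 := (hCL i hi).1
    have h2 := (hCmem i hiC).2.2
    omega
  set A : ℤ := 2*(nn:ℤ)+1 with hAdef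
  set B : ℤ := -(2*(nn:ℤ)+2) with hBdef
  have hBnot : B ∉ R' ∪ C := by
    intro h
    rcases Finset.mem_union.mp h with h | h
    · have := (hCL _ h).1; omega
    · have := (hCmem _ h).2.1; omega
  have hAnot : A ∉ insert B (R' ∪ C) := by
    intro h
    rcases Finset.mem_insert.mp h with h | h
    · omega
    · rcases Finset.mem_union.mp h with h | h
      · have := (hCL _ h).2; omega
      · have := (hCmem _ h).2.2; omega
  refine ⟨insert A (insert B (R' ∪ C)), ?_, ?_⟩
  · -- no consecutive
    intro i hi hmem
    have hmem' : i + 1 = A ∨ i + 1 = B ∨ (i+1) ∈ R' ∨ (i+1) ∈ C := by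
      rcases Finset.mem_insert.mp hmem with h | h
      · exact Or.inl h
      rcases Finset.mem_insert.mp h with h | h
      · exact Or.inr (Or.inl h)
      rcases Finset.mem_union.mp h with h | h
      · exact Or.inr (Or.inr (Or.inl h))
      · exact Or.inr (Or.inr (Or.inr h))
    have hi' : i = A ∨ i = B ∨ i ∈ R' ∨ i ∈ C := by
      rcases Finset.mem_insert.mp hi with h | h
      · exact Or.inl h
      rcases Finset.mem_insert.mp h with h | h
      · exact Or.inr (Or.inl h)
      rcases Finset.mem_union.mp h with h | h
      · exact Or.inr (Or.inr (Or.inl h))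
      · exact Or.inr (Or.inr (Or.inr h))
    rcases hi' with rfl | rfl | hiR' | hiC
    · rcases hmem' with h | h | h | h
      · omega
      · omega
      · have := (hCL _ h).2; omega
      · have := (hCmem _ h).2.2; omega
    · rcases hmem' with h | h | h | h
      · omega
      · omega
      · have := (hCL _ h).1; omega
      · have := (hCmem _ h).2.1; omega
    · have hb := hCL _ hiR'
      rcases hmem' with h | h | h | h
      · omega
      · omega
      · exact hnc i (Finset.mem_of_mem_erase hiR')
          (Finset.mem_of_mem_erase h)
      · have := (hCmem _ h).2.2; omega
    · have hb := (hCmem _ hiC).2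
      obtain ⟨b, hbodd⟩ := (hCmem _ hiC).1
      rcases hmem' with h | h | h | h
      · omega
      · omega
      · have := (hCL _ h).1; omega
      · obtain ⟨b', hbodd'⟩ := (hCmem _ h).1
        omega
  · -- the sum
    unfold bpS
    rw [Finset.sum_insert hAnot, Finset.sum_insert hBnot, Finset.sum_union hdisj, hCsum]
    have hR'sum : (∑ i ∈ R', φ ^ i) = (j:ℝ) - φ ^ (-(2*(s:ℤ))) := by
      have := bpS_erase hmR
      unfold bpS at this hsum
      rw [hR'def, this, hsum, hms]
    rw [hR'sum]
    have hlo := bp_lucas_odd nn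
    have eB : φ ^ B = φ ^ (-(2*(nn:ℤ))-2) := by rw [hBdef]; congr 1; ring
    have eodd : φ ^ (-(2*(nn:ℤ)+1)) = φ ^ (-(2*(nn:ℤ))-1) := by congr 1; ring
    have hrec : φ ^ (-(2*(nn:ℤ))) = φ ^ (-(2*(nn:ℤ))-1) + φ ^ (-(2*(nn:ℤ))-2) := by
      have h0 := bp_zpow_rec (-(2*(nn:ℤ))-1)
      have h1 : -(2*(nn:ℤ))-1+1 = -(2*(nn:ℤ)) := by ring
      have h2 : -(2*(nn:ℤ))-1-1 = -(2*(nn:ℤ))-2 := by ring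
      rw [h1, h2] at h0
      linarith
    rw [eB, hlo, eodd]
    push_cast
    linarith [hrec]

lemma bp_EX : ∀ k : ℕ, 1 ≤ k → ∃ S : Finset ℤ, bpNC S ∧ bpS S = (k:ℝ) := by
  intro k
  induction k using Nat.strong_induction_on with
  | _ k ih =>
    intro hk1
    by_cases hk2 : k < 2
    · -- k = 1
      have hk : k = 1 := by omega
      subst hk
      refine ⟨{0}, ?_, ?_⟩
      · intro i hi hmem
        simp only [Finset.mem_singleton] at hi hmem
        omega
      · simp [bpS]
    · push_neg at hk2
      obtain ⟨m, hm1, hmlt, hmle⟩ := bp_loc hk2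
      rcases Nat.even_or_odd (m+1) with ⟨t, hteq⟩ | ⟨t, hteq⟩
      · -- m+1 = 2t : the odd interval (lucas(2t-1), lucas 2t]
        -- write m+1 = 2*(nn+1) where nn+1 = t
        have ht1 : 1 ≤ t := by omega
        obtain ⟨nn, hnn⟩ : ∃ nn, t = nn + 1 := ⟨t - 1, by omega⟩
        subst hnn
        have hm_eq : m = 2*nn + 1 := by omega
        by_cases htop : k = lucas (2*(nn+1))
        · -- k is exactly lucas(2(nn+1)) : use pair construction via bp_build_even with R = ∅
          obtain ⟨S, hS1, hS2⟩ := bp_build_even (R := ∅) (j := 0) (t := nn+1) (by omega)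
            (by intro i hi _; simp at hi) (by simp [bpS]) (by intro i hi; simp at hi)
          refine ⟨S, hS1, ?_⟩
          rw [hS2, htop]
          norm_num
        · -- lucas(2nn+1) < k < lucas(2nn+2) : odd construction
          set j := k - lucas (2*nn+1) with hjdef
          have hmlt' : lucas (2*nn+1) < k := by rw [← hm_eq]; exact hmlt
          have hj1 : 1 ≤ j := by omega
          have hjk : j < k := by have := bp_lucas_pos (2*nn+1); omega
          have hrec : lucas (2*(nn+1)) = lucas (2*nn+1) + lucas (2*nn) := by
            rw [show 2*(nn+1) = 2*nn+2 by ring]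
            exact bp_lucas_rec (2*nn)
          have hee : lucas (2*(nn+1)) = lucas (2*nn+2) := by
            rw [show 2*(nn+1) = 2*nn+2 by ring]
          have hjb : j + 1 ≤ lucas (2*nn) := by
            have hkle : k ≤ lucas (2*(nn+1)) := by
              have : m+1 = 2*(nn+1) := by omega
              rw [← this]; exact hmle
            omega
          obtain ⟨R, hRnc, hRsum⟩ := ih j hjk hj1
          obtain ⟨S, hS1, hS2⟩ := bp_build_odd hj1 hRnc hRsum hjb
          refine ⟨S, hS1, ?_⟩
          rw [hS2]
          have : k = j + lucas (2*nn+1) := by omega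
          rw [this]
          push_cast
          ring
      · -- m+1 = 2t+1 : even interval (lucas 2t, lucas(2t+1)]
        have hm_eq : m = 2*t := by omega
        have ht1 : 1 ≤ t := by omega
        set j := k - lucas (2*t) with hjdef
        have hmlt' : lucas (2*t) < k := by rw [← hm_eq]; exact hmlt
        have hj1 : 1 ≤ j := by omega
        have hjk : j < k := by have := bp_lucas_pos (2*t); omega
        have hjb : j ≤ lucas (2*t-1) := by
          have hkle : k ≤ lucas (2*t+1) := by
            have : m+1 = 2*t+1 := by omega
            rw [← this]; exact hmle
          have hrec : lucas (2*t+1) = lucas (2*t) + lucas (2*t-1) := by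
            have h1 : 2*t-1+2 = 2*t+1 := by omega
            have h2 : 2*t-1+1 = 2*t := by omega
            have := bp_lucas_rec (2*t-1)
            rw [h1, h2] at this
            omega
          omega
        obtain ⟨R, hRnc, hRsum⟩ := ih j hjk hj1
        have hb := bp_SB ht1 hj1 hjb (bpNCE_of_NC hRnc) hRsum
        obtain ⟨S, hS1, hS2⟩ := bp_build_even ht1 hRnc hRsum
          (fun i hi => ⟨(hb i hi).1, (hb i hi).2⟩)
        refine ⟨S, hS1, ?_⟩
        rw [hS2]
        have : k = j + lucas (2*t) := by omega
        rw [this]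
        push_cast
        ring

lemma bp_digit_eq {c : ℤ →₀ ℕ} (h1 : ∀ i, c i ≤ 1) (i : ℤ) :
    c i = if i ∈ c.support then 1 else 0 := by
  by_cases h : i ∈ c.support
  · simp only [h, if_true]
    have h2 := Finsupp.mem_support_iff.mp h
    have := h1 i
    omega
  · simp only [h, if_false]
    exact Finsupp.notMem_support_iff.mp h

lemma bp_sum_eq {c : ℤ →₀ ℕ} (h1 : ∀ i, c i ≤ 1) :
    (c.sum fun i a => (a : ℝ) * goldenPhi ^ i) = bpS c.support := by
  unfold bpS Finsupp.sum
  apply Finset.sum_congr rfl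
  intro i hi
  have h2 := Finsupp.mem_support_iff.mp hi
  have h3 := h1 i
  have : c i = 1 := by omega
  rw [this]
  norm_num

def bpInd (S : Finset ℤ) : ℤ →₀ ℕ :=
  ⟨S, fun i => if i ∈ S then 1 else 0, by intro a; by_cases h : a ∈ S <;> simp [h]⟩

lemma bpInd_apply (S : Finset ℤ) (i : ℤ) : bpInd S i = if i ∈ S then 1 else 0 := rfl

lemma bpInd_support (S : Finset ℤ) : (bpInd S).support = S := rfl

lemma bpInd_le (S : Finset ℤ) : ∀ i, bpInd S i ≤ 1 := by
  intro i
  rw [bpInd_apply]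
  by_cases h : i ∈ S <;> simp [h]

lemma bp_isBergman_ind {S : Finset ℤ} {N : ℕ} (hnc : bpNC S) (hsum : bpS S = (N:ℝ)) :
    IsBergman N (bpInd S) := by
  refine ⟨⟨bpInd_le S, ?_⟩, ?_⟩
  · rw [bp_sum_eq (bpInd_le S), bpInd_support, hsum]
  · intro i
    rw [bpInd_apply, bpInd_apply]
    by_cases h1 : i ∈ S
    · by_cases h2 : i + 1 ∈ S
      · exact absurd h2 (hnc i h1)
      · simp [h2]
    · simp [h1]

lemma bp_isAdmissible_ind {S : Finset ℤ} {N : ℕ} (hE : bpNCE S) (hsum : bpS S = (N:ℝ)) :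
    IsAdmissible N (bpInd S) := by
  refine ⟨⟨bpInd_le S, ?_⟩, ?_⟩
  · rw [bp_sum_eq (bpInd_le S), bpInd_support, hsum]
  · intro i hi
    rw [bpInd_apply, bpInd_apply]
    by_cases h1 : i ∈ S
    · by_cases h2 : i + 1 ∈ S
      · exact absurd (hE i h1 h2) hi
      · simp [h2]
    · simp [h1]

lemma bp_of_admissible {c : ℤ →₀ ℕ} {N : ℕ} (h : IsAdmissible N c) :
    bpNCE c.support ∧ bpS c.support = (N:ℝ) := by
  obtain ⟨⟨h1, h2⟩, h3⟩ := h
  constructor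
  · intro i hi hmem
    by_contra hne
    have := h3 i hne
    have ha := Finsupp.mem_support_iff.mp hi
    have hb := Finsupp.mem_support_iff.mp hmem
    exact absurd this (by positivity)
  · rw [← bp_sum_eq h1, h2]

lemma bp_of_bergman {c : ℤ →₀ ℕ} {N : ℕ} (h : IsBergman N c) :
    bpNC c.support ∧ bpS c.support = (N:ℝ) := by
  obtain ⟨⟨h1, h2⟩, h3⟩ := h
  constructor
  · intro i hi hmem
    have := h3 i
    have ha := Finsupp.mem_support_iff.mp hi
    have hb := Finsupp.mem_support_iff.mp hmem
    exact absurd this (by positivity)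
  · rw [← bp_sum_eq h1, h2]

lemma bp_bergman_of_admissible {c : ℤ →₀ ℕ} {N : ℕ} (h : IsBergman N c) :
    IsAdmissible N c := ⟨h.1, fun i _ => h.2 i⟩

lemma bp_SC {Sk : Finset ℤ} {n : ℕ} (hn : 1 ≤ n)
    (hsb : ∀ i ∈ Sk, -(2*(n:ℤ)-2) ≤ i ∧ i ≤ 2*(n:ℤ)-2) :
    bpS (insert (2*(n:ℤ)) (insert (-(2*(n:ℤ))) Sk))
        = bpS Sk + φ^(2*(n:ℤ)) + φ^(-(2*(n:ℤ))) ∧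
    (bpNCE Sk → bpNCE (insert (2*(n:ℤ)) (insert (-(2*(n:ℤ))) Sk))) ∧
    (bpNC Sk → bpNC (insert (2*(n:ℤ)) (insert (-(2*(n:ℤ))) Sk))) := by
  have hn' : (1:ℤ) ≤ (n:ℤ) := by exact_mod_cast hn
  have hnot1 : -(2*(n:ℤ)) ∉ Sk := fun h => by have := (hsb _ h).1; omega
  have hnot2 : (2*(n:ℤ)) ∉ insert (-(2*(n:ℤ))) Sk := by
    intro h
    rcases Finset.mem_insert.mp h with h | h
    · omega
    · have := (hsb _ h).2; omega
  have hmem : ∀ i, i ∈ insert (2*(n:ℤ)) (insert (-(2*(n:ℤ))) Sk) ↔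
      i = 2*(n:ℤ) ∨ i = -(2*(n:ℤ)) ∨ i ∈ Sk := by
    intro i
    simp [Finset.mem_insert]
  refine ⟨?_, ?_, ?_⟩
  · unfold bpS
    rw [Finset.sum_insert hnot2, Finset.sum_insert hnot1]
    ring
  · intro hE i hi hmem2
    rcases (hmem i).mp hi with rfl | rfl | hiS
    · rcases (hmem _).mp hmem2 with h | h | h
      · omega
      · omega
      · have := (hsb _ h).2; omega
    · rcases (hmem _).mp hmem2 with h | h | h
      · omega
      · omega
      · have := (hsb _ h).1; omega
    · rcases (hmem _).mp hmem2 with h | h | h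
      · have := (hsb _ hiS).2; omega
      · have := (hsb _ hiS).1; omega
      · exact hE i hiS h
  · intro hnc i hi hmem2
    rcases (hmem i).mp hi with rfl | rfl | hiS
    · rcases (hmem _).mp hmem2 with h | h | h
      · omega
      · omega
      · have := (hsb _ h).2; omega
    · rcases (hmem _).mp hmem2 with h | h | h
      · omega
      · omega
      · have := (hsb _ h).1; omega
    · rcases (hmem _).mp hmem2 with h | h | h
      · have := (hsb _ hiS).2; omega
      · have := (hsb _ hiS).1; omega
      · exact hnc i hiS h

lemma bp_goals {c d : ℤ →₀ ℕ} {n : ℕ} (hn : 1 ≤ n)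
    (hdc : ∀ i, c i ≤ 1) (hdd : ∀ i, d i ≤ 1)
    (hsupp : d.support = insert (2*(n:ℤ)) (insert (-(2*(n:ℤ))) c.support))
    (hsb : ∀ i ∈ c.support, -(2*(n:ℤ)-2) ≤ i ∧ i ≤ 2*(n:ℤ)-2) :
    (∀ i : ℤ, |i| ≤ 2*(n:ℤ) - 1 → d i = c i) ∧
    d (2*(n:ℤ)) = 1 ∧ d (-(2*(n:ℤ))) = 1 ∧
    (∀ i : ℤ, 2*(n:ℤ) < |i| → d i = 0) := by
  have hn' : (1:ℤ) ≤ (n:ℤ) := by exact_mod_cast hn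
  have hdmem : ∀ i, i ∈ d.support ↔ (i = 2*(n:ℤ) ∨ i = -(2*(n:ℤ)) ∨ i ∈ c.support) := by
    intro i
    rw [hsupp]
    simp [Finset.mem_insert]
  refine ⟨?_, ?_, ?_, ?_⟩
  · intro i hi
    have habs : -(2*(n:ℤ)-1) ≤ i ∧ i ≤ 2*(n:ℤ)-1 := abs_le.mp hi
    rw [bp_digit_eq hdd i, bp_digit_eq hdc i]
    by_cases h : i ∈ c.support
    · rw [if_pos ((hdmem i).mpr (Or.inr (Or.inr h))), if_pos h]
    · rw [if_neg h, if_neg (fun hmem => by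
        rcases (hdmem i).mp hmem with rfl | rfl | hc
        · omega
        · omega
        · exact h hc)]
  · rw [bp_digit_eq hdd, if_pos ((hdmem _).mpr (Or.inl rfl))]
  · rw [bp_digit_eq hdd, if_pos ((hdmem _).mpr (Or.inr (Or.inl rfl)))]
  · intro i hi
    rw [bp_digit_eq hdd, if_neg]
    intro hmem
    rcases abs_cases i with ⟨heq, _⟩ | ⟨heq, _⟩ <;>
      rcases (hdmem i).mp hmem with rfl | rfl | hc
    · omega
    · omega
    · have := (hsb _ hc).2; have := (hsb _ hc).1; omega
    · omega
    · omega
    · have := (hsb _ hc).2; have := (hsb _ hc).1; omega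

theorem stmt9 (n k : ℕ) (hn : 1 ≤ n) (hk1 : 1 ≤ k) (hk2 : k ≤ lucas (2 * n - 1)) :
    (∀ i : ℤ, |i| ≤ 2 * (n : ℤ) - 1 →
      canonicalRep (lucas (2 * n) + k) i = canonicalRep k i) ∧
    canonicalRep (lucas (2 * n) + k) (2 * n : ℤ) = 1 ∧
    canonicalRep (lucas (2 * n) + k) (-(2 * n : ℤ)) = 1 ∧
    (∀ i : ℤ, 2 * (n : ℤ) < |i| → canonicalRep (lucas (2 * n) + k) i = 0) := by
  classical
  obtain ⟨S₀, hS₀nc, hS₀sum⟩ := bp_EX k hk1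
  have hBk : ∃ c, IsBergman k c := ⟨bpInd S₀, bp_isBergman_ind hS₀nc hS₀sum⟩
  set N := lucas (2 * n) + k with hNdef
  by_cases hA : ∃ c, IsAdmissible k c ∧ c 1 = 1 ∧ c 0 = 1
  · -- case with digits at 0 and 1
    have hcank : IsAdmissible k (canonicalRep k) ∧ canonicalRep k 1 = 1 ∧
        canonicalRep k 0 = 1 := by
      rw [canonicalRep, dif_pos hA]
      exact hA.choose_spec
    obtain ⟨hadm, hck1, hck0⟩ := hcank
    obtain ⟨hSkE, hSksum⟩ := bp_of_admissible hadm
    have hdk : ∀ i, canonicalRep k i ≤ 1 := hadm.1.1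
    have h0S : (0:ℤ) ∈ (canonicalRep k).support :=
      Finsupp.mem_support_iff.mpr (by rw [hck0]; norm_num)
    have h1S : (1:ℤ) ∈ (canonicalRep k).support :=
      Finsupp.mem_support_iff.mpr (by rw [hck1]; norm_num)
    have hsb := bp_SB hn hk1 hk2 hSkE hSksum
    obtain ⟨hSCsum, hSCE', _⟩ := bp_SC hn hsb
    have hSCE := hSCE' hSkE
    set SC := insert (2*(n:ℤ)) (insert (-(2*(n:ℤ))) (canonicalRep k).support) with hSCdef
    have hSCsum' : bpS SC = (N:ℝ) := by
      rw [hSCsum, hSksum, hNdef]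
      push_cast
      rw [bp_lucas_even n]
      ring
    have h0SC : (0:ℤ) ∈ SC := by
      rw [hSCdef]
      exact Finset.mem_insert_of_mem (Finset.mem_insert_of_mem h0S)
    have h1SC : (1:ℤ) ∈ SC := by
      rw [hSCdef]
      exact Finset.mem_insert_of_mem (Finset.mem_insert_of_mem h1S)
    have hAN : ∃ c, IsAdmissible N c ∧ c 1 = 1 ∧ c 0 = 1 := by
      refine ⟨bpInd SC, bp_isAdmissible_ind hSCE hSCsum', ?_, ?_⟩
      · rw [bpInd_apply, if_pos h1SC]
      · rw [bpInd_apply, if_pos h0SC]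
    have hcanN : IsAdmissible N (canonicalRep N) ∧ canonicalRep N 1 = 1 ∧
        canonicalRep N 0 = 1 := by
      rw [canonicalRep, dif_pos hAN]
      exact hAN.choose_spec
    obtain ⟨hadmN, hdN1, hdN0⟩ := hcanN
    obtain ⟨hTNE, hTNsum⟩ := bp_of_admissible hadmN
    have h0TN : (0:ℤ) ∈ (canonicalRep N).support :=
      Finsupp.mem_support_iff.mpr (by rw [hdN0]; norm_num)
    have h1TN : (1:ℤ) ∈ (canonicalRep N).support :=
      Finsupp.mem_support_iff.mpr (by rw [hdN1]; norm_num)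
    have hsupp : (canonicalRep N).support = SC :=
      bp_unique11 hTNE hSCE h0TN h1TN h0SC h1SC (by rw [hTNsum, hSCsum'])
    exact bp_goals hn hdk hadmN.1.1 hsupp hsb
  · -- Bergman case
    have hck : canonicalRep k = bergmanRep k := by rw [canonicalRep, dif_neg hA]
    have hbk : IsBergman k (bergmanRep k) := by
      rw [bergmanRep, dif_pos hBk]
      exact hBk.choose_spec
    have hbk' : IsBergman k (canonicalRep k) := by rw [hck]; exact hbk
    obtain ⟨hSknc, hSksum⟩ := bp_of_bergman hbk'
    have hdk : ∀ i, canonicalRep k i ≤ 1 := hbk'.1.1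
    have hsb := bp_SB hn hk1 hk2 (bpNCE_of_NC hSknc) hSksum
    obtain ⟨hSCsum, _, hSCnc'⟩ := bp_SC hn hsb
    have hSCnc := hSCnc' hSknc
    set SC := insert (2*(n:ℤ)) (insert (-(2*(n:ℤ))) (canonicalRep k).support) with hSCdef
    have hSCsum' : bpS SC = (N:ℝ) := by
      rw [hSCsum, hSksum, hNdef]
      push_cast
      rw [bp_lucas_even n]
      ring
    have hAN : ¬ ∃ c, IsAdmissible N c ∧ c 1 = 1 ∧ c 0 = 1 := by
      rintro ⟨d, hd, hd1, hd0⟩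
      obtain ⟨hTE, hTsum⟩ := bp_of_admissible hd
      obtain ⟨h2nT, hm2nT, hE'', hsum'', hb''⟩ := bp_FS hn hk1 hk2 hTE hTsum
      set T'' := (d.support.erase (2*(n:ℤ))).erase (-(2*(n:ℤ))) with hT''def
      have hn' : (1:ℤ) ≤ (n:ℤ) := by exact_mod_cast hn
      have h0T : (0:ℤ) ∈ T'' := by
        rw [hT''def]
        refine Finset.mem_erase.mpr ⟨by omega, Finset.mem_erase.mpr ⟨by omega, ?_⟩⟩
        exact Finsupp.mem_support_iff.mpr (by rw [hd0]; norm_num)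
      have h1T : (1:ℤ) ∈ T'' := by
        rw [hT''def]
        refine Finset.mem_erase.mpr ⟨by omega, Finset.mem_erase.mpr ⟨by omega, ?_⟩⟩
        exact Finsupp.mem_support_iff.mpr (by rw [hd1]; norm_num)
      exact hA ⟨bpInd T'', bp_isAdmissible_ind hE'' hsum'',
        by rw [bpInd_apply, if_pos h1T], by rw [bpInd_apply, if_pos h0T]⟩
    have hBN : ∃ c, IsBergman N c := ⟨bpInd SC, bp_isBergman_ind hSCnc hSCsum'⟩
    have hcanN : canonicalRep N = bergmanRep N := by rw [canonicalRep, dif_neg hAN]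
    have hbN : IsBergman N (bergmanRep N) := by
      rw [bergmanRep, dif_pos hBN]
      exact hBN.choose_spec
    have hbN' : IsBergman N (canonicalRep N) := by rw [hcanN]; exact hbN
    obtain ⟨hTNnc, hTNsum⟩ := bp_of_bergman hbN'
    have hsupp : (canonicalRep N).support = SC :=
      bp_unique' hTNnc hSCnc (by rw [hTNsum, hSCsum'])
    exact bp_goals hn hdk hbN'.1.1 hsupp hsb
end
end

section
/- [Recursive structure, Part II, interval I_n, canonical] For every n ≥ 2 and every k with 1 ≤ k ≤ L_{2n-2}, the canonical digits of L_{2n+1} + k are: c_{2n+1} = 1, c_{2n} = 0, c_{2n-1} = 0, c_{2n-2} = 0; c_i(L_{2n+1} + k) = c_i(L_{2n-1} + k) for all i with -2n + 2 ≤ i ≤ 2n - 3; c_{-2n+1} = 1, c_{-2n} = 0, c_{-2n-1} = 0, c_{-2n-2} = 1; and c_i(L_{2n+1} + k) = 0 for i > 2n + 1 and for i < -2n - 2. -/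
noncomputable section

attribute [local instance] Classical.propDecidable

namespace PhiAux

local notation "φ" => goldenPhi

lemma sqrt5_sq : Real.sqrt 5 * Real.sqrt 5 = 5 :=
  Real.mul_self_sqrt (by norm_num)

lemma one_lt_phi : 1 < φ := by
  have h : (1:ℝ) < Real.sqrt 5 := by
    have := Real.lt_sqrt (x := 1) (y := 5) (by norm_num)
    rw [this]; norm_num
  unfold goldenPhi; linarith

lemma phi_pos : 0 < φ := lt_trans one_pos one_lt_phi

lemma phi_ne : φ ≠ 0 := ne_of_gt phi_pos

lemma phi_mul_phi : φ * φ = φ + 1 := by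
  unfold goldenPhi
  have h5 := sqrt5_sq
  ring_nf
  nlinarith [h5]

lemma phi_add (a : ℤ) : φ ^ (a+1) + φ ^ a = φ ^ (a+2) := by
  have h1 : φ ^ (a+1) = φ ^ a * φ := by rw [zpow_add_one₀ phi_ne]
  have h2 : φ ^ (a+2) = φ ^ a * (φ * φ) := by
    rw [show a + 2 = a + 1 + 1 by ring, zpow_add_one₀ phi_ne, h1]; ring
  rw [h1, h2, phi_mul_phi]; ring

lemma phi_zpow_pos (a : ℤ) : 0 < φ ^ a := zpow_pos phi_pos a

lemma phi_zpow_lt {a b : ℤ} (h : a < b) : φ ^ a < φ ^ b :=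
  zpow_lt_zpow_right₀ one_lt_phi h

lemma phi_zpow_le {a b : ℤ} (h : a ≤ b) : φ ^ a ≤ φ ^ b :=
  zpow_le_zpow_right₀ (le_of_lt one_lt_phi) h

lemma phi_zpow_lt_iff {a b : ℤ} : φ ^ a < φ ^ b ↔ a < b :=
  zpow_lt_zpow_iff_right₀ one_lt_phi

lemma phi_inv_lt_one : φ ^ (-1 : ℤ) < 1 := by
  have := phi_zpow_lt (show (-1:ℤ) < 0 by norm_num)
  simpa using this

/-- The sum `∑ c i * φ^i` as an additive hom. -/
def S : (ℤ →₀ ℕ) →+ ℝ :=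
  Finsupp.liftAddHom (fun i => AddMonoidHom.mk' (fun a => (a : ℝ) * φ ^ i)
    (by intro a b; push_cast; ring))

lemma S_apply (c : ℤ →₀ ℕ) : S c = c.sum fun i a => (a : ℝ) * φ ^ i := rfl

lemma S_single (a : ℤ) (n : ℕ) : S (Finsupp.single a n) = (n : ℝ) * φ ^ a := by
  rw [S, Finsupp.liftAddHom_apply_single]; rfl

lemma S_single_one (a : ℤ) : S (Finsupp.single a 1) = φ ^ a := by
  rw [S_single]; push_cast; ring

lemma S_nonneg (c : ℤ →₀ ℕ) : 0 ≤ S c := by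
  rw [S_apply]
  refine Finset.sum_nonneg fun i _ => ?_
  exact mul_nonneg (Nat.cast_nonneg _) (le_of_lt (phi_zpow_pos i))

lemma S_pos {c : ℤ →₀ ℕ} (h : c ≠ 0) : 0 < S c := by
  rw [S_apply, Finsupp.sum]
  refine Finset.sum_pos (fun i hi => ?_) ?_
  · rw [Finsupp.mem_support_iff] at hi
    have : (1:ℝ) ≤ (c i : ℝ) := by exact_mod_cast Nat.one_le_iff_ne_zero.mpr hi
    have := phi_zpow_pos i
    nlinarith
  · rw [Finsupp.support_nonempty_iff]; exact h

lemma S_erase_add (c : ℤ →₀ ℕ) (a : ℤ) : S c = S (c.erase a) + (c a : ℝ) * φ ^ a := by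
  conv_lhs => rw [← Finsupp.erase_add_single a c]
  rw [map_add, S_single]

/-- digits at most 1 -/
def Dig (c : ℤ →₀ ℕ) : Prop := ∀ i, c i ≤ 1

/-- no two consecutive ones (Bergman condition) -/
def NC (c : ℤ →₀ ℕ) : Prop := ∀ i : ℤ, c (i+1) * c i = 0

/-- no two consecutive ones except possibly at positions 1, 0 -/
def Adm (c : ℤ →₀ ℕ) : Prop := ∀ i : ℤ, i ≠ 0 → c (i+1) * c i = 0

lemma NC_of_Adm {c : ℤ →₀ ℕ} (h : Adm c) (h10 : c 1 * c 0 = 0) : NC c := by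
  intro i
  by_cases hi : i = 0
  · subst hi; simpa using h10
  · exact h i hi

lemma erase_Dig {c : ℤ →₀ ℕ} (h : Dig c) (a : ℤ) : Dig (c.erase a) := by
  intro i
  by_cases hi : i = a
  · subst hi; simp
  · rw [Finsupp.erase_ne hi]; exact h i

lemma erase_NC {c : ℤ →₀ ℕ} (h : NC c) (a : ℤ) : NC (c.erase a) := by
  intro i
  by_cases h1 : i + 1 = a
  · rw [h1, Finsupp.erase_same]; ring
  · by_cases h2 : i = a
    · rw [h2, Finsupp.erase_same]; ring
    · rw [Finsupp.erase_ne h1, Finsupp.erase_ne h2]; exact h i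

lemma top_zero {c : ℤ →₀ ℕ} {t : ℤ} (h : ∀ i ∈ c.support, i ≤ t) {i : ℤ} (hi : t < i) :
    c i = 0 := by
  by_contra hne
  exact absurd (h i (Finsupp.mem_support_iff.mpr hne)) (by omega)

/-- Key upper bound : a Bergman-condition rep with all digits ≤ t sums to < φ^(t+1). -/
lemma upper_bound : ∀ n : ℕ, ∀ c : ℤ →₀ ℕ, c.support.card = n → Dig c → NC c →
    ∀ t : ℤ, (∀ i, t < i → c i = 0) → S c < φ ^ (t+1) := by
  intro n
  induction n with
  | zero =>
    intro c hcard _ _ t _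
    rw [Finset.card_eq_zero, Finsupp.support_eq_empty] at hcard
    subst hcard
    simpa using phi_zpow_pos (t+1)
  | succ n ih =>
    intro c hcard hD hNC t htop
    have hne : c.support.Nonempty := by
      rw [← Finset.card_pos, hcard]; omega
    set s := c.support.max' hne with hs
    have hsmem : s ∈ c.support := c.support.max'_mem hne
    have hcs : c s ≠ 0 := Finsupp.mem_support_iff.mp hsmem
    have hst : s ≤ t := by
      by_contra hgt
      exact hcs (htop s (by omega))
    have hcs1 : c s = 1 := le_antisymm (hD s) (Nat.one_le_iff_ne_zero.mpr hcs)
    have hprev : c (s-1) = 0 := by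
      have := hNC (s-1)
      rw [show s - 1 + 1 = s by ring] at this
      rcases Nat.mul_eq_zero.mp this with h | h
      · exact absurd h hcs
      · exact h
    have habove : ∀ i, s < i → c i = 0 := fun i hi =>
      top_zero (fun j hj => c.support.le_max' j hj) hi
    set c' := c.erase s with hc'
    have hcard' : c'.support.card = n := by
      rw [hc', Finsupp.support_erase, Finset.card_erase_of_mem hsmem, hcard]; omega
    have htop' : ∀ i, s - 2 < i → c' i = 0 := by
      intro i hi
      by_cases h1 : i = s
      · subst h1; simp [hc']
      · rw [hc', Finsupp.erase_ne h1]
        by_cases h2 : i = s - 1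
        · subst h2; exact hprev
        · exact habove i (by omega)
    have hlt : S c' < φ ^ (s - 2 + 1) := ih c' hcard' (erase_Dig hD s) (erase_NC hNC s) (s-2) htop'
    have hSc : S c = S c' + φ ^ s := by
      rw [S_erase_add c s, hcs1]; push_cast; ring
    have hadd : φ ^ s + φ ^ (s-1) = φ ^ (s+1) := by
      have := phi_add (s-1)
      rw [show s - 1 + 1 = s by ring, show s - 1 + 2 = s + 1 by ring] at this
      exact this
    have : S c < φ ^ (s+1) := by
      rw [hSc]
      have : φ ^ (s - 2 + 1) = φ ^ (s-1) := by rw [show s - 2 + 1 = s - 1 by ring]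
      nlinarith [hlt, this, hadd]
    calc S c < φ ^ (s+1) := this
      _ ≤ φ ^ (t+1) := phi_zpow_le (by omega)

lemma lower_bound {c : ℤ →₀ ℕ} {a : ℤ} (h : c a ≠ 0) : φ ^ a ≤ S c := by
  have h1 : (1:ℝ) ≤ (c a : ℝ) := by exact_mod_cast Nat.one_le_iff_ne_zero.mpr h
  have := S_erase_add c a
  have h2 := S_nonneg (c.erase a)
  have h3 := phi_zpow_pos a
  nlinarith

/-- Uniqueness of Bergman-type representations of a real number. -/
lemma berg_unique : ∀ n : ℕ, ∀ c d : ℤ →₀ ℕ, c.support.card = n →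
    Dig c → NC c → Dig d → NC d → S c = S d → c = d := by
  intro n
  induction n with
  | zero =>
    intro c d hcard _ _ _ _ hS
    rw [Finset.card_eq_zero, Finsupp.support_eq_empty] at hcard
    subst hcard
    by_contra hne
    have : d ≠ 0 := fun h => hne (by rw [h])
    have := S_pos this
    rw [← hS] at this
    simp at this
  | succ n ih =>
    intro c d hcard hDc hNCc hDd hNCd hS
    have hcne : c ≠ 0 := by
      intro h; subst h; simp at hcard
    have hdne : d ≠ 0 := by
      intro h; subst h
      rw [show S (0 : ℤ →₀ ℕ) = 0 by simp] at hS
      exact absurd hS (ne_of_gt (S_pos hcne))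
    have hne1 : c.support.Nonempty := Finsupp.support_nonempty_iff.mpr hcne
    have hne2 : d.support.Nonempty := Finsupp.support_nonempty_iff.mpr hdne
    set s := c.support.max' hne1
    set r := d.support.max' hne2
    have hcs : c s ≠ 0 := Finsupp.mem_support_iff.mp (c.support.max'_mem hne1)
    have hdr : d r ≠ 0 := Finsupp.mem_support_iff.mp (d.support.max'_mem hne2)
    have habc : ∀ i, s < i → c i = 0 := fun i hi =>
      top_zero (fun j hj => c.support.le_max' j hj) hi
    have habd : ∀ i, r < i → d i = 0 := fun i hi =>
      top_zero (fun j hj => d.support.le_max' j hj) hi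
    have hsr : s = r := by
      have h1 : φ ^ s ≤ S c := lower_bound hcs
      have h2 : φ ^ r ≤ S d := lower_bound hdr
      have h3 : S c < φ ^ (s+1) := upper_bound _ c rfl hDc hNCc s habc
      have h4 : S d < φ ^ (r+1) := upper_bound _ d rfl hDd hNCd r habd
      have hsl : φ ^ s < φ ^ (r+1) := by rw [hS] at h1; linarith
      have hrl : φ ^ r < φ ^ (s+1) := by rw [← hS] at h2; linarith
      have := phi_zpow_lt_iff.mp hsl
      have := phi_zpow_lt_iff.mp hrl
      omega
    have hcs1 : c s = 1 := le_antisymm (hDc s) (Nat.one_le_iff_ne_zero.mpr hcs)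
    have hds1 : d s = 1 := by
      rw [hsr]; exact le_antisymm (hDd r) (Nat.one_le_iff_ne_zero.mpr hdr)
    have hcard' : (c.erase s).support.card = n := by
      rw [Finsupp.support_erase, Finset.card_erase_of_mem (c.support.max'_mem hne1), hcard]
      omega
    have hS' : S (c.erase s) = S (d.erase s) := by
      have h1 := S_erase_add c s
      have h2 := S_erase_add d s
      rw [hcs1] at h1; rw [hds1] at h2
      rw [h1, h2] at hS
      push_cast at hS
      linarith
    have heq := ih (c.erase s) (d.erase s) hcard' (erase_Dig hDc s) (erase_NC hNCc s)
      (erase_Dig hDd s) (erase_NC hNCd s) hS'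
    have hc := Finsupp.erase_add_single s c
    have hd := Finsupp.erase_add_single s d
    rw [← hc, ← hd, heq, hcs1, hds1]

/-- strip positions 1 and 0 -/
def strip (c : ℤ →₀ ℕ) : ℤ →₀ ℕ := (c.erase 1).erase 0

lemma strip_apply_ne {c : ℤ →₀ ℕ} {i : ℤ} (h0 : i ≠ 0) (h1 : i ≠ 1) : strip c i = c i := by
  rw [strip, Finsupp.erase_ne h0, Finsupp.erase_ne h1]

lemma strip_zero (c : ℤ →₀ ℕ) : strip c 0 = 0 := Finsupp.erase_same

lemma strip_one (c : ℤ →₀ ℕ) : strip c 1 = 0 := by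
  rw [strip, Finsupp.erase_ne (by norm_num : (1:ℤ) ≠ 0), Finsupp.erase_same]

lemma strip_Dig {c : ℤ →₀ ℕ} (h : Dig c) : Dig (strip c) :=
  erase_Dig (erase_Dig h 1) 0

lemma strip_NC {c : ℤ →₀ ℕ} (h : Adm c) : NC (strip c) := by
  intro i
  by_cases hi0 : i = 0
  · subst hi0; rw [strip_zero]; ring
  · by_cases hi1 : i = 1
    · subst hi1; rw [strip_one]; ring
    · by_cases him : i = -1
      · subst him; rw [show (-1:ℤ) + 1 = 0 by ring, strip_zero]; ring
      · rw [strip_apply_ne hi0 hi1, strip_apply_ne (by omega) (by omega)]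
        exact h i hi0

lemma strip_S {c : ℤ →₀ ℕ} (h1 : c 1 = 1) (h0 : c 0 = 1) :
    S c = S (strip c) + φ ^ (1:ℤ) + φ ^ (0:ℤ) := by
  have ha := S_erase_add c 1
  have hb := S_erase_add (c.erase 1) 0
  have h00 : (c.erase 1) 0 = 1 := by rw [Finsupp.erase_ne (by norm_num : (0:ℤ) ≠ 1)]; exact h0
  rw [h1] at ha; rw [h00] at hb
  rw [ha, hb]
  show S (strip c) + _ * φ ^ (0:ℤ) + _ * φ ^ (1:ℤ) = _
  push_cast
  ring

/-- Uniqueness of "special" admissible representations (with digits 1 at positions 1,0). -/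
lemma special_unique {c d : ℤ →₀ ℕ} (hDc : Dig c) (hAc : Adm c) (hc1 : c 1 = 1) (hc0 : c 0 = 1)
    (hDd : Dig d) (hAd : Adm d) (hd1 : d 1 = 1) (hd0 : d 0 = 1) (hS : S c = S d) : c = d := by
  have hS' : S (strip c) = S (strip d) := by
    have h1 := strip_S hc1 hc0
    have h2 := strip_S hd1 hd0
    rw [h1, h2] at hS; linarith
  have heq : strip c = strip d :=
    berg_unique _ _ _ rfl (strip_Dig hDc) (strip_NC hAc) (strip_Dig hDd) (strip_NC hAd) hS'
  ext i
  by_cases hi0 : i = 0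
  · rw [hi0, hc0, hd0]
  · by_cases hi1 : i = 1
    · rw [hi1, hc1, hd1]
    · rw [← strip_apply_ne hi0 hi1, ← strip_apply_ne hi0 hi1 (c := d), heq]

/-- From a special representation, produce a Bergman representation with the tell-tale
pattern: digit 1 at an even position 2t>0, zeros on [-1, 2t-1]. -/
lemma spec_fwd {d : ℤ →₀ ℕ} (hD : Dig d) (hA : Adm d) (h1 : d 1 = 1) (h0 : d 0 = 1) :
    ∃ b : ℤ →₀ ℕ, Dig b ∧ NC b ∧ S b = S d ∧
      ∃ t : ℤ, 1 ≤ t ∧ b (2*t) ≠ 0 ∧ ∀ i, -1 ≤ i → i ≤ 2*t-1 → b i = 0 := by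
  set e := strip d with he
  have hDe : Dig e := strip_Dig hD
  have hNCe : NC e := strip_NC hA
  have hSe : S d = S e + φ ^ (1:ℤ) + φ ^ (0:ℤ) := strip_S h1 h0
  -- find least u with e (2u+3) = 0
  have hex : ∃ u : ℕ, e (2*(u:ℤ)+3) = 0 := by
    by_cases hne : e = 0
    · exact ⟨0, by rw [hne]; simp⟩
    · have hsne : e.support.Nonempty := Finsupp.support_nonempty_iff.mpr hne
      refine ⟨(e.support.max' hsne).toNat + 1, ?_⟩
      apply top_zero (t := e.support.max' hsne) (fun j hj => e.support.le_max' j hj)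
      have := Int.self_le_toNat (e.support.max' hsne)
      omega
  set u := Nat.find hex with hu
  have hF2 : e (2*(u:ℤ)+3) = 0 := Nat.find_spec hex
  have hF1 : ∀ s : ℕ, s < u → e (2*(s:ℤ)+3) = 1 := by
    intro s hs
    have h' : ¬ (e (2*(s:ℤ)+3) = 0) := Nat.find_min hex hs
    have hle := hDe (2*(s:ℤ)+3)
    exact le_antisymm hle (Nat.one_le_iff_ne_zero.mpr h')
  have he2 : e 2 = d 2 := strip_apply_ne (by norm_num) (by norm_num)
  have hd2 : d 2 = 0 := by
    have := hA 1 (by norm_num)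
    rw [h1, mul_one] at this
    exact this
  have hF3 : ∀ s : ℕ, s ≤ u → e (2*(s:ℤ)+2) = 0 := by
    intro s hs
    rcases Nat.eq_zero_or_pos s with h | h
    · subst h; rw [show 2*((0:ℕ):ℤ)+2 = 2 by norm_num, he2]; exact hd2
    · obtain ⟨s', rfl⟩ : ∃ s', s = s' + 1 := ⟨s - 1, by omega⟩
      have hodd : e (2*(s':ℤ)+3) = 1 := hF1 s' (Nat.lt_of_succ_le hs)
      have := hNCe (2*(s':ℤ)+3)
      rw [show 2*(s':ℤ)+3+1 = 2*((s'+1:ℕ):ℤ)+2 by push_cast; ring] at this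
      rw [hodd, mul_one] at this
      exact this
  have hem1 : e (-1) = 0 := by
    rw [strip_apply_ne (by norm_num) (by norm_num)]
    have := hA (-1) (by norm_num)
    rw [show (-1:ℤ)+1 = 0 by ring, h0] at this
    omega
  set t : ℤ := (u:ℤ) + 1 with ht
  -- the odd block to remove
  set O : ℤ →₀ ℕ := ∑ s ∈ Finset.range u, Finsupp.single (2*(s:ℤ)+3) 1 with hO
  have hO_apply : ∀ i : ℤ, O i = ∑ s ∈ Finset.range u, (Finsupp.single (2*(s:ℤ)+3) (1:ℕ)) i := by
    intro i; rw [hO]; exact Finsupp.finset_sum_apply _ _ _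
  have hO1 : ∀ s : ℕ, s < u → O (2*(s:ℤ)+3) = 1 := by
    intro s hs
    rw [hO_apply]
    rw [Finset.sum_eq_single s]
    · simp
    · intro b hb hbs
      rw [Finsupp.single_apply]
      rw [if_neg (by push_cast <;> omega)]
    · intro h; exact absurd (Finset.mem_range.mpr hs) h
  have hO2 : ∀ i : ℤ, (∀ s : ℕ, s < u → i ≠ 2*(s:ℤ)+3) → O i = 0 := by
    intro i hi
    rw [hO_apply]
    apply Finset.sum_eq_zero
    intro s hs
    rw [Finsupp.single_apply, if_neg]
    have := hi s (Finset.mem_range.mp hs)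
    omega
  -- the kept part
  set b₀ : ℤ →₀ ℕ := e.filter (fun i => i < 0 ∨ 2*t < i) with hb₀
  have hb₀_apply_pos : ∀ i : ℤ, (i < 0 ∨ 2*t < i) → b₀ i = e i := by
    intro i hi; rw [hb₀, Finsupp.filter_apply, if_pos hi]
  have hb₀_apply_neg : ∀ i : ℤ, ¬(i < 0 ∨ 2*t < i) → b₀ i = 0 := by
    intro i hi; rw [hb₀, Finsupp.filter_apply, if_neg hi]
  have hsplit : e = b₀ + O := by
    ext i
    rw [Finsupp.add_apply]
    by_cases hp : i < 0 ∨ 2*t < i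
    · rw [hb₀_apply_pos i hp, hO2 i (by intro s hs; omega)]
      simp
    · push_neg at hp
      rw [hb₀_apply_neg i (by omega)]
      -- 0 ≤ i ≤ 2t
      rcases Int.even_or_odd i with ⟨r, hr⟩ | ⟨r, hr⟩
      · -- even: e i = 0 and O i = 0
        by_cases hi0 : i = 0
        · rw [hi0, hO2 0 (by intro s hs; omega), show e 0 = 0 from strip_zero d]
        · have hs' : ∃ s : ℕ, i = 2*(s:ℤ)+2 ∧ s ≤ u := ⟨(r-1).toNat, by omega, by omega⟩
          obtain ⟨s, hs1, hs2⟩ := hs'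
          rw [hs1, hF3 s hs2, hO2 _ (by intro s' hs'; omega)]
      · -- odd
        by_cases hi1 : i = 1
        · rw [hi1, hO2 1 (by intro s hs; omega), show e 1 = 0 from strip_one d]
        · have hs' : ∃ s : ℕ, i = 2*(s:ℤ)+3 ∧ s < u := ⟨(r-1).toNat, by omega, by omega⟩
          obtain ⟨s, hs1, hs2⟩ := hs'
          rw [hs1, hF1 s hs2, hO1 s hs2]
  set b : ℤ →₀ ℕ := b₀ + Finsupp.single (2*t) 1 with hb
  have hb2t : b (2*t) = 1 := by
    rw [hb, Finsupp.add_apply, hb₀_apply_neg (2*t) (by omega), Finsupp.single_eq_same]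
  have hbZ : ∀ i, -1 ≤ i → i ≤ 2*t - 1 → b i = 0 := by
    intro i hi1 hi2
    rw [hb, Finsupp.add_apply, Finsupp.single_apply, if_neg (by omega)]
    by_cases hm : i = -1
    · rw [hm, hb₀_apply_pos _ (by omega), hem1]
      simp
    · rw [hb₀_apply_neg i (by omega)]
      simp
  have hbhigh : ∀ i, 2*t < i → b i = e i := by
    intro i hi
    rw [hb, Finsupp.add_apply, Finsupp.single_apply, if_neg (by omega),
      hb₀_apply_pos i (by omega)]
    simp
  have hblow : ∀ i, i < 0 → b i = e i := by
    intro i hi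
    rw [hb, Finsupp.add_apply, Finsupp.single_apply, if_neg (by omega),
      hb₀_apply_pos i (by omega)]
    simp
  have hDb : Dig b := by
    intro i
    by_cases h2t : i = 2*t
    · rw [h2t, hb2t]
    · rw [hb, Finsupp.add_apply, Finsupp.single_apply, if_neg (by omega)]
      by_cases hp : i < 0 ∨ 2*t < i
      · rw [hb₀_apply_pos i hp]; simpa using hDe i
      · rw [hb₀_apply_neg i hp]; omega
  have hNCb : NC b := by
    intro i
    by_cases hc1 : 2*t + 1 ≤ i
    · rw [hbhigh (i+1) (by omega), hbhigh i (by omega)]; exact hNCe i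
    · by_cases hc2 : i = 2*t
      · have : b (i+1) = e (2*t+1) := by rw [hbhigh (i+1) (by omega), hc2]
        rw [this, show 2*t+1 = 2*(u:ℤ)+3 by omega, hF2]; ring
      · by_cases hc3 : 0 ≤ i
        · rw [hbZ i (by omega) (by omega)]; ring
        · by_cases hc4 : i = -1
          · rw [show i + 1 = 0 by omega, hbZ 0 (by norm_num) (by omega)]; ring
          · rw [hblow (i+1) (by omega), hblow i (by omega)]; exact hNCe i
  have hSO : S O = ∑ s ∈ Finset.range u, φ ^ (2*(s:ℤ)+3) := by
    rw [hO, map_sum]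
    exact Finset.sum_congr rfl fun s _ => S_single_one _
  have htel : ∀ v : ℕ, (∑ s ∈ Finset.range v, φ ^ (2*(s:ℤ)+3)) + φ ^ (2:ℤ) = φ ^ (2*(v:ℤ)+2) := by
    intro v
    induction v with
    | zero => simp
    | succ w ihw =>
      rw [Finset.sum_range_succ]
      have h := phi_add (2*(w:ℤ)+2)
      have e1 : 2*(w:ℤ)+2+1 = 2*(w:ℤ)+3 := by ring
      have e2 : 2*(w:ℤ)+2+2 = 2*((w+1:ℕ):ℤ)+2 := by push_cast; ring
      rw [e1, e2] at h
      linarith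
  have hphi2 : φ ^ (2:ℤ) = φ ^ (1:ℤ) + φ ^ (0:ℤ) := by
    have := phi_add 0
    rw [show (0:ℤ)+1 = 1 by ring, show (0:ℤ)+2 = 2 by ring] at this
    linarith
  have hSb : S b = S d := by
    have hse : S e = S b₀ + S O := by rw [hsplit, map_add]
    have hsb : S b = S b₀ + φ ^ (2*t) := by rw [hb, map_add, S_single_one]
    have h2 := htel u
    rw [show 2*(u:ℤ)+2 = 2*t by omega] at h2
    rw [hSO] at hse
    linarith [hphi2, hse, hsb, h2, hSe]
  exact ⟨b, hDb, hNCb, hSb, t, by omega, by rw [hb2t]; norm_num, hbZ⟩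

/-! ### windows, flags, and building blocks -/

def Win (c : ℤ →₀ ℕ) (lo hi : ℤ) : Prop := ∀ i, c i ≠ 0 → lo ≤ i ∧ i ≤ hi

def NoPat (c : ℤ →₀ ℕ) : Prop :=
  ∀ t : ℤ, 1 ≤ t → c (2*t) ≠ 0 → ∃ i, -1 ≤ i ∧ i ≤ 2*t-1 ∧ c i ≠ 0

def Flag (c : ℤ →₀ ℕ) : Prop := (c 1 = 1 ∧ c 0 = 1) ∨ (c 1 * c 0 = 0 ∧ NoPat c)

def Good (c : ℤ →₀ ℕ) (x : ℝ) (lo hi : ℤ) : Prop :=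
  Dig c ∧ Adm c ∧ Win c lo hi ∧ S c = x ∧ Flag c

lemma win_zero {c : ℤ →₀ ℕ} {lo hi : ℤ} (hW : Win c lo hi) {i : ℤ}
    (h : i < lo ∨ hi < i) : c i = 0 := by
  by_contra hne
  have := hW i hne
  omega

lemma Good.mono {c : ℤ →₀ ℕ} {x : ℝ} {lo hi lo' hi' : ℤ} (hG : Good c x lo hi)
    (h1 : lo' ≤ lo) (h2 : hi ≤ hi') : Good c x lo' hi' := by
  obtain ⟨hD, hA, hW, hS, hF⟩ := hG
  refine ⟨hD, hA, fun i hi => ?_, hS, hF⟩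
  have := hW i hi
  omega

lemma add_single_apply (c : ℤ →₀ ℕ) (a i : ℤ) :
    (c + Finsupp.single a 1 : ℤ →₀ ℕ) i = c i + if a = i then 1 else 0 := by
  rw [Finsupp.add_apply, Finsupp.single_apply]

lemma add_single_apply_ne (c : ℤ →₀ ℕ) {a i : ℤ} (h : a ≠ i) :
    (c + Finsupp.single a 1 : ℤ →₀ ℕ) i = c i := by
  rw [add_single_apply, if_neg h, add_zero]

lemma add_single_apply_self (c : ℤ →₀ ℕ) (a : ℤ) :
    (c + Finsupp.single a 1 : ℤ →₀ ℕ) a = c a + 1 := by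
  rw [add_single_apply, if_pos rfl]

lemma add_ne_zero {c d : ℤ →₀ ℕ} {i : ℤ} (h : c i ≠ 0) : (c + d) i ≠ 0 := by
  rw [Finsupp.add_apply]
  intro hh
  exact h (Nat.eq_zero_of_add_eq_zero_right hh)

lemma Dig_add_single {c : ℤ →₀ ℕ} {a : ℤ} (hD : Dig c) (ha : c a = 0) :
    Dig (c + Finsupp.single a 1) := by
  intro i
  by_cases h : a = i
  · subst h; rw [add_single_apply_self, ha]
  · rw [add_single_apply_ne c h]; exact hD i

lemma Adm_add_single {c : ℤ →₀ ℕ} {a : ℤ} (hA : Adm c)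
    (h1 : c (a+1) = 0) (h2 : c (a-1) = 0) : Adm (c + Finsupp.single a 1) := by
  intro i hi
  by_cases hc1 : i = a
  · rw [add_single_apply_ne c (by omega : a ≠ i + 1), hc1, h1]; ring
  · by_cases hc2 : i + 1 = a
    · rw [add_single_apply_ne c (by omega : a ≠ i), show i = a - 1 by omega, h2]; ring
    · rw [add_single_apply_ne c (by omega : a ≠ i + 1), add_single_apply_ne c (by omega : a ≠ i)]
      exact hA i hi

lemma Win_add_single {c : ℤ →₀ ℕ} {lo hi a lo' hi' : ℤ} (hW : Win c lo hi)
    (h1 : lo' ≤ a) (h2 : a ≤ hi') (h3 : lo' ≤ lo) (h4 : hi ≤ hi') :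
    Win (c + Finsupp.single a 1) lo' hi' := by
  intro i hne
  by_cases h : a = i
  · omega
  · rw [add_single_apply_ne c h] at hne
    have := hW i hne
    omega

/-- Adding a digit strictly below the window (with a gap). -/
lemma Good.add_low {c : ℤ →₀ ℕ} {x : ℝ} {lo hi : ℤ} (hG : Good c x lo hi) (a : ℤ)
    (ha : a + 1 < lo) (ha0 : a < 0) (hahi : a ≤ hi) :
    Good (c + Finsupp.single a 1) (x + φ ^ a) a hi := by
  obtain ⟨hD, hA, hW, hS, hF⟩ := hG
  have hz : ∀ j, j ≤ a + 1 → c j = 0 := fun j hj => win_zero hW (by omega)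
  refine ⟨Dig_add_single hD (hz a (by omega)),
    Adm_add_single hA (hz (a+1) le_rfl) (hz (a-1) (by omega)),
    Win_add_single hW le_rfl hahi (by omega) le_rfl, ?_, ?_⟩
  · rw [map_add, S_single_one, hS]
  · rcases hF with ⟨hc1, hc0⟩ | ⟨hb, hnp⟩
    · exact Or.inl ⟨by rw [add_single_apply_ne c (by omega)]; exact hc1,
        by rw [add_single_apply_ne c (by omega)]; exact hc0⟩
    · refine Or.inr ⟨?_, ?_⟩
      · rw [add_single_apply_ne c (by omega), add_single_apply_ne c (by omega)]; exact hb
      · intro t ht hct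
        rw [add_single_apply_ne c (by omega)] at hct
        obtain ⟨i, hi1, hi2, hi3⟩ := hnp t ht hct
        exact ⟨i, hi1, hi2, add_ne_zero hi3⟩

/-- Adding an odd digit strictly above the window (with a gap). -/
lemma Good.add_high_odd {c : ℤ →₀ ℕ} {x : ℝ} {lo hi : ℤ} (hG : Good c x lo hi) (a r : ℤ)
    (ha : hi + 1 < a) (hr : a = 2*r+1) (hr1 : 1 ≤ r) (hlo : lo ≤ a) :
    Good (c + Finsupp.single a 1) (x + φ ^ a) lo a := by
  obtain ⟨hD, hA, hW, hS, hF⟩ := hG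
  have hz : ∀ j, a - 1 ≤ j → c j = 0 := fun j hj => win_zero hW (by omega)
  refine ⟨Dig_add_single hD (hz a (by omega)),
    Adm_add_single hA (hz (a+1) (by omega)) (hz (a-1) le_rfl),
    Win_add_single hW hlo le_rfl le_rfl (by omega), ?_, ?_⟩
  · rw [map_add, S_single_one, hS]
  · rcases hF with ⟨hc1, hc0⟩ | ⟨hb, hnp⟩
    · exact Or.inl ⟨by rw [add_single_apply_ne c (by omega)]; exact hc1,
        by rw [add_single_apply_ne c (by omega)]; exact hc0⟩
    · refine Or.inr ⟨?_, ?_⟩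
      · rw [add_single_apply_ne c (by omega), add_single_apply_ne c (by omega)]; exact hb
      · intro t ht hct
        rw [add_single_apply_ne c (by omega)] at hct
        obtain ⟨i, hi1, hi2, hi3⟩ := hnp t ht hct
        exact ⟨i, hi1, hi2, add_ne_zero hi3⟩

/-- Adding an even digit above the window (gap ≥ 2), when the value is ≥ 1. -/
lemma Good.add_high_even {c : ℤ →₀ ℕ} {x : ℝ} {lo hi : ℤ} (hG : Good c x lo hi) (a r : ℤ)
    (ha : hi ≤ a - 2) (hr : a = 2*r) (hr1 : 1 ≤ r) (hlo : lo ≤ a) (hx : 1 ≤ x) :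
    Good (c + Finsupp.single a 1) (x + φ ^ a) lo a := by
  obtain ⟨hD, hA, hW, hS, hF⟩ := hG
  have hz : ∀ j, a - 1 ≤ j → c j = 0 := fun j hj => win_zero hW (by omega)
  refine ⟨Dig_add_single hD (hz a (by omega)),
    Adm_add_single hA (hz (a+1) (by omega)) (hz (a-1) le_rfl),
    Win_add_single hW hlo le_rfl le_rfl (by omega), ?_, ?_⟩
  · rw [map_add, S_single_one, hS]
  · rcases hF with ⟨hc1, hc0⟩ | ⟨hb, hnp⟩
    · exact Or.inl ⟨by rw [add_single_apply_ne c (by omega)]; exact hc1,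
        by rw [add_single_apply_ne c (by omega)]; exact hc0⟩
    · refine Or.inr ⟨?_, ?_⟩
      · rw [add_single_apply_ne c (by omega), add_single_apply_ne c (by omega)]; exact hb
      · intro t ht hct
        by_cases h2t : 2*t = a
        · -- the new top even digit: c must have support in [-1, a-1]
          by_cases hsup : ∃ i, -1 ≤ i ∧ i ≤ 2*t - 1 ∧ c i ≠ 0
          · obtain ⟨i, hi1, hi2, hi3⟩ := hsup
            exact ⟨i, hi1, hi2, add_ne_zero hi3⟩
          · exfalso
            push_neg at hsup
            have hzero : ∀ i : ℤ, -1 ≤ i → c i = 0 := by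
              intro i hi
              by_cases hle : i ≤ 2*t - 1
              · by_contra hne; exact hne (by
                  by_contra hne2
                  exact hne2 (hsup i hi hle))
              · exact win_zero hW (by omega)
            have hNC : NC c := by
              apply NC_of_Adm hA
              rw [hzero 1 (by omega)]; ring
            have hub := upper_bound _ c rfl hD hNC (-2) (fun i hi => hzero i (by omega))
            rw [hS] at hub
            have := phi_inv_lt_one
            rw [show (-2:ℤ)+1 = -1 by ring] at hub
            linarith
        · rw [add_single_apply_ne c (by omega)] at hct
          obtain ⟨i, hi1, hi2, hi3⟩ := hnp t ht hct
          exact ⟨i, hi1, hi2, add_ne_zero hi3⟩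

/-- Basic goods for singles. -/
lemma Good_single_neg (a : ℤ) (ha : a < 0) : Good (Finsupp.single a 1) (φ ^ a) a a := by
  refine ⟨?_, ?_, ?_, S_single_one a, ?_⟩
  · intro i; rw [Finsupp.single_apply]; split_ifs <;> omega
  · intro i hi
    rw [Finsupp.single_apply, Finsupp.single_apply]
    split_ifs <;> omega
  · intro i hne
    rw [Finsupp.single_apply] at hne
    by_cases h : a = i
    · omega
    · rw [if_neg h] at hne; omega
  · refine Or.inr ⟨?_, ?_⟩
    · rw [Finsupp.single_apply, if_neg (by omega)]; exact zero_mul _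
    · intro t ht hct
      rw [Finsupp.single_apply, if_neg (by omega)] at hct
      omega

lemma Good_single_one : Good (Finsupp.single 1 1) (φ ^ (1:ℤ)) 1 1 := by
  refine ⟨?_, ?_, ?_, S_single_one 1, ?_⟩
  · intro i; rw [Finsupp.single_apply]; split_ifs <;> omega
  · intro i hi
    rw [Finsupp.single_apply, Finsupp.single_apply]
    split_ifs <;> omega
  · intro i hne
    rw [Finsupp.single_apply] at hne
    by_cases h : (1:ℤ) = i
    · omega
    · rw [if_neg h] at hne; omega
  · refine Or.inr ⟨?_, ?_⟩
    · rw [Finsupp.single_apply (a := (1:ℤ)) (a' := (0:ℤ)), if_neg (by omega)]; exact mul_zero _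
    · intro t ht hct
      rw [Finsupp.single_apply, if_neg (by omega)] at hct
      omega

lemma Good_single_zero : Good (Finsupp.single 0 1) (φ ^ (0:ℤ)) 0 0 := by
  refine ⟨?_, ?_, ?_, S_single_one 0, ?_⟩
  · intro i; rw [Finsupp.single_apply]; split_ifs <;> omega
  · intro i hi
    rw [Finsupp.single_apply, Finsupp.single_apply]
    split_ifs <;> omega
  · intro i hne
    rw [Finsupp.single_apply] at hne
    by_cases h : (0:ℤ) = i
    · omega
    · rw [if_neg h] at hne; omega
  · refine Or.inr ⟨?_, ?_⟩
    · rw [Finsupp.single_apply (a := (0:ℤ)) (a' := (1:ℤ)), if_neg (by omega)]; exact zero_mul _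
    · intro t ht hct
      rw [Finsupp.single_apply, if_neg (by omega)] at hct
      omega

lemma Good_pair : Good (Finsupp.single 1 1 + Finsupp.single 0 1) (φ ^ (1:ℤ) + φ ^ (0:ℤ)) 0 1 := by
  have happ : ∀ i : ℤ, (Finsupp.single 1 1 + Finsupp.single 0 1 : ℤ →₀ ℕ) i
      = (if (1:ℤ) = i then 1 else 0) + (if (0:ℤ) = i then 1 else 0) := by
    intro i; rw [Finsupp.add_apply, Finsupp.single_apply, Finsupp.single_apply]
  refine ⟨?_, ?_, ?_, ?_, ?_⟩
  · intro i; rw [happ]; split_ifs <;> omega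
  · intro i hi; rw [happ, happ]; split_ifs <;> omega
  · intro i hne
    rw [happ] at hne
    by_cases h1 : (1:ℤ) = i
    · omega
    · by_cases h0 : (0:ℤ) = i
      · omega
      · rw [if_neg h1, if_neg h0] at hne; omega
  · rw [map_add, S_single_one, S_single_one]
  · exact Or.inl ⟨by rw [happ]; norm_num, by rw [happ]; norm_num⟩

/-! ### Lucas facts -/

lemma lucas_rec (n : ℕ) : lucas (n+2) = lucas (n+1) + lucas n := rfl

lemma lucas_pos : ∀ n, 0 < lucas n := by
  intro n
  induction n using Nat.twoStepInduction with
  | zero => norm_num [lucas]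
  | one => norm_num [lucas]
  | more n h1 h2 => rw [lucas_rec]; omega

lemma lucas_cast (n : ℕ) : (lucas n : ℝ) = φ ^ (n:ℤ) + (-1)^n * φ ^ (-(n:ℤ)) := by
  induction n using Nat.twoStepInduction with
  | zero => norm_num [lucas]
  | one =>
    have h := phi_add (-1)
    rw [show (-1:ℤ)+1 = 0 by ring, show (-1:ℤ)+2 = 1 by ring, zpow_zero, zpow_one] at h
    norm_num [lucas]
    rw [zpow_neg_one] at h
    linarith
  | more n h1 h2 =>
    have hn1 : ((n+1 : ℕ) : ℤ) = (n:ℤ)+1 := by push_cast; ring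
    have hn2 : ((n+2 : ℕ) : ℤ) = (n:ℤ)+2 := by push_cast; ring
    rw [hn1, show -((n:ℤ)+1) = -(n:ℤ)-1 by ring] at h2
    rw [hn2, show -((n:ℤ)+2) = -(n:ℤ)-2 by ring]
    have e1 : ((-1:ℝ))^(n+1) = -((-1)^n) := by rw [pow_succ]; ring
    have e2 : ((-1:ℝ))^(n+2) = (-1)^n := by rw [pow_succ, pow_succ]; ring
    rw [e1] at h2
    rw [e2]
    have hcast : (lucas (n+2) : ℝ) = (lucas (n+1) : ℝ) + (lucas n : ℝ) := by
      rw [lucas_rec]; push_cast; ring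
    have ha := phi_add (n:ℤ)
    have hb := phi_add (-(n:ℤ)-2)
    rw [show -(n:ℤ)-2+1 = -(n:ℤ)-1 by ring, show -(n:ℤ)-2+2 = -(n:ℤ) by ring] at hb
    have hb3 : ((-1:ℝ))^n * φ^(-(n:ℤ)-1) + ((-1:ℝ))^n * φ^(-(n:ℤ)-2)
        = ((-1:ℝ))^n * φ^(-(n:ℤ)) := by rw [← mul_add, hb]
    rw [hcast, h1, h2]
    linarith [ha, hb3]

lemma lucas_even (m : ℕ) : (lucas (2*m) : ℝ) = φ ^ (2*(m:ℤ)) + φ ^ (-(2*(m:ℤ))) := by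
  rw [lucas_cast]
  rw [show ((2*m : ℕ) : ℤ) = 2*(m:ℤ) by push_cast; ring]
  rw [show (-1:ℝ)^(2*m) = 1 by rw [pow_mul]; norm_num]
  ring

lemma lucas_odd (m : ℕ) : (lucas (2*m+1) : ℝ) = φ ^ (2*(m:ℤ)+1) - φ ^ (-(2*(m:ℤ))-1) := by
  rw [lucas_cast]
  rw [show ((2*m+1 : ℕ) : ℤ) = 2*(m:ℤ)+1 by push_cast; ring]
  rw [show (-1:ℝ)^(2*m+1) = -1 by rw [pow_succ, pow_mul]; norm_num]
  rw [show (-(2*(m:ℤ)+1)) = -(2*(m:ℤ))-1 by ring]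
  ring

lemma Good.congr' {c : ℤ →₀ ℕ} {x y : ℝ} {lo hi lo' hi' : ℤ} (hG : Good c x lo hi)
    (hx : x = y) (h1 : lo' ≤ lo) (h2 : hi ≤ hi') : Good c y lo' hi' := by
  subst hx; exact hG.mono h1 h2

/-! ### The main mutual induction -/

def Epart (m : ℕ) : Prop := ∀ k : ℕ, 1 ≤ k → k ≤ lucas (2*m+2) →
  ∃ c, Good c ((k:ℝ) - φ^(-(2*(m:ℤ))-2)) (-(2*(m:ℤ))-1) (2*(m:ℤ)+1)

def Gpart (m : ℕ) : Prop := ∀ j : ℕ, 1 ≤ j → j ≤ lucas (2*m+1) →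
  ∃ c, Good c (j:ℝ) (-(2*(m:ℤ))) (2*(m:ℤ))

lemma phi_m1 : φ^(-1:ℤ) = 1 - φ^(-2:ℤ) := by
  have h := phi_add (-2)
  rw [show (-2:ℤ)+1 = -1 by ring, show (-2:ℤ)+2 = 0 by ring, zpow_zero] at h
  linarith

lemma phi_p1 : φ^(1:ℤ) = 2 - φ^(-2:ℤ) := by
  have h := phi_add (-1)
  rw [show (-1:ℤ)+1 = 0 by ring, show (-1:ℤ)+2 = 1 by ring, zpow_zero] at h
  have := phi_m1
  linarith

lemma EG : ∀ m : ℕ, Epart m ∧ Gpart m := by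
  intro m
  induction m using Nat.strong_induction_on with
  | _ m IH =>
  cases m with
  | zero =>
    constructor
    · -- base E part : k ∈ {1,2,3}
      intro k hk1 hk2
      have hl2 : lucas 2 = 3 := rfl
      rw [hl2] at hk2
      have hcast : ((0:ℕ):ℤ) = 0 := rfl
      interval_cases k
      · refine ⟨_, (Good_single_neg (-1) (by norm_num)).congr' ?_ (by omega) (by omega)⟩
        rw [show (-(2*((0:ℕ):ℤ))-2) = (-2:ℤ) by norm_num]
        rw [phi_m1]; push_cast; ring
      · refine ⟨_, Good_single_one.congr' ?_ (by omega) (by omega)⟩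
        rw [show (-(2*((0:ℕ):ℤ))-2) = (-2:ℤ) by norm_num]
        rw [phi_p1]; push_cast; ring
      · refine ⟨_, Good_pair.congr' ?_ (by omega) (by omega)⟩
        rw [show (-(2*((0:ℕ):ℤ))-2) = (-2:ℤ) by norm_num]
        rw [phi_p1, zpow_zero]; push_cast; ring
    · -- base G part : j = 1
      intro j hj1 hj2
      have hl1 : lucas 1 = 1 := rfl
      rw [hl1] at hj2
      interval_cases j
      refine ⟨_, Good_single_zero.congr' ?_ (by omega) (by omega)⟩
      rw [zpow_zero]; push_cast; ring
  | succ m =>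
    have ihm := IH m (by omega)
    constructor
    · -- E part for m+1
      intro k hk1 hk2
      rw [show 2*(m+1)+2 = 2*m+4 by ring] at hk2
      have hrec4 : lucas (2*m+4) = lucas (2*m+3) + lucas (2*m+2) := by
        rw [show 2*m+4 = 2*m+2+2 by ring, lucas_rec, show 2*m+2+1 = 2*m+3 by ring]
      have hrec3 : lucas (2*m+3) = lucas (2*m+2) + lucas (2*m+1) := by
        rw [show 2*m+3 = 2*m+1+2 by ring, lucas_rec, show 2*m+1+1 = 2*m+2 by ring]
      have hexp : (-(2*(((m+1):ℕ):ℤ))-2) = (-(2*(m:ℤ))-4) := by push_cast; ring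
      by_cases hA : k ≤ lucas (2*m+2)
      · -- case (a) : add a low digit to the inner E rep
        obtain ⟨c, hc⟩ := ihm.1 k hk1 hA
        refine ⟨_, (hc.add_low (-(2*(m:ℤ))-3) (by omega) (by omega) (by omega)).congr'
          ?_ (by push_cast <;> omega) (by push_cast <;> omega)⟩
        rw [hexp]
        have hid := phi_add (-(2*(m:ℤ))-4)
        rw [show -(2*(m:ℤ))-4+1 = -(2*(m:ℤ))-3 by ring,
          show -(2*(m:ℤ))-4+2 = -(2*(m:ℤ))-2 by ring] at hid
        linear_combination hid
      · by_cases hB : k ≤ lucas (2*m+3)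
        · -- case (b) : L_{2m+2} < k ≤ L_{2m+3}
          set j := k - lucas (2*m+2) with hjdef
          have hj : k = lucas (2*m+2) + j := by omega
          have hj1 : 1 ≤ j := by omega
          have hj2 : j ≤ lucas (2*m+1) := by omega
          obtain ⟨g, hg⟩ := ihm.2 j hj1 hj2
          have s1 := hg.add_low (-(2*(m:ℤ))-3) (by omega) (by omega) (by omega)
          have hx1 : (1:ℝ) ≤ (j:ℝ) + φ^(-(2*(m:ℤ))-3) := by
            have : (1:ℝ) ≤ (j:ℝ) := by exact_mod_cast hj1
            have := phi_zpow_pos (-(2*(m:ℤ))-3)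
            linarith
          have s2 := s1.add_high_even (2*(m:ℤ)+2) ((m:ℤ)+1) (by omega) (by ring) (by omega)
            (by omega) hx1
          refine ⟨_, s2.congr' ?_ (by push_cast <;> omega) (by push_cast <;> omega)⟩
          rw [hexp]
          have hkr : (k:ℝ) = (lucas (2*m+2) : ℝ) + (j:ℝ) := by rw [hj]; push_cast; ring
          have hle : (lucas (2*m+2) : ℝ) = φ^(2*(m:ℤ)+2) + φ^(-(2*(m:ℤ))-2) := by
            rw [show 2*m+2 = 2*(m+1) by ring, lucas_even]
            rw [show (2*(((m+1):ℕ):ℤ)) = 2*(m:ℤ)+2 by push_cast; ring]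
            rw [show (-(2*(m:ℤ)+2):ℤ) = -(2*(m:ℤ))-2 by ring]
          have hid := phi_add (-(2*(m:ℤ))-4)
          rw [show -(2*(m:ℤ))-4+1 = -(2*(m:ℤ))-3 by ring,
            show -(2*(m:ℤ))-4+2 = -(2*(m:ℤ))-2 by ring] at hid
          rw [hkr, hle]
          linear_combination hid
        · -- case (c) : L_{2m+3} < k ≤ L_{2m+4}
          set j := k - lucas (2*m+3) with hjdef
          have hj : k = lucas (2*m+3) + j := by omega
          have hj1 : 1 ≤ j := by omega
          have hj2 : j ≤ lucas (2*m+2) := by omega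
          obtain ⟨e, he⟩ := ihm.1 j hj1 hj2
          have s1 := he.add_high_odd (2*(m:ℤ)+3) ((m:ℤ)+1) (by omega) (by ring) (by omega)
            (by omega)
          refine ⟨_, s1.congr' ?_ (by push_cast <;> omega) (by push_cast <;> omega)⟩
          rw [hexp]
          have hkr : (k:ℝ) = (lucas (2*m+3) : ℝ) + (j:ℝ) := by rw [hj]; push_cast; ring
          have hlo : (lucas (2*m+3) : ℝ) = φ^(2*(m:ℤ)+3) - φ^(-(2*(m:ℤ))-3) := by
            rw [show 2*m+3 = 2*(m+1)+1 by ring, lucas_odd]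
            rw [show (2*(((m+1):ℕ):ℤ)+1) = 2*(m:ℤ)+3 by push_cast; ring]
            rw [show (-(2*(((m+1):ℕ):ℤ))-1 : ℤ) = -(2*(m:ℤ))-3 by push_cast; ring]
          have hid := phi_add (-(2*(m:ℤ))-4)
          rw [show -(2*(m:ℤ))-4+1 = -(2*(m:ℤ))-3 by ring,
            show -(2*(m:ℤ))-4+2 = -(2*(m:ℤ))-2 by ring] at hid
          rw [hkr, hlo]
          linear_combination hid
    · -- G part for m+1
      intro j hj1 hj2
      rw [show 2*(m+1)+1 = 2*m+3 by ring] at hj2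
      have hrec3 : lucas (2*m+3) = lucas (2*m+2) + lucas (2*m+1) := by
        rw [show 2*m+3 = 2*m+1+2 by ring, lucas_rec, show 2*m+1+1 = 2*m+2 by ring]
      have hrec2 : lucas (2*m+2) = lucas (2*m+1) + lucas (2*m) := by
        rw [show 2*m+2 = 2*m+2 by ring, lucas_rec]
      by_cases hga : j ≤ lucas (2*m+1)
      · obtain ⟨g, hg⟩ := ihm.2 j hj1 hga
        exact ⟨_, hg.mono (by push_cast <;> omega) (by push_cast <;> omega)⟩
      · by_cases hgb : j ≤ lucas (2*m+2)
        · -- case (gb)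
          set k' := j - lucas (2*m+1) with hkdef
          have hk : j = lucas (2*m+1) + k' := by omega
          have hk1 : 1 ≤ k' := by omega
          have hk2 : k' ≤ lucas (2*m) := by omega
          have hjr : (j:ℝ) = (lucas (2*m+1) : ℝ) + (k':ℝ) := by rw [hk]; push_cast; ring
          have hlo : (lucas (2*m+1) : ℝ) = φ^(2*(m:ℤ)+1) - φ^(-(2*(m:ℤ))-1) := lucas_odd m
          cases m with
          | zero =>
            -- explicit : j ∈ {2,3}
            have hl1 : lucas 1 = 1 := rfl
            have hl2 : lucas 2 = 3 := rfl
            rw [hl2] at hgb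
            rw [hl1] at hga
            interval_cases j
            · -- j = 2 : {1, -2}
              refine ⟨_, (Good_single_one.add_low (-2) (by omega) (by omega)
                (by omega)).congr' ?_ (by push_cast <;> omega) (by push_cast <;> omega)⟩
              rw [phi_p1]; push_cast; ring
            · -- j = 3 : {1, 0, -2}
              refine ⟨_, (Good_pair.add_low (-2) (by omega) (by omega)
                (by omega)).congr' ?_ (by push_cast <;> omega) (by push_cast <;> omega)⟩
              rw [phi_p1, zpow_zero]; push_cast; ring
          | succ m' =>
            have ih2 := IH m' (by omega)
            have hk2' : k' ≤ lucas (2*m'+2) := by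
              rw [show 2*m'+2 = 2*(m'+1) by ring]; exact hk2
            obtain ⟨e, he⟩ := ih2.1 k' hk1 hk2'
            -- e : Good e (k' - φ^(-(2m')-2)) (-(2m')-1) (2m'+1), note -(2m')-2 = -2m
            have s1 := he.add_low (-(2*(((m'+1):ℕ):ℤ))-2) (by push_cast <;> omega)
              (by push_cast <;> omega) (by push_cast <;> omega)
            have s2 := s1.add_high_odd (2*(((m'+1):ℕ):ℤ)+1) ((m':ℤ)+1) (by push_cast <;> omega)
              (by push_cast; ring) (by push_cast <;> omega) (by push_cast <;> omega)
            refine ⟨_, s2.congr' ?_ (by push_cast <;> omega) (by push_cast <;> omega)⟩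
            rw [hjr, hlo]
            rw [show (2*(((m'+1):ℕ):ℤ)+1) = 2*((m'+1:ℕ):ℤ)+1 by push_cast; ring]
            have hid := phi_add (-(2*((m'+1:ℕ):ℤ))-2)
            rw [show -(2*((m'+1:ℕ):ℤ))-2+1 = -(2*((m'+1:ℕ):ℤ))-1 by ring,
              show -(2*((m'+1:ℕ):ℤ))-2+2 = -(2*((m'+1:ℕ):ℤ)) by ring] at hid
            rw [show (-(2*(m':ℤ))-2 : ℤ) = -(2*((m'+1:ℕ):ℤ)) by push_cast; ring]
            linear_combination hid
        · -- case (gc)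
          set k'' := j - lucas (2*m+2) with hkdef
          have hk : j = lucas (2*m+2) + k'' := by omega
          have hk1 : 1 ≤ k'' := by omega
          have hk2 : k'' ≤ lucas (2*m+1) := by omega
          obtain ⟨g, hg⟩ := ihm.2 k'' hk1 hk2
          have s1 := hg.add_low (-(2*(m:ℤ))-2) (by omega) (by omega) (by omega)
          have hx1 : (1:ℝ) ≤ (k'':ℝ) + φ^(-(2*(m:ℤ))-2) := by
            have : (1:ℝ) ≤ (k'':ℝ) := by exact_mod_cast hk1
            have := phi_zpow_pos (-(2*(m:ℤ))-2)
            linarith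
          have s2 := s1.add_high_even (2*(m:ℤ)+2) ((m:ℤ)+1) (by omega) (by ring) (by omega)
            (by omega) hx1
          refine ⟨_, s2.congr' ?_ (by push_cast <;> omega) (by push_cast <;> omega)⟩
          have hjr : (j:ℝ) = (lucas (2*m+2) : ℝ) + (k'':ℝ) := by rw [hk]; push_cast; ring
          have hle : (lucas (2*m+2) : ℝ) = φ^(2*(m:ℤ)+2) + φ^(-(2*(m:ℤ))-2) := by
            rw [show 2*m+2 = 2*(m+1) by ring, lucas_even]
            rw [show (2*(((m+1):ℕ):ℤ)) = 2*(m:ℤ)+2 by push_cast; ring]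
            rw [show (-(2*(m:ℤ)+2):ℤ) = -(2*(m:ℤ))-2 by ring]
          rw [hjr, hle]
          ring

lemma isPhiRep_of {N : ℕ} {c : ℤ →₀ ℕ} (hD : Dig c) (hS : S c = (N:ℝ)) : IsPhiRep N c :=
  ⟨hD, by rw [← S_apply]; exact hS⟩

lemma pair_apply (c : ℤ →₀ ℕ) (a b i : ℤ) :
    (c + Finsupp.single a 1 + Finsupp.single b 1 : ℤ →₀ ℕ) i
      = c i + (if a = i then 1 else 0) + (if b = i then 1 else 0) := by
  rw [Finsupp.add_apply, Finsupp.add_apply, Finsupp.single_apply, Finsupp.single_apply]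

lemma triple_apply (c : ℤ →₀ ℕ) (a b d i : ℤ) :
    (c + Finsupp.single a 1 + Finsupp.single b 1 + Finsupp.single d 1 : ℤ →₀ ℕ) i
      = c i + (if a = i then 1 else 0) + (if b = i then 1 else 0) + (if d = i then 1 else 0) := by
  rw [Finsupp.add_apply, Finsupp.add_apply, Finsupp.add_apply,
    Finsupp.single_apply, Finsupp.single_apply, Finsupp.single_apply]

/-- Identification of the canonical representation of `lucas (2m+3) + k`. -/
lemma mainQ (m k : ℕ) (hk1 : 1 ≤ k) (hk2 : k ≤ lucas (2*m+2)) {c : ℤ →₀ ℕ}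
    (hc : Good c ((k:ℝ) - φ^(-(2*(m:ℤ))-2)) (-(2*(m:ℤ))-1) (2*(m:ℤ)+1)) :
    canonicalRep (lucas (2*m+3) + k)
      = c + Finsupp.single (-(2*(m:ℤ))-4) 1 + Finsupp.single (2*(m:ℤ)+3) 1 := by
  set N := lucas (2*m+3) + k with hN
  have s1 := hc.add_low (-(2*(m:ℤ))-4) (by omega) (by omega) (by omega)
  have s2 := s1.add_high_odd (2*(m:ℤ)+3) ((m:ℤ)+1) (by omega) (by ring) (by omega) (by omega)
  set c' := c + Finsupp.single (-(2*(m:ℤ))-4) 1 + Finsupp.single (2*(m:ℤ)+3) 1 with hc'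
  obtain ⟨hD', hA', hW', hS', hF'⟩ := s2
  have hSN : S c' = (N:ℝ) := by
    rw [hS']
    have hlo : (lucas (2*m+3) : ℝ) = φ^(2*(m:ℤ)+3) - φ^(-(2*(m:ℤ))-3) := by
      rw [show 2*m+3 = 2*(m+1)+1 by ring, lucas_odd]
      rw [show (2*(((m+1):ℕ):ℤ)+1) = 2*(m:ℤ)+3 by push_cast; ring]
      rw [show (-(2*(((m+1):ℕ):ℤ))-1 : ℤ) = -(2*(m:ℤ))-3 by push_cast; ring]
    have hNr : (N:ℝ) = (lucas (2*m+3) : ℝ) + (k:ℝ) := by rw [hN]; push_cast; ring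
    have hid := phi_add (-(2*(m:ℤ))-4)
    rw [show -(2*(m:ℤ))-4+1 = -(2*(m:ℤ))-3 by ring,
      show -(2*(m:ℤ))-4+2 = -(2*(m:ℤ))-2 by ring] at hid
    rw [hNr, hlo]
    linear_combination hid
  have hc'1 : c' 1 = c 1 := by rw [hc', pair_apply, if_neg (by omega), if_neg (by omega)]; omega
  have hc'0 : c' 0 = c 0 := by rw [hc', pair_apply, if_neg (by omega), if_neg (by omega)]; omega
  rcases hF' with ⟨h1, h0⟩ | ⟨hb, hnp⟩
  · -- the special case
    have hex : ∃ d, IsAdmissible N d ∧ d 1 = 1 ∧ d 0 = 1 :=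
      ⟨c', ⟨isPhiRep_of hD' hSN, hA'⟩, h1, h0⟩
    rw [canonicalRep, dif_pos hex]
    obtain ⟨⟨⟨hDd, hSd⟩, hAd⟩, hd1, hd0⟩ := hex.choose_spec
    exact special_unique hDd hAd hd1 hd0 hD' hA' h1 h0
      (by rw [S_apply, hSd, hSN])
  · -- the Bergman case
    have hNC' : NC c' := NC_of_Adm hA' hb
    have hnospec : ¬ ∃ d, IsAdmissible N d ∧ d 1 = 1 ∧ d 0 = 1 := by
      rintro ⟨d, ⟨⟨hDd, hSd⟩, hAd⟩, hd1, hd0⟩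
      obtain ⟨b, hDb, hNCb, hSb, t, ht, hbt, hbz⟩ := spec_fwd hDd hAd hd1 hd0
      have hbc : b = c' := by
        apply berg_unique _ b c' rfl hDb hNCb hD' hNC'
        rw [hSb, hSN, ← hSd, S_apply]
      rw [hbc] at hbt hbz
      obtain ⟨i, hi1, hi2, hi3⟩ := hnp t ht hbt
      exact hi3 (hbz i hi1 hi2)
    rw [canonicalRep, dif_neg hnospec, bergmanRep]
    have hexb : ∃ d, IsBergman N d := ⟨c', isPhiRep_of hD' hSN, hNC'⟩
    rw [dif_pos hexb]
    obtain ⟨⟨hDd, hSd⟩, hNCd⟩ := hexb.choose_spec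
    exact berg_unique _ _ _ rfl hDd hNCd hD' hNC' (by rw [S_apply, hSd, hSN])

theorem stmt10' (n k : ℕ) (hn : 2 ≤ n) (hk1 : 1 ≤ k) (hk2 : k ≤ lucas (2 * n - 2)) :
    canonicalRep (lucas (2 * n + 1) + k) (2 * (n : ℤ) + 1) = 1 ∧
    canonicalRep (lucas (2 * n + 1) + k) (2 * (n : ℤ)) = 0 ∧
    canonicalRep (lucas (2 * n + 1) + k) (2 * (n : ℤ) - 1) = 0 ∧
    canonicalRep (lucas (2 * n + 1) + k) (2 * (n : ℤ) - 2) = 0 ∧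
    (∀ i : ℤ, -(2 * (n : ℤ)) + 2 ≤ i → i ≤ 2 * (n : ℤ) - 3 →
      canonicalRep (lucas (2 * n + 1) + k) i = canonicalRep (lucas (2 * n - 1) + k) i) ∧
    canonicalRep (lucas (2 * n + 1) + k) (-(2 * (n : ℤ)) + 1) = 1 ∧
    canonicalRep (lucas (2 * n + 1) + k) (-(2 * (n : ℤ))) = 0 ∧
    canonicalRep (lucas (2 * n + 1) + k) (-(2 * (n : ℤ)) - 1) = 0 ∧
    canonicalRep (lucas (2 * n + 1) + k) (-(2 * (n : ℤ)) - 2) = 1 ∧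
    (∀ i : ℤ, 2 * (n : ℤ) + 1 < i → canonicalRep (lucas (2 * n + 1) + k) i = 0) ∧
    (∀ i : ℤ, i < -(2 * (n : ℤ)) - 2 → canonicalRep (lucas (2 * n + 1) + k) i = 0) := by
  obtain ⟨m, rfl⟩ : ∃ m, n = m + 2 := ⟨n - 2, by omega⟩
  rw [show 2*(m+2) - 2 = 2*m+2 by omega] at hk2
  rw [show 2*(m+2) + 1 = 2*(m+1)+3 by omega, show 2*(m+2) - 1 = 2*m+3 by omega]
  obtain ⟨c, hc⟩ := (EG m).1 k hk1 hk2
  have hM := mainQ m k hk1 hk2 hc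
  have hrec4 : lucas (2*m+4) = lucas (2*m+3) + lucas (2*m+2) := by
    rw [show 2*m+4 = 2*m+2+2 by ring, lucas_rec, show 2*m+2+1 = 2*m+3 by ring]
  have hrec3 : lucas (2*m+3) = lucas (2*m+2) + lucas (2*m+1) := by
    rw [show 2*m+3 = 2*m+1+2 by ring, lucas_rec, show 2*m+1+1 = 2*m+2 by ring]
  have hlp := lucas_pos (2*m+1)
  have hlp2 := lucas_pos (2*m+2)
  have hk2' : k ≤ lucas (2*(m+1)+2) := by
    rw [show 2*(m+1)+2 = 2*m+4 by ring]
    omega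
  have s1 := hc.add_low (-(2*(m:ℤ))-3) (by omega) (by omega) (by omega)
  have hcp : Good (c + Finsupp.single (-(2*(m:ℤ))-3) 1)
      ((k:ℝ) - goldenPhi ^(-(2*((m+1:ℕ):ℤ))-2)) (-(2*((m+1:ℕ):ℤ))-1) (2*((m+1:ℕ):ℤ)+1) := by
    refine s1.congr' ?_ (by push_cast <;> omega) (by push_cast <;> omega)
    rw [show (-(2*((m+1:ℕ):ℤ))-2 : ℤ) = -(2*(m:ℤ))-4 by push_cast; ring]
    have hid := phi_add (-(2*(m:ℤ))-4)
    rw [show -(2*(m:ℤ))-4+1 = -(2*(m:ℤ))-3 by ring,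
      show -(2*(m:ℤ))-4+2 = -(2*(m:ℤ))-2 by ring] at hid
    linear_combination hid
  have hN := mainQ (m+1) k hk1 hk2' hcp
  rw [hN, hM]
  have hW := hc.2.2.1
  refine ⟨?_, ?_, ?_, ?_, ?_, ?_, ?_, ?_, ?_, ?_, ?_⟩
  · rw [triple_apply, win_zero hW (by push_cast <;> omega), if_neg (by push_cast <;> omega),
      if_neg (by push_cast <;> omega), if_pos (by push_cast <;> omega)]
  · rw [triple_apply, win_zero hW (by push_cast <;> omega), if_neg (by push_cast <;> omega),
      if_neg (by push_cast <;> omega), if_neg (by push_cast <;> omega)]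
  · rw [triple_apply, win_zero hW (by push_cast <;> omega), if_neg (by push_cast <;> omega),
      if_neg (by push_cast <;> omega), if_neg (by push_cast <;> omega)]
  · rw [triple_apply, win_zero hW (by push_cast <;> omega), if_neg (by push_cast <;> omega),
      if_neg (by push_cast <;> omega), if_neg (by push_cast <;> omega)]
  · intro i hi1 hi2
    rw [triple_apply, pair_apply, if_neg (by push_cast <;> omega), if_neg (by push_cast <;> omega),
      if_neg (by push_cast <;> omega), if_neg (by push_cast <;> omega),
      if_neg (by push_cast <;> omega)]
  · rw [triple_apply, win_zero hW (by push_cast <;> omega), if_pos (by push_cast <;> omega),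
      if_neg (by push_cast <;> omega), if_neg (by push_cast <;> omega)]
  · rw [triple_apply, win_zero hW (by push_cast <;> omega), if_neg (by push_cast <;> omega),
      if_neg (by push_cast <;> omega), if_neg (by push_cast <;> omega)]
  · rw [triple_apply, win_zero hW (by push_cast <;> omega), if_neg (by push_cast <;> omega),
      if_neg (by push_cast <;> omega), if_neg (by push_cast <;> omega)]
  · rw [triple_apply, win_zero hW (by push_cast <;> omega), if_neg (by push_cast <;> omega),
      if_pos (by push_cast <;> omega), if_neg (by push_cast <;> omega)]
  · intro i hi
    rw [triple_apply, win_zero hW (by push_cast <;> omega), if_neg (by push_cast <;> omega),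
      if_neg (by push_cast <;> omega), if_neg (by push_cast <;> omega)]
  · intro i hi
    rw [triple_apply, win_zero hW (by push_cast <;> omega), if_neg (by push_cast <;> omega),
      if_neg (by push_cast <;> omega), if_neg (by push_cast <;> omega)]

end PhiAux

theorem stmt10 (n k : ℕ) (hn : 2 ≤ n) (hk1 : 1 ≤ k) (hk2 : k ≤ lucas (2 * n - 2)) :
    canonicalRep (lucas (2 * n + 1) + k) (2 * (n : ℤ) + 1) = 1 ∧
    canonicalRep (lucas (2 * n + 1) + k) (2 * (n : ℤ)) = 0 ∧
    canonicalRep (lucas (2 * n + 1) + k) (2 * (n : ℤ) - 1) = 0 ∧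
    canonicalRep (lucas (2 * n + 1) + k) (2 * (n : ℤ) - 2) = 0 ∧
    (∀ i : ℤ, -(2 * (n : ℤ)) + 2 ≤ i → i ≤ 2 * (n : ℤ) - 3 →
      canonicalRep (lucas (2 * n + 1) + k) i = canonicalRep (lucas (2 * n - 1) + k) i) ∧
    canonicalRep (lucas (2 * n + 1) + k) (-(2 * (n : ℤ)) + 1) = 1 ∧
    canonicalRep (lucas (2 * n + 1) + k) (-(2 * (n : ℤ))) = 0 ∧
    canonicalRep (lucas (2 * n + 1) + k) (-(2 * (n : ℤ)) - 1) = 0 ∧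
    canonicalRep (lucas (2 * n + 1) + k) (-(2 * (n : ℤ)) - 2) = 1 ∧
    (∀ i : ℤ, 2 * (n : ℤ) + 1 < i → canonicalRep (lucas (2 * n + 1) + k) i = 0) ∧
    (∀ i : ℤ, i < -(2 * (n : ℤ)) - 2 → canonicalRep (lucas (2 * n + 1) + k) i = 0) :=
  PhiAux.stmt10' n k hn hk1 hk2
end
end
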